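/- arXiv:2106.01568 — 6 statements merged into one kernel-verified Lean document; each statement's English description precedes it below -/
import Mathlib

section
/- Let T = ℝ/ℤ and let η̄ > 0. Suppose η : T → ℝ is measurable with 0 ≤ η(x) ≤ η̄ for all x, ∫_T η dx = 1, and suppose w : T → ℝ is continuously differentiable with ∫_T η w dx = 0. Then ∫_T η w² dx ≤ η̄² ∫_T (∂_x w)² dx. -/
open MeasureTheory Set

/-! Because `η` is a probability density with `∫ η w = 0`, each value is a weighted mean of
differences, `w x = ∫ η(y) (w x - w y) dy`, so `|w x|` is bounded by the oscillation of `w` on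
`[0, 1]`, hence by `∫₀¹ |w'|`, whose square is at most `∫₀¹ w'²` by Jensen. Integrating against
`η` gives `∫ η w² ≤ ∫₀¹ w'²`, and `η̄ ≥ 1` since `η ≤ η̄` has mass one. -/

theorem sq_integral_le_integral_sq {α : Type*} [MeasurableSpace α] {μ : Measure α}
    [IsProbabilityMeasure μ] {f : α → ℝ} (hf : MemLp f 2 μ) :
    (∫ x, f x ∂μ) ^ 2 ≤ ∫ x, f x ^ 2 ∂μ := by
  have := ProbabilityTheory.variance_nonneg f μ
  rw [ProbabilityTheory.variance_eq_sub hf] at this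
  simpa using this

theorem abs_sub_le_integral_abs_deriv {f : ℝ → ℝ} (hf : ContDiff ℝ 1 f) {a b x y : ℝ}
    (hx : x ∈ Icc a b) (hy : y ∈ Icc a b) :
    |f x - f y| ≤ ∫ t in a..b, |deriv f t| := by
  have hf' : Continuous (deriv f) := hf.continuous_deriv le_rfl
  rw [← intervalIntegral.integral_deriv_eq_sub (fun t _ => hf.differentiable one_ne_zero t)
    (hf'.intervalIntegrable _ _)]
  have hsub : uIoc y x ⊆ uIoc a b := uIoc_subset_uIoc_of_uIcc_subset_uIcc
    (uIcc_subset_uIcc (Icc_subset_uIcc hy) (Icc_subset_uIcc hx))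
  calc |∫ t in y..x, deriv f t| ≤ |∫ t in y..x, (|deriv f t|)| := by
        simpa only [Real.norm_eq_abs] using
          intervalIntegral.norm_integral_le_abs_integral_norm (f := deriv f)
    _ ≤ |∫ t in a..b, (|deriv f t|)| :=
        intervalIntegral.abs_integral_mono_interval hsub
          (Filter.Eventually.of_forall fun t => abs_nonneg _) (hf'.abs.intervalIntegrable a b)
    _ = ∫ t in a..b, |deriv f t| :=
        abs_of_nonneg (intervalIntegral.integral_nonneg (hx.1.trans hx.2) fun _ _ => abs_nonneg _)

section Weighted

variable {α : Type*} [MeasurableSpace α] {μ : Measure α} {η g : α → ℝ} {M : ℝ}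

theorem integral_mul_le_of_le (hη : ∀ᵐ y ∂μ, 0 ≤ η y) (hmass : ∫ y, η y ∂μ = 1)
    (hηg : Integrable (fun y => η y * g y) μ) (hg : ∀ᵐ y ∂μ, g y ≤ M) :
    ∫ y, η y * g y ∂μ ≤ M := by
  have hηi : Integrable η μ := Integrable.of_integral_ne_zero (by simp [hmass])
  calc ∫ y, η y * g y ∂μ ≤ ∫ y, η y * M ∂μ :=
        integral_mono_ae hηg (hηi.mul_const M) <| by
          filter_upwards [hη, hg] with y hηy hgy using mul_le_mul_of_nonneg_left hgy hηy
    _ = M := by rw [integral_mul_const, hmass, one_mul]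

theorem abs_le_of_integral_mul_eq_zero {c : ℝ} (hη : ∀ᵐ y ∂μ, 0 ≤ η y)
    (hmass : ∫ y, η y ∂μ = 1) (hηg : Integrable (fun y => η y * g y) μ)
    (hmom : ∫ y, η y * g y ∂μ = 0) (hosc : ∀ᵐ y ∂μ, |c - g y| ≤ M) : |c| ≤ M := by
  have hηi : Integrable η μ := Integrable.of_integral_ne_zero (by simp [hmass])
  have hc : c = ∫ y, η y * (c - g y) ∂μ := by
    simp only [mul_sub]
    rw [integral_sub (hηi.mul_const c) hηg, integral_mul_const, hmass, hmom, one_mul, sub_zero]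
  have hηcg : Integrable (fun y => η y * (c - g y)) μ := by
    simp only [mul_sub]
    exact (hηi.mul_const c).sub hηg
  have habs : (fun y => |η y * (c - g y)|) =ᵐ[μ] fun y => η y * |c - g y| := by
    filter_upwards [hη] with y hηy using by rw [abs_mul, abs_of_nonneg hηy]
  calc |c| = |∫ y, η y * (c - g y) ∂μ| := by rw [← hc]
    _ ≤ ∫ y, |η y * (c - g y)| ∂μ := abs_integral_le_integral_abs
    _ = ∫ y, η y * |c - g y| ∂μ := integral_congr_ae habs
    _ ≤ M := integral_mul_le_of_le hη hmass (hηcg.abs.congr habs) hosc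

theorem integral_mul_sq_le_of_abs_sub_le (hη : ∀ᵐ y ∂μ, 0 ≤ η y)
    (hmass : ∫ y, η y ∂μ = 1) (hηg : Integrable (fun y => η y * g y) μ)
    (hηg2 : Integrable (fun y => η y * g y ^ 2) μ) (hmom : ∫ y, η y * g y ∂μ = 0)
    (hosc : ∀ᵐ x ∂μ, ∀ᵐ y ∂μ, |g x - g y| ≤ M) :
    ∫ y, η y * g y ^ 2 ∂μ ≤ M ^ 2 :=
  integral_mul_le_of_le hη hmass hηg2 <| hosc.mono fun _ hx =>
    sq_le_sq.mpr <| (abs_le_of_integral_mul_eq_zero hη hmass hηg hmom hx).trans (le_abs_self M)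

theorem one_le_of_integral_eq_one [IsProbabilityMeasure μ] (hmass : ∫ y, η y ∂μ = 1)
    (hle : ∀ y, η y ≤ M) : 1 ≤ M :=
  calc 1 = ∫ y, η y ∂μ := hmass.symm
    _ ≤ ∫ _, M ∂μ :=
      integral_mono (Integrable.of_integral_ne_zero (by simp [hmass])) (integrable_const _) hle
    _ = M := by simp

end Weighted

theorem weighted_poincare_torus_general (ηbar : ℝ)
    (η w : ℝ → ℝ)
    (hη_meas : Measurable η)
    (hη_nonneg : ∀ x : ℝ, 0 ≤ η x)
    (hη_le : ∀ x : ℝ, η x ≤ ηbar)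
    (hmass : (∫ x in (0:ℝ)..1, η x) = 1)
    (hw : ContDiff ℝ 1 w)
    (hmom : (∫ x in (0:ℝ)..1, η x * w x) = 0) :
    (∫ x in (0:ℝ)..1, η x * (w x) ^ 2) ≤ ηbar ^ 2 * ∫ x in (0:ℝ)..1, (deriv w x) ^ 2 := by
  have hosc : ∀ x ∈ Icc (0:ℝ) 1, ∀ y ∈ Icc (0:ℝ) 1,
      |w x - w y| ≤ ∫ t in (0:ℝ)..1, |deriv w t| :=
    fun x hx y hy => abs_sub_le_integral_abs_deriv hw hx hy
  simp only [intervalIntegral.integral_of_le zero_le_one] at hmass hmom hosc ⊢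
  set μ := volume.restrict (Ioc (0:ℝ) 1)
  have : IsProbabilityMeasure μ := ⟨by simp [μ]⟩
  have hweighted (g : ℝ → ℝ) (hg : Continuous g) : Integrable (fun y => η y * g y) μ :=
    hg.integrableOn_Ioc.bdd_mul hη_meas.aestronglyMeasurable <| Filter.Eventually.of_forall
      fun y => (abs_of_nonneg (hη_nonneg y)).trans_le (hη_le y)
  have hw' : Continuous fun t => |deriv w t| := (hw.continuous_deriv le_rfl).abs
  have hJensen : (∫ t, |deriv w t| ∂μ) ^ 2 ≤ ∫ t, deriv w t ^ 2 ∂μ := by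
    simpa only [sq_abs] using sq_integral_le_integral_sq
      ((memLp_two_iff_integrable_sq hw'.aestronglyMeasurable).mpr (hw'.pow 2).integrableOn_Ioc)
  calc ∫ x, η x * w x ^ 2 ∂μ ≤ (∫ t, |deriv w t| ∂μ) ^ 2 :=
        integral_mul_sq_le_of_abs_sub_le (Filter.Eventually.of_forall hη_nonneg) hmass
          (hweighted w hw.continuous) (hweighted _ (hw.continuous.pow 2)) hmom <|
          ae_restrict_of_forall_mem measurableSet_Ioc fun x hx =>
            ae_restrict_of_forall_mem measurableSet_Ioc fun y hy =>
              hosc x (Ioc_subset_Icc_self hx) y (Ioc_subset_Icc_self hy)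
    _ ≤ ∫ t, deriv w t ^ 2 ∂μ := hJensen
    _ ≤ ηbar ^ 2 * ∫ t, deriv w t ^ 2 ∂μ :=
        le_mul_of_one_le_left (integral_nonneg fun _ => sq_nonneg _)
          (one_le_pow₀ (one_le_of_integral_eq_one hmass hη_le))

/-- **Weighted Poincaré inequality on the torus** (Lemma `prop-kinetic-tx`):
if `η : 𝕋 → ℝ` is measurable with `0 ≤ η ≤ η̄`, total mass `∫_𝕋 η = 1`, and
`w : 𝕋 → ℝ` is `C¹` with `∫_𝕋 η w = 0`, then `∫_𝕋 η w² ≤ η̄² ∫_𝕋 (∂ₓ w)²`.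
Functions on `𝕋 = ℝ/ℤ` are modelled as `1`-periodic functions on `ℝ`,
with `∫_𝕋` the integral over one period. -/
theorem weighted_poincare_torus (ηbar : ℝ) (hηbar : 0 < ηbar)
    (η w : ℝ → ℝ)
    (hη_per : ∀ x : ℝ, η (x + 1) = η x)
    (hw_per : ∀ x : ℝ, w (x + 1) = w x)
    (hη_meas : Measurable η)
    (hη_nonneg : ∀ x : ℝ, 0 ≤ η x)
    (hη_le : ∀ x : ℝ, η x ≤ ηbar)
    (hmass : (∫ x in (0:ℝ)..1, η x) = 1)
    (hw : ContDiff ℝ 1 w)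
    (hmom : (∫ x in (0:ℝ)..1, η x * w x) = 0) :
    (∫ x in (0:ℝ)..1, η x * (w x) ^ 2) ≤ ηbar ^ 2 * ∫ x in (0:ℝ)..1, (deriv w x) ^ 2 :=
  weighted_poincare_torus_general ηbar η w hη_meas hη_nonneg hη_le hmass hw hmom
end

section
/- Let g : ℝ → ℝ be continuous with g(z) → −∞ as z → +∞. Let y, b : [0,∞) → ℝ be differentiable with y'(t) = g(y(t)) + b'(t) for all t ≥ 0 and y(0) = y₀. Suppose there exist constants N₀, N₁ ≥ 0 such that b(t₂) − b(t₁) ≤ N₀ + N₁(t₂ − t₁) for all 0 ≤ t₁ < t₂ < ∞, and let y₁ ∈ ℝ be such that g(z) ≤ −N₁ for all z ≥ y₁. Then y(t) ≤ max{y₀, y₁} + N₀ for all t ≥ 0. -/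
/-- **ODE comparison lemma** (Lemma 1.3 of Straškraba–Zlotnik, `lem-uperb`):
if `g` is continuous with `g(z) → -∞` as `z → +∞`, `y' = g ∘ y + b'` on `[0,∞)`
with `y(0) = y₀`, `b(t₂) - b(t₁) ≤ N₀ + N₁ (t₂ - t₁)` for `0 ≤ t₁ < t₂`, and
`g(z) ≤ -N₁` for `z ≥ y₁`, then `y(t) ≤ max{y₀, y₁} + N₀` for all `t ≥ 0`. -/
theorem ode_upper_bound (g : ℝ → ℝ) (hg : Continuous g)
    (hg_infty : Filter.Tendsto g Filter.atTop Filter.atBot)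
    (y b : ℝ → ℝ) (y₀ : ℝ)
    (hy_diff : ∀ t : ℝ, 0 ≤ t → DifferentiableAt ℝ y t)
    (hb_diff : ∀ t : ℝ, 0 ≤ t → DifferentiableAt ℝ b t)
    (hode : ∀ t : ℝ, 0 ≤ t → deriv y t = g (y t) + deriv b t)
    (hy0 : y 0 = y₀)
    (N₀ N₁ : ℝ) (hN₀ : 0 ≤ N₀) (hN₁ : 0 ≤ N₁)
    (hb : ∀ t₁ t₂ : ℝ, 0 ≤ t₁ → t₁ < t₂ → b t₂ - b t₁ ≤ N₀ + N₁ * (t₂ - t₁))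
    (y₁ : ℝ) (hy₁ : ∀ z : ℝ, y₁ ≤ z → g z ≤ -N₁) :
    ∀ t : ℝ, 0 ≤ t → y t ≤ max y₀ y₁ + N₀ := by
  intro t ht
  set M := max y₀ y₁ with hM
  by_contra hcon
  push_neg at hcon
  have hycont : ∀ s : ℝ, 0 ≤ s → ContinuousAt y s := fun s hs => (hy_diff s hs).continuousAt
  have hy0M : y 0 ≤ M := by rw [hy0]; exact le_max_left _ _
  have htpos : 0 < t := by
    rcases ht.lt_or_eq with h | h
    · exact h
    · exfalso; rw [← h] at hcon; nlinarith
  set S := {τ ∈ Set.Icc 0 t | y τ ≤ M} with hSdef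
  have hS0 : (0:ℝ) ∈ S := ⟨⟨le_refl 0, ht⟩, hy0M⟩
  have hSbdd : BddAbove S := ⟨t, fun τ hτ => hτ.1.2⟩
  have hSclosed : IsClosed S := by
    have : S = Set.Icc 0 t ∩ y ⁻¹' Set.Iic M := rfl
    rw [this]
    have hcy : ContinuousOn y (Set.Icc 0 t) := fun τ hτ => (hycont τ hτ.1).continuousWithinAt
    exact hcy.preimage_isClosed_of_isClosed isClosed_Icc isClosed_Iic
  set s := sSup S with hs_def
  have hsS : s ∈ S := hSclosed.csSup_mem ⟨0, hS0⟩ hSbdd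
  have hs0 : 0 ≤ s := hsS.1.1
  have hst : s ≤ t := hsS.1.2
  have hslt : s < t := by
    rcases hst.lt_or_eq with h | h
    · exact h
    · exfalso; have := hsS.2; rw [h] at this; nlinarith
  have hgt : ∀ τ, s < τ → τ ≤ t → M < y τ := by
    intro τ h1 h2
    by_contra h; push_neg at h
    exact absurd (le_csSup hSbdd ⟨⟨hs0.trans h1.le, h2⟩, h⟩) (not_le.mpr h1)
  have hysM : M ≤ y s := by
    have h1 : Filter.Tendsto y (nhdsWithin s (Set.Ioi s)) (nhds (y s)) :=
      ((hycont s hs0).continuousWithinAt).tendsto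
    refine ge_of_tendsto h1 ?_
    filter_upwards [Ioc_mem_nhdsGT_of_mem ⟨le_refl s, hslt⟩] with τ hτ
    exact (hgt τ hτ.1 hτ.2).le
  have hyge : ∀ τ ∈ Set.Icc s t, y₁ ≤ y τ := by
    intro τ hτ
    rcases hτ.1.eq_or_lt with h | h
    · rw [← h]; exact le_trans (le_max_right _ _) hysM
    · exact le_trans (le_max_right _ _) (hgt τ h hτ.2).le
  have hderiv : ∀ τ ∈ Set.Icc s t, HasDerivAt (fun u => y u - b u) (g (y τ)) τ := by
    intro τ hτ
    have h0 : 0 ≤ τ := hs0.trans hτ.1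
    have h1 := ((hy_diff τ h0).hasDerivAt).sub ((hb_diff τ h0).hasDerivAt)
    rwa [hode τ h0, add_sub_cancel_right] at h1
  have hcontg : ContinuousOn (fun τ => g (y τ)) (Set.Icc s t) :=
    hg.comp_continuousOn (fun τ hτ => (hycont τ (hs0.trans hτ.1)).continuousWithinAt)
  have hint : IntervalIntegrable (fun τ => g (y τ)) MeasureTheory.volume s t := by
    apply ContinuousOn.intervalIntegrable
    rwa [Set.uIcc_of_le hslt.le]
  have hftc : ∫ τ in s..t, g (y τ) = (y t - b t) - (y s - b s) :=
    intervalIntegral.integral_eq_sub_of_hasDerivAt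
      (fun τ hτ => hderiv τ (by rwa [Set.uIcc_of_le hslt.le] at hτ)) hint
  have hmono : ∫ τ in s..t, g (y τ) ≤ ∫ _ in s..t, (-N₁ : ℝ) := by
    apply intervalIntegral.integral_mono_on hslt.le hint intervalIntegrable_const
    intro τ hτ; exact hy₁ _ (hyge τ hτ)
  rw [intervalIntegral.integral_const, hftc, smul_eq_mul] at hmono
  have hb' := hb s t hs0 hslt
  have hys : y s ≤ M := hsS.2
  nlinarith
end

section
/- Let (η, w) be a global smooth solution of the 1D isentropic compressible Navier–Stokes system on [0,∞) × T such that 0 < η(t,x) ≤ η̄ for all (t,x), ∫_T η₀ dx = 1 and ∫_T η₀ w₀ dx = 0. Then there exists a constant B > 0, depending only on (a, γ, ν, η̄), such that for all t ≥ 0 the function t ↦ ∫_T η w⁴ dx is differentiable and (d/dt) ∫_T η w⁴(t,x) dx + 6ν ∫_T w² (∂_x w)²(t,x) dx ≤ B ∫_T (∂_x w)²(t,x) dx. -/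
open MeasureTheory

open Set Function intervalIntegral


private lemma hasDerivAt_slice_fst {F : ℝ × ℝ → ℝ} (hF : ContDiff ℝ (⊤ : ℕ∞) F) (t x : ℝ) :
    HasDerivAt (fun s => F (s, x)) (fderiv ℝ F (t, x) (1, 0)) t := by
  have h1 : HasDerivAt (fun s : ℝ => (s, x)) ((1 : ℝ), (0 : ℝ)) t :=
    (hasDerivAt_id t).prodMk (hasDerivAt_const t x)
  exact (hF.differentiable (by simp) (t, x)).hasFDerivAt.comp_hasDerivAt t h1

private lemma continuous_pderiv {F : ℝ × ℝ → ℝ} (hF : ContDiff ℝ (⊤ : ℕ∞) F) (v : ℝ × ℝ) :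
    Continuous (fun p : ℝ × ℝ => fderiv ℝ F p v) :=
  (hF.continuous_fderiv (by simp)).clm_apply continuous_const

private lemma integral_deriv_periodic (g g' : ℝ → ℝ) (hg : ∀ x, HasDerivAt g (g' x) x)
    (hg' : Continuous g') (hper : g 1 = g 0) : (∫ x in (0:ℝ)..1, g' x) = 0 := by
  rw [intervalIntegral.integral_eq_sub_of_hasDerivAt (fun x _ => hg x)
    (hg'.intervalIntegrable 0 1), hper, sub_self]

/-- derivative under the integral sign, continuous setting -/
private lemma hasDerivAt_intervalIntegral (f f' : ℝ → ℝ → ℝ)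
    (hf : Continuous (uncurry f)) (hf' : Continuous (uncurry f'))
    (hd : ∀ s x : ℝ, HasDerivAt (fun u => f u x) (f' s x) s) (s : ℝ) :
    HasDerivAt (fun u => ∫ x in (0:ℝ)..1, f u x) (∫ x in (0:ℝ)..1, f' s x) s := by
  have hK : IsCompact (Icc (s-1) (s+1) ×ˢ Icc (0:ℝ) 1) := isCompact_Icc.prod isCompact_Icc
  obtain ⟨C, hC⟩ := hK.exists_bound_of_continuousOn hf'.continuousOn
  have := intervalIntegral.hasDerivAt_integral_of_dominated_loc_of_deriv_le
    (F := f) (F' := f') (x₀ := s) (a := (0:ℝ)) (b := 1) (μ := volume)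
    (bound := fun _ => C) (s := Metric.ball s 1) (Metric.ball_mem_nhds s one_pos)
    (Filter.Eventually.of_forall fun u =>
      ((hf.comp (continuous_const.prodMk continuous_id)).aestronglyMeasurable))
    ((hf.comp (continuous_const.prodMk continuous_id)).intervalIntegrable 0 1)
    ((hf'.comp (continuous_const.prodMk continuous_id)).aestronglyMeasurable)
    (Filter.Eventually.of_forall ?_)
    (intervalIntegrable_const)
    (Filter.Eventually.of_forall fun x _ u _ => hd u x)
  · exact this.2
  · intro x hx u hu
    have hxI : x ∈ Icc (0:ℝ) 1 := by
      rw [Set.uIoc_of_le (by norm_num : (0:ℝ) ≤ 1)] at hx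
      exact ⟨hx.1.le, hx.2⟩
    have huI : u ∈ Icc (s-1) (s+1) := by
      have := Metric.mem_ball.mp hu
      rw [Real.dist_eq] at this
      constructor <;> [linarith [abs_lt.mp this] ; linarith [abs_lt.mp this]]
    exact hC (u, x) ⟨huI, hxI⟩


private lemma sq_integral_le (u : ℝ → ℝ) (hu : Continuous u) {c d : ℝ} (hcd : c ≤ d) :
    (∫ x in c..d, u x) ^ 2 ≤ (d - c) * ∫ x in c..d, (u x) ^ 2 := by
  rcases eq_or_lt_of_le hcd with h | h
  · simp [← h]
  set L := d - c with hL
  set I := ∫ x in c..d, u x with hI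
  set J := ∫ x in c..d, (u x) ^ 2 with hJ
  have h0 : 0 ≤ ∫ x in c..d, (L * u x - I) ^ 2 :=
    intervalIntegral.integral_nonneg hcd fun x _ => sq_nonneg _
  have hexp : (∫ x in c..d, (L * u x - I) ^ 2)
      = L ^ 2 * J - 2 * L * I * I + I ^ 2 * L := by
    have e : ∀ x, (L * u x - I) ^ 2 = L ^ 2 * (u x) ^ 2 - (2 * L * I) * u x + I ^ 2 := by
      intro x; ring
    simp_rw [e]
    have i1 : IntervalIntegrable (fun x => L ^ 2 * u x ^ 2) volume c d :=
      (continuous_const.mul (hu.pow 2)).intervalIntegrable c d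
    have i2 : IntervalIntegrable (fun x => 2 * L * I * u x) volume c d :=
      (continuous_const.mul hu).intervalIntegrable c d
    rw [intervalIntegral.integral_add (i1.sub i2) intervalIntegrable_const,
      intervalIntegral.integral_sub i1 i2,
      intervalIntegral.integral_const_mul, intervalIntegral.integral_const_mul,
      intervalIntegral.integral_const]
    simp only [smul_eq_mul, ← hI, ← hJ]
    ring
  rw [hexp] at h0
  have hLpos : 0 < L := by simp [hL]; linarith
  nlinarith [h0, hLpos]

private lemma poincare (v : ℝ → ℝ) (hv : ContDiff ℝ (⊤ : ℕ∞) v) (hper : ∀ x, v (x + 1) = v x)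
    {x₀ : ℝ} (hx₀ : x₀ ∈ Icc (0:ℝ) 1) (hzero : v x₀ = 0) :
    (∫ x in (0:ℝ)..1, (v x) ^ 2) ≤ ∫ x in (0:ℝ)..1, (deriv v x) ^ 2 := by
  have hvd : Differentiable ℝ v := hv.differentiable (by simp)
  have hdc : Continuous (deriv v) := (contDiff_infty_iff_deriv.mp (hv.of_le (by simp))).2.continuous
  have hdper : ∀ x, deriv v (x + 1) = deriv v x := by
    intro x
    have : v = fun y => v (y + 1) := funext fun y => (hper y).symm
    conv_rhs => rw [this]
    rw [deriv_comp_add_const]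
  have hdsqper : Function.Periodic (fun x => (deriv v x) ^ 2) 1 := fun x => by
    simp [hdper x]
  set Q := ∫ x in (0:ℝ)..1, (deriv v x) ^ 2 with hQ
  have hshift : (∫ x in x₀..(x₀ + 1), (deriv v x) ^ 2) = Q := by
    have := hdsqper.intervalIntegral_add_eq x₀ 0
    simpa using this
  have hQnn : 0 ≤ Q := intervalIntegral.integral_nonneg (by norm_num) fun x _ => sq_nonneg _
  have key : ∀ x ∈ Icc x₀ (x₀ + 1), (v x) ^ 2 ≤ Q := by
    intro x hx
    have hftc : (∫ y in x₀..x, deriv v y) = v x - v x₀ :=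
      intervalIntegral.integral_deriv_eq_sub (fun y _ => hvd y) (hdc.intervalIntegrable _ _)
    have hcs := sq_integral_le (deriv v) hdc hx.1
    have hmono : (∫ y in x₀..x, (deriv v y) ^ 2) ≤ ∫ y in x₀..(x₀ + 1), (deriv v y) ^ 2 :=
      intervalIntegral.integral_mono_interval le_rfl hx.1 hx.2
        (Filter.Eventually.of_forall fun y => sq_nonneg _)
        ((hdc.pow 2).intervalIntegrable _ _)
    have hsubnn : 0 ≤ ∫ y in x₀..x, (deriv v y) ^ 2 :=
      intervalIntegral.integral_nonneg hx.1 fun y _ => sq_nonneg _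
    have h1 : (v x) ^ 2 = (∫ y in x₀..x, deriv v y) ^ 2 := by rw [hftc, hzero]; ring
    have h2 : x - x₀ ≤ 1 := by linarith [hx.2]
    calc (v x) ^ 2 = (∫ y in x₀..x, deriv v y) ^ 2 := h1
      _ ≤ (x - x₀) * ∫ y in x₀..x, (deriv v y) ^ 2 := hcs
      _ ≤ 1 * ∫ y in x₀..x, (deriv v y) ^ 2 := by nlinarith
      _ ≤ ∫ y in x₀..(x₀ + 1), (deriv v y) ^ 2 := by linarith [hmono]
      _ = Q := hshift
  have key01 : ∀ x ∈ Icc (0:ℝ) 1, (v x) ^ 2 ≤ Q := by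
    intro x hx
    rcases le_or_gt x₀ x with h | h
    · exact key x ⟨h, by linarith [hx.2, hx₀.1]⟩
    · have := key (x + 1) ⟨by linarith [hx.1, hx₀.2], by linarith⟩
      rwa [hper x] at this
  calc (∫ x in (0:ℝ)..1, (v x) ^ 2) ≤ ∫ x in (0:ℝ)..1, Q :=
        intervalIntegral.integral_mono_on (by norm_num)
          (((hv.continuous).pow 2).intervalIntegrable 0 1) intervalIntegrable_const key01
    _ = Q := by simp

private lemma exists_zero (d v : ℝ → ℝ) (hdc : Continuous d) (hvc : Continuous v)
    (hdpos : ∀ x, 0 < d x) (hint : (∫ x in (0:ℝ)..1, d x * v x) = 0) :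
    ∃ x₀ ∈ Icc (0:ℝ) 1, v x₀ = 0 := by
  by_contra h
  push_neg at h
  have hsign : (∀ x ∈ Icc (0:ℝ) 1, 0 < v x) ∨ (∀ x ∈ Icc (0:ℝ) 1, v x < 0) := by
    rcases lt_or_gt_of_ne (h 0 (by norm_num)) with h0 | h0
    · right
      intro x hx
      by_contra hc
      push_neg at hc
      have hc' : 0 < v x := lt_of_le_of_ne hc (fun e => h x hx e.symm)
      have : (0:ℝ) ∈ Icc (v 0) (v x) := ⟨h0.le, hc'.le⟩
      obtain ⟨c, hc1, hc2⟩ := intermediate_value_Icc hx.1 (hvc.continuousOn) this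
      exact h c ⟨hc1.1, le_trans hc1.2 hx.2⟩ hc2
    · left
      intro x hx
      by_contra hc
      push_neg at hc
      have hc' : v x < 0 := lt_of_le_of_ne hc (h x hx)
      have : (0:ℝ) ∈ Icc (v x) (v 0) := ⟨hc'.le, h0.le⟩
      obtain ⟨c, hc1, hc2⟩ := intermediate_value_Icc' hx.1 (hvc.continuousOn) this
      exact h c ⟨hc1.1, le_trans hc1.2 hx.2⟩ hc2
  rcases hsign with hs | hs
  · have : (0:ℝ) < ∫ x in (0:ℝ)..1, d x * v x :=
      intervalIntegral.intervalIntegral_pos_of_pos_on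
        ((hdc.mul hvc).intervalIntegrable 0 1)
        (fun x hx => mul_pos (hdpos x) (hs x ⟨hx.1.le, hx.2.le⟩)) one_pos
    linarith [hint ▸ this]
  · have : (0:ℝ) < ∫ x in (0:ℝ)..1, d x * (-v x) := by
      refine intervalIntegral.intervalIntegral_pos_of_pos_on
        ((hdc.mul hvc.neg).intervalIntegrable 0 1)
        (fun x hx => mul_pos (hdpos x) (by linarith [hs x ⟨hx.1.le, hx.2.le⟩])) one_pos
    have e : (∫ x in (0:ℝ)..1, d x * (-v x)) = -∫ x in (0:ℝ)..1, d x * v x := by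
      rw [← intervalIntegral.integral_neg]; congr 1; funext x; ring
    rw [e, hint] at this
    linarith

set_option maxHeartbeats 1000000 in
/-- **Differential inequality for `∫ η w⁴`** (Lemma `prop-est-rv4`): there is
`B > 0`, depending only on `(a, γ, ν, η̄)`, such that for every global smooth
solution of the 1D isentropic compressible Navier–Stokes system on `[0,∞) × 𝕋`
with `0 < η ≤ η̄`, `∫_𝕋 η₀ = 1` and `∫_𝕋 η₀ w₀ = 0`, the function
`t ↦ ∫_𝕋 η w⁴` is differentiable and
`(d/dt) ∫_𝕋 η w⁴ + 6ν ∫_𝕋 w² (∂ₓ w)² ≤ B ∫_𝕋 (∂ₓ w)²` for all `t ≥ 0`.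
Functions on `𝕋 = ℝ/ℤ` are modelled as `1`-periodic functions of `x`. -/
theorem fourth_moment_inequality (a γ ν ηbar : ℝ)
    (ha : 0 < a) (hγ : 1 ≤ γ) (hν : 0 < ν) (hηbar : 0 < ηbar) :
    ∃ B : ℝ, 0 < B ∧
      ∀ η w : ℝ → ℝ → ℝ,
        ContDiff ℝ (⊤ : ℕ∞) (Function.uncurry η) →
        ContDiff ℝ (⊤ : ℕ∞) (Function.uncurry w) →
        (∀ t x : ℝ, η t (x + 1) = η t x) →
        (∀ t x : ℝ, w t (x + 1) = w t x) →
        (∀ t x : ℝ, 0 ≤ t → 0 < η t x) →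
        (∀ t x : ℝ, 0 ≤ t → η t x ≤ ηbar) →
        (∀ t x : ℝ, 0 ≤ t →
          deriv (fun s => η s x) t + deriv (fun y => η t y * w t y) x = 0) →
        (∀ t x : ℝ, 0 ≤ t →
          η t x * (deriv (fun s => w s x) t + w t x * deriv (w t) x)
            - ν * deriv (deriv (w t)) x + deriv (fun y => a * η t y ^ γ) x = 0) →
        (∫ x in (0:ℝ)..1, η 0 x) = 1 →
        (∫ x in (0:ℝ)..1, η 0 x * w 0 x) = 0 →
        ∀ t : ℝ, 0 ≤ t →
          ∃ D : ℝ,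
            HasDerivWithinAt (fun s => ∫ x in (0:ℝ)..1, η s x * (w s x) ^ 4)
              D (Set.Ici (0:ℝ)) t ∧
            D + 6 * ν * (∫ x in (0:ℝ)..1, (w t x) ^ 2 * (deriv (w t) x) ^ 2)
              ≤ B * ∫ x in (0:ℝ)..1, (deriv (w t) x) ^ 2 := by
  have hηbγ : 0 < ηbar ^ γ := Real.rpow_pos_of_pos hηbar γ
  refine ⟨6 * (a * ηbar ^ γ) ^ 2 / ν, by positivity, ?_⟩
  intro η w hη hw hηper hwper hηpos hηb hmass hmom hinit hinitm t ht
  set B := 6 * (a * ηbar ^ γ) ^ 2 / ν with hBdef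
  -- continuity basics
  have cη : Continuous fun p : ℝ × ℝ => η p.1 p.2 := hη.continuous
  have cw : Continuous fun p : ℝ × ℝ => w p.1 p.2 := hw.continuous
  have cηs : ∀ s, Continuous (η s) := fun s =>
    cη.comp (continuous_const.prodMk continuous_id)
  have cws : ∀ s, Continuous (w s) := fun s =>
    cw.comp (continuous_const.prodMk continuous_id)
  -- slice smoothness in x
  have hηslice : ∀ s, ContDiff ℝ (⊤ : ℕ∞) (η s) := fun s =>
    hη.comp (contDiff_const.prodMk contDiff_id)
  have hwslice : ∀ s, ContDiff ℝ (⊤ : ℕ∞) (w s) := fun s =>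
    hw.comp (contDiff_const.prodMk contDiff_id)
  have hwd : ∀ s, Differentiable ℝ (w s) := fun s => (hwslice s).differentiable (by simp)
  have hηd : ∀ s, Differentiable ℝ (η s) := fun s => (hηslice s).differentiable (by simp)
  have hwdc := fun s => (contDiff_infty_iff_deriv.mp ((hwslice s).of_le (by simp))).2
  have cwx : ∀ s, Continuous (deriv (w s)) := fun s => (hwdc s).continuous
  have hwxd : ∀ s, Differentiable ℝ (deriv (w s)) := fun s =>
    (contDiff_infty_iff_deriv.mp (hwdc s)).1
  have cηx : ∀ s, Continuous (deriv (η s)) := fun s =>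
    (contDiff_infty_iff_deriv.mp ((hηslice s).of_le (by simp))).2.continuous
  -- time partial derivatives
  set ηS : ℝ → ℝ → ℝ := fun s x => fderiv ℝ (Function.uncurry η) (s, x) (1, 0) with hηSdef
  set wS : ℝ → ℝ → ℝ := fun s x => fderiv ℝ (Function.uncurry w) (s, x) (1, 0) with hwSdef
  have hηS : ∀ s x, HasDerivAt (fun u => η u x) (ηS s x) s := fun s x =>
    hasDerivAt_slice_fst hη s x
  have hwS : ∀ s x, HasDerivAt (fun u => w u x) (wS s x) s := fun s x =>
    hasDerivAt_slice_fst hw s x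
  have cηS : Continuous fun p : ℝ × ℝ => ηS p.1 p.2 := continuous_pderiv hη (1, 0)
  have cwS : Continuous fun p : ℝ × ℝ => wS p.1 p.2 := continuous_pderiv hw (1, 0)
  -- pressure derivative in x
  have hpx : ∀ s x, HasDerivAt (fun y => a * η s y ^ γ)
      (a * (γ * η s x ^ (γ - 1) * deriv (η s) x)) x := by
    intro s x
    have h1 : HasDerivAt (fun z : ℝ => z ^ γ) (γ * η s x ^ (γ - 1)) (η s x) :=
      Real.hasDerivAt_rpow_const (Or.inr hγ)
    exact (h1.comp x ((hηd s x).hasDerivAt)).const_mul a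
  have cpx : ∀ s, Continuous fun x => a * (γ * η s x ^ (γ - 1) * deriv (η s) x) := by
    intro s
    have h1 : Continuous fun x => η s x ^ (γ - 1) := by
      rw [continuous_iff_continuousAt]
      intro x
      exact ((cηs s).continuousAt).rpow_const (Or.inr (by linarith))
    exact continuous_const.mul ((continuous_const.mul h1).mul (cηx s))
  have cpr : ∀ s, Continuous fun x => a * η s x ^ γ := by
    intro s
    rw [continuous_iff_continuousAt]
    intro x
    exact (((cηs s).continuousAt).rpow_const (Or.inr (by linarith))).const_mul a
  -- deriv of periodic function is periodic
  have hwxper : ∀ s x, deriv (w s) (x + 1) = deriv (w s) x := by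
    intro s x
    have hfe : w s = fun y => w s (y + 1) := funext fun y => (hwper s y).symm
    conv_rhs => rw [hfe]
    rw [deriv_comp_add_const]
  ----------------------------------------------------------------
  -- Step 1: conservation of momentum, M t = 0
  ----------------------------------------------------------------
  set ψ : ℝ → ℝ → ℝ := fun s x => ηS s x * w s x + η s x * wS s x with hψdef
  have hψd : ∀ s x, HasDerivAt (fun u => η u x * w u x) (ψ s x) s := fun s x =>
    (hηS s x).mul (hwS s x)
  have cψ : Continuous (Function.uncurry ψ) := (cηS.mul cw).add (cη.mul cwS)
  set M : ℝ → ℝ := fun s => ∫ x in (0:ℝ)..1, η s x * w s x with hMdef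
  have hM : ∀ s, HasDerivAt M (∫ x in (0:ℝ)..1, ψ s x) s := fun s =>
    hasDerivAt_intervalIntegral (fun u x => η u x * w u x) ψ
      (cη.mul cw) cψ hψd s
  have hψzero : ∀ s, 0 ≤ s → (∫ x in (0:ℝ)..1, ψ s x) = 0 := by
    intro s hs
    set G : ℝ → ℝ := fun x => -(η s x * (w s x) ^ 2) + ν * deriv (w s) x
        - a * η s x ^ γ with hGdef
    have hGd : ∀ x, HasDerivAt G (ψ s x) x := by
      intro x
      have hηx : HasDerivAt (η s) (deriv (η s) x) x := (hηd s x).hasDerivAt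
      have hwx : HasDerivAt (w s) (deriv (w s) x) x := (hwd s x).hasDerivAt
      have hwxx : HasDerivAt (deriv (w s)) (deriv (deriv (w s)) x) x :=
        (hwxd s x).hasDerivAt
      have h1 : HasDerivAt G
          (-(deriv (η s) x * (w s x) ^ 2 + η s x * ((2:ℕ) * (w s x) ^ 1 * deriv (w s) x))
            + ν * deriv (deriv (w s)) x
            - a * (γ * η s x ^ (γ - 1) * deriv (η s) x)) x := by
        have hP : HasDerivAt (fun y => a * η s y ^ γ)
            (a * (γ * η s x ^ (γ - 1) * deriv (η s) x)) x := hpx s x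
        exact ((hηx.mul (hwx.pow 2)).neg.add (hwxx.const_mul ν)).sub hP
      convert h1 using 1
      have hm := hmass s x hs
      rw [(hηS s x).deriv, (hηx.fun_mul hwx).deriv] at hm
      have hq := hmom s x hs
      rw [(hwS s x).deriv, (hpx s x).deriv] at hq
      push_cast
      linear_combination (w s x) * hm + hq
    have hGper : G 1 = G 0 := by
      have h1 := hηper s 0
      have h2 := hwper s 0
      have h3 := hwxper s 0
      simp only [zero_add] at h1 h2 h3
      simp [hGdef, h1, h2, h3]
    have cψs : Continuous (ψ s) := cψ.comp (continuous_const.prodMk continuous_id)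
    exact integral_deriv_periodic G (ψ s) hGd cψs hGper
  have hMt : M t = 0 := by
    rcases eq_or_lt_of_le ht with h | h
    · rw [← h]; exact hinitm
    · have := eq_of_has_deriv_right_eq (f := M) (g := fun _ => (0:ℝ))
        (f' := fun _ => (0:ℝ)) (a := 0) (b := t)
        (fun s hs => by
          have h0 := (hM s).hasDerivWithinAt (s := Set.Ici s)
          rwa [hψzero s hs.1] at h0)
        (fun s _ => (hasDerivAt_const s (0:ℝ)).hasDerivWithinAt)
        (Continuous.continuousOn (continuous_iff_continuousAt.mpr
          fun s => (hM s).continuousAt))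
        continuous_const.continuousOn hinitm
      exact this t ⟨ht, le_rfl⟩
  ----------------------------------------------------------------
  -- Step 2: Poincaré inequality at time t
  ----------------------------------------------------------------
  obtain ⟨x₀, hx₀, hwzero⟩ := exists_zero (η t) (w t) (cηs t) (cws t)
    (fun x => hηpos t x ht) hMt
  have hpoin : (∫ x in (0:ℝ)..1, (w t x) ^ 2) ≤ ∫ x in (0:ℝ)..1, (deriv (w t) x) ^ 2 :=
    poincare (w t) (hwslice t) (hwper t) hx₀ hwzero
  ----------------------------------------------------------------
  -- Step 3: derivative of ∫ η w⁴
  ----------------------------------------------------------------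
  set φ : ℝ → ℝ → ℝ := fun s x =>
    ηS s x * (w s x) ^ 4 + η s x * ((4:ℝ) * (w s x) ^ 3 * wS s x) with hφdef
  have hφd : ∀ s x, HasDerivAt (fun u => η u x * (w u x) ^ 4) (φ s x) s := by
    intro s x
    have h := (hηS s x).fun_mul ((hwS s x).fun_pow 4)
    exact h.congr_deriv (by push_cast; ring)
  have cφ : Continuous (Function.uncurry φ) :=
    (cηS.mul (cw.pow 4)).add
      (cη.mul ((continuous_const.mul ((cw.pow 3))).mul cwS))
  have hF : HasDerivAt (fun u => ∫ x in (0:ℝ)..1, η u x * (w u x) ^ 4)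
      (∫ x in (0:ℝ)..1, φ t x) t :=
    hasDerivAt_intervalIntegral (fun u x => η u x * (w u x) ^ 4) φ
      (cη.fun_mul (cw.fun_pow 4)) cφ hφd t
  refine ⟨∫ x in (0:ℝ)..1, φ t x, hF.hasDerivWithinAt, ?_⟩
  ----------------------------------------------------------------
  -- Step 4: rewrite the derivative via integration by parts
  ----------------------------------------------------------------
  set r : ℝ → ℝ := fun x => -12 * ν * (w t x) ^ 2 * (deriv (w t) x) ^ 2
      + 12 * (a * η t x ^ γ) * (w t x) ^ 2 * deriv (w t) x with hrdef
  have cr : Continuous r := by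
    refine Continuous.add ?_ ?_
    · exact (continuous_const.mul ((cws t).pow 2)).mul ((cwx t).pow 2)
    · exact ((continuous_const.mul (cpr t)).mul ((cws t).pow 2)).mul (cwx t)
  have cφt : Continuous (φ t) := cφ.comp (continuous_const.prodMk continuous_id)
  have hkey : (∫ x in (0:ℝ)..1, (φ t x - r x)) = 0 := by
    set g : ℝ → ℝ := fun x => -(η t x * (w t x) ^ 5)
        + 4 * ν * (w t x) ^ 3 * deriv (w t) x
        - 4 * (a * η t x ^ γ) * (w t x) ^ 3 with hgdef
    have hgd : ∀ x, HasDerivAt g (φ t x - r x) x := by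
      intro x
      have hηx : HasDerivAt (η t) (deriv (η t) x) x := (hηd t x).hasDerivAt
      have hwx : HasDerivAt (w t) (deriv (w t) x) x := (hwd t x).hasDerivAt
      have hwxx : HasDerivAt (deriv (w t)) (deriv (deriv (w t)) x) x :=
        (hwxd t x).hasDerivAt
      have hP : HasDerivAt (fun y => a * η t y ^ γ)
          (a * (γ * η t x ^ (γ - 1) * deriv (η t) x)) x := hpx t x
      have h1 : HasDerivAt g
          (-(deriv (η t) x * (w t x) ^ 5 + η t x * ((5:ℕ) * (w t x) ^ 4 * deriv (w t) x))
            + ((4 * ν * ((3:ℕ) * (w t x) ^ 2 * deriv (w t) x)) * deriv (w t) x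
              + (4 * ν * (w t x) ^ 3) * deriv (deriv (w t)) x)
            - ((4 * (a * (γ * η t x ^ (γ - 1) * deriv (η t) x))) * (w t x) ^ 3
              + (4 * (a * η t x ^ γ)) * ((3:ℕ) * (w t x) ^ 2 * deriv (w t) x))) x := by
        have hA : HasDerivAt (fun y => η t y * (w t y) ^ 5)
            (deriv (η t) x * (w t x) ^ 5
              + η t x * ((5:ℕ) * (w t x) ^ 4 * deriv (w t) x)) x :=
          hηx.mul (hwx.pow 5)
        have hB : HasDerivAt (fun y => 4 * ν * (w t y) ^ 3 * deriv (w t) y)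
            ((4 * ν * ((3:ℕ) * (w t x) ^ 2 * deriv (w t) x)) * deriv (w t) x
              + (4 * ν * (w t x) ^ 3) * deriv (deriv (w t)) x) x :=
          ((hwx.pow 3).const_mul (4 * ν)).mul hwxx
        have hC : HasDerivAt (fun y => 4 * (a * η t y ^ γ) * (w t y) ^ 3)
            ((4 * (a * (γ * η t x ^ (γ - 1) * deriv (η t) x))) * (w t x) ^ 3
              + (4 * (a * η t x ^ γ)) * ((3:ℕ) * (w t x) ^ 2 * deriv (w t) x)) x := by
          have h := (hP.const_mul (4:ℝ)).fun_mul (hwx.fun_pow 3)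
          convert h using 1
          all_goals push_cast; ring
        exact (hA.neg.add hB).sub hC
      convert h1 using 1
      have hm := hmass t x ht
      rw [(hηS t x).deriv, (hηx.fun_mul hwx).deriv] at hm
      have hq := hmom t x ht
      rw [(hwS t x).deriv, (hpx t x).deriv] at hq
      push_cast
      linear_combination ((w t x) ^ 4) * hm + (4 * (w t x) ^ 3) * hq
    have hgper : g 1 = g 0 := by
      have h1 := hηper t 0
      have h2 := hwper t 0
      have h3 := hwxper t 0
      simp only [zero_add] at h1 h2 h3
      simp [hgdef, h1, h2, h3]
    exact integral_deriv_periodic g (fun x => φ t x - r x) hgd (cφt.sub cr) hgper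
  have hD : (∫ x in (0:ℝ)..1, φ t x) = ∫ x in (0:ℝ)..1, r x := by
    have hsub := intervalIntegral.integral_sub (μ := volume) (cφt.intervalIntegrable 0 1)
      (cr.intervalIntegrable 0 1)
    rw [hkey] at hsub
    linarith [hsub]
  ----------------------------------------------------------------
  -- Step 5: final estimate
  ----------------------------------------------------------------
  have hsum : (∫ x in (0:ℝ)..1, φ t x)
      + 6 * ν * (∫ x in (0:ℝ)..1, (w t x) ^ 2 * (deriv (w t) x) ^ 2)
      = ∫ x in (0:ℝ)..1, (r x + 6 * ν * ((w t x) ^ 2 * (deriv (w t) x) ^ 2)) := by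
    rw [hD, ← intervalIntegral.integral_const_mul,
      ← intervalIntegral.integral_add (cr.intervalIntegrable 0 1)
        ((continuous_const.fun_mul (((cws t).fun_pow 2).fun_mul ((cwx t).fun_pow 2))).intervalIntegrable 0 1)]
  have hpt : ∀ x ∈ Icc (0:ℝ) 1,
      r x + 6 * ν * ((w t x) ^ 2 * (deriv (w t) x) ^ 2) ≤ B * (w t x) ^ 2 := by
    intro x _
    have hp0 : 0 ≤ a * η t x ^ γ := by
      have := Real.rpow_pos_of_pos (hηpos t x ht) γ
      positivity
    have hpb : a * η t x ^ γ ≤ a * ηbar ^ γ := by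
      have := Real.rpow_le_rpow (hηpos t x ht).le (hηb t x ht) (by linarith : (0:ℝ) ≤ γ)
      nlinarith
    set p := a * η t x ^ γ
    set W := w t x
    set Wx := deriv (w t) x
    have key : -6 * ν * W ^ 2 * Wx ^ 2 + 12 * p * W ^ 2 * Wx ≤ 6 / ν * p ^ 2 * W ^ 2 := by
      have h := sq_nonneg (ν * (W * Wx) - p * W)
      have : 0 < ν := hν
      rw [div_mul_eq_mul_div, div_mul_eq_mul_div, le_div_iff₀ this]
      nlinarith
    have hb2 : 6 / ν * p ^ 2 * W ^ 2 ≤ B * W ^ 2 := by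
      rw [hBdef]
      have : p ^ 2 ≤ (a * ηbar ^ γ) ^ 2 := by nlinarith
      have h6 : 0 < (6:ℝ) / ν := by positivity
      have hW2 : 0 ≤ W ^ 2 := sq_nonneg _
      have hps : p ^ 2 ≤ (a * ηbar ^ γ) ^ 2 := by nlinarith
      have h6 : 0 ≤ (6:ℝ) / ν := by positivity
      have h1 : 6 / ν * p ^ 2 * W ^ 2 ≤ 6 / ν * (a * ηbar ^ γ) ^ 2 * W ^ 2 :=
        mul_le_mul_of_nonneg_right (mul_le_mul_of_nonneg_left hps h6) (sq_nonneg W)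
      have h2 : 6 / ν * (a * ηbar ^ γ) ^ 2 * W ^ 2 = 6 * (a * ηbar ^ γ) ^ 2 / ν * W ^ 2 := by
        ring
      linarith
    calc r x + 6 * ν * (W ^ 2 * Wx ^ 2)
        = -6 * ν * W ^ 2 * Wx ^ 2 + 12 * p * W ^ 2 * Wx := by rw [hrdef]; ring
      _ ≤ 6 / ν * p ^ 2 * W ^ 2 := key
      _ ≤ B * W ^ 2 := hb2
  have hBpos : (0:ℝ) < B := by rw [hBdef]; positivity
  have hint1 : (∫ x in (0:ℝ)..1, (r x + 6 * ν * ((w t x) ^ 2 * (deriv (w t) x) ^ 2)))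
      ≤ ∫ x in (0:ℝ)..1, B * (w t x) ^ 2 := by
    apply intervalIntegral.integral_mono_on (by norm_num)
      ((cr.add (continuous_const.mul (((cws t).pow 2).mul ((cwx t).pow 2)))).intervalIntegrable 0 1)
      ((continuous_const.mul ((cws t).pow 2)).intervalIntegrable 0 1) hpt
  have hint2 : (∫ x in (0:ℝ)..1, B * (w t x) ^ 2)
      ≤ B * ∫ x in (0:ℝ)..1, (deriv (w t) x) ^ 2 := by
    rw [intervalIntegral.integral_const_mul]
    exact mul_le_mul_of_nonneg_left hpoin hBpos.le
  linarith [hsum, hint1, hint2]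
end

section
/- Let (η, w) be a global smooth solution of the 1D isentropic compressible Navier–Stokes system on [0,∞) × T such that 0 < η(t,x) ≤ η̄ for all (t,x), ∫_T η₀ dx = 1 and ∫_T η₀ w₀ dx = 0. Then there exist positive constants B₁ and B₂, depending only on (a, γ, ν, η̄), such that for all t ≥ 0: (d/dt) ∫_T ( (ν/2)(∂_x w)² + (a²/(2ν))( η^{2γ} − 1 − 2γ(η − 1) ) − ( p(η) − p(1) ) ∂_x w ) dx + (1/2) ∫_T η (∂_t w)² dx ≤ 5 η̄ ∫_T w² (∂_x w)² dx + B₁ ∫_T (∂_x w)² dx + B₂ ∫_T (η − 1)² dx. -/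
open MeasureTheory

section NSaux
open MeasureTheory Set Function

lemma exists_zero_of_weighted_mean (u r : ℝ → ℝ) (hu : Continuous u) (hr : Continuous r)
    (hrpos : ∀ x, 0 < r x) (hzero : (∫ x in (0:ℝ)..1, r x * u x) = 0) :
    ∃ x₀ ∈ Icc (0:ℝ) 1, u x₀ = 0 := by
  by_contra h
  push_neg at h
  have hne : ∀ x ∈ Icc (0:ℝ) 1, u x ≠ 0 := h
  have hIcc : ∀ x : ℝ, x ∈ Ioo (0:ℝ) 1 → uIcc (0:ℝ) x ⊆ Icc 0 1 := by
    intro x hx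
    rw [Set.uIcc_of_le (le_of_lt hx.1)]
    exact Icc_subset_Icc le_rfl (le_of_lt hx.2)
  have hsign : (∀ x ∈ Ioo (0:ℝ) 1, 0 < u x) ∨ (∀ x ∈ Ioo (0:ℝ) 1, u x < 0) := by
    rcases lt_or_gt_of_ne (hne 0 (by norm_num)) with h0 | h0
    · right
      intro x hx
      rcases lt_or_gt_of_ne (hne x ⟨le_of_lt hx.1, le_of_lt hx.2⟩) with h1 | h1
      · exact h1
      · exfalso
        have hmem : (0:ℝ) ∈ uIcc (u 0) (u x) := by
          rw [Set.mem_uIcc]; exact Or.inl ⟨h0.le, h1.le⟩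
        obtain ⟨y, hy, hy0⟩ := intermediate_value_uIcc (a := 0) (b := x) (hu.continuousOn) hmem
        exact hne y (hIcc x hx hy) hy0
    · left
      intro x hx
      rcases lt_or_gt_of_ne (hne x ⟨le_of_lt hx.1, le_of_lt hx.2⟩) with h1 | h1
      · exfalso
        have hmem : (0:ℝ) ∈ uIcc (u 0) (u x) := by
          rw [Set.mem_uIcc]; exact Or.inr ⟨h1.le, h0.le⟩
        obtain ⟨y, hy, hy0⟩ := intermediate_value_uIcc (a := 0) (b := x) (hu.continuousOn) hmem
        exact hne y (hIcc x hx hy) hy0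
      · exact h1
  have hint : IntervalIntegrable (fun x => r x * u x) volume 0 1 :=
    (hr.mul hu).intervalIntegrable 0 1
  rcases hsign with hpos | hneg
  · have := intervalIntegral.intervalIntegral_pos_of_pos_on hint
      (fun x hx => mul_pos (hrpos x) (hpos x hx)) one_pos
    rw [hzero] at this; exact lt_irrefl 0 this
  · have := intervalIntegral.intervalIntegral_pos_of_pos_on (f := fun x => -(r x * u x)) (hint.neg)
      (fun x hx => by
        show 0 < -(r x * u x)
        have := mul_pos (hrpos x) (neg_pos.mpr (hneg x hx)); rw [mul_neg] at this; linarith)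
      one_pos
    rw [intervalIntegral.integral_neg, hzero] at this; norm_num at this

lemma poincare_s9 (u r : ℝ → ℝ) (hu : ContDiff ℝ (⊤ : ℕ∞) u) (hr : Continuous r)
    (hrpos : ∀ x, 0 < r x) (hzero : (∫ x in (0:ℝ)..1, r x * u x) = 0) :
    (∫ x in (0:ℝ)..1, (u x)^2) ≤ 4 * ∫ x in (0:ℝ)..1, (deriv u x)^2 := by
  obtain ⟨x₀, hx₀, hux₀⟩ := exists_zero_of_weighted_mean u r (hu.continuous) hr hrpos hzero
  have hud : ∀ x : ℝ, HasDerivAt u (deriv u x) x := fun x =>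
    (hu.differentiable (by simp) x).hasDerivAt
  have hu'c : Continuous (deriv u) := hu.continuous_deriv (by simp)
  set g : ℝ → ℝ := fun y => |2 * u y * deriv u y| with hg
  have hgc : Continuous g := ((continuous_const.mul (hu.continuous)).mul hu'c).abs
  have hgnn : ∀ y, 0 ≤ g y := fun y => abs_nonneg _
  have habs : ∀ x ∈ Icc (0:ℝ) 1, (u x)^2 ≤ ∫ y in (0:ℝ)..1, g y := by
    intro x hx
    have hftc : (u x)^2 - (u x₀)^2 = ∫ y in x₀..x, 2 * u y * deriv u y := by
      rw [intervalIntegral.integral_eq_sub_of_hasDerivAt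
        (f := fun y => (u y)^2) (f' := fun y => 2 * u y * deriv u y)
        (fun y _ => ((hud y).pow 2).congr_deriv (by push_cast; ring))
        (((continuous_const.mul (hu.continuous)).mul hu'c).intervalIntegrable x₀ x)]
    have h1 : (u x)^2 = |∫ y in x₀..x, 2 * u y * deriv u y| := by
      rw [← hftc, hux₀]
      rw [abs_of_nonneg] <;> nlinarith [sq_nonneg (u x)]
    have h2 : |∫ y in x₀..x, 2 * u y * deriv u y| ≤ |∫ y in x₀..x, g y| := by
      rcases le_total x₀ x with hle | hle
      · rw [abs_of_nonneg (intervalIntegral.integral_nonneg hle (fun y _ => hgnn y))]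
        exact intervalIntegral.abs_integral_le_integral_abs hle
      · rw [intervalIntegral.integral_symm x x₀, intervalIntegral.integral_symm x x₀,
          abs_neg, abs_neg,
          abs_of_nonneg (intervalIntegral.integral_nonneg hle (fun y _ => hgnn y))]
        exact intervalIntegral.abs_integral_le_integral_abs hle
    have hsub : Set.uIoc x₀ x ⊆ Set.uIoc (0:ℝ) 1 := by
      intro y hy
      rw [Set.mem_uIoc] at hy ⊢
      left
      rcases hy with hy | hy
      · exact ⟨lt_of_le_of_lt hx₀.1 hy.1, le_trans hy.2 hx.2⟩
      · exact ⟨lt_of_le_of_lt hx.1 hy.1, le_trans hy.2 hx₀.2⟩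
    have h3 : |∫ y in x₀..x, g y| ≤ |∫ y in (0:ℝ)..1, g y| :=
      intervalIntegral.abs_integral_mono_interval hsub
        (Filter.Eventually.of_forall (fun y => hgnn y)) (hgc.intervalIntegrable 0 1)
    have h4 : |∫ y in (0:ℝ)..1, g y| = ∫ y in (0:ℝ)..1, g y :=
      abs_of_nonneg (intervalIntegral.integral_nonneg zero_le_one (fun y _ => hgnn y))
    linarith [h1, h2, h3, h4.le, h4.ge]
  have step1 : (∫ x in (0:ℝ)..1, (u x)^2) ≤ ∫ y in (0:ℝ)..1, g y := by
    have := intervalIntegral.integral_mono_on (a := (0:ℝ)) (b := 1) zero_le_one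
      ((hu.continuous.pow 2).intervalIntegrable 0 1)
      (intervalIntegrable_const (μ := volume) (c := ∫ y in (0:ℝ)..1, g y)) habs
    simpa using this
  have step2 : (∫ y in (0:ℝ)..1, g y)
      ≤ (1/2) * (∫ x in (0:ℝ)..1, (u x)^2) + 2 * ∫ x in (0:ℝ)..1, (deriv u x)^2 := by
    have hmono : (∫ y in (0:ℝ)..1, g y)
        ≤ ∫ x in (0:ℝ)..1, ((1/2) * (u x)^2 + 2 * (deriv u x)^2) := by
      apply intervalIntegral.integral_mono_on zero_le_one (hgc.intervalIntegrable 0 1)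
        (((continuous_const.mul (hu.continuous.pow 2)).add
          (continuous_const.mul (hu'c.pow 2))).intervalIntegrable 0 1)
      intro x _
      rw [hg]
      simp only [Pi.add_apply, Pi.mul_apply, Pi.pow_apply]
      rw [abs_mul, abs_mul, abs_two]
      nlinarith [sq_nonneg (|u x| - 2 * |deriv u x|), abs_nonneg (u x), abs_nonneg (deriv u x),
        sq_abs (u x), sq_abs (deriv u x)]
    rwa [intervalIntegral.integral_add (f := fun x => (1/2) * (u x)^2) (g := fun x => 2 * (deriv u x)^2)
      ((continuous_const.mul (hu.continuous.pow 2)).intervalIntegrable 0 1)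
      ((continuous_const.mul (hu'c.pow 2)).intervalIntegrable 0 1),
      intervalIntegral.integral_const_mul, intervalIntegral.integral_const_mul] at hmono
  linarith

lemma rpow_sub_one_abs_le (c M R : ℝ) (hc : 1 ≤ c) (hM : 1 ≤ M) (hR : 0 < R) (hRM : R ≤ M) :
    |R ^ c - 1| ≤ c * M ^ (c - 1) * |R - 1| := by
  have hMpow : (0:ℝ) ≤ M ^ (c-1) := Real.rpow_nonneg (by linarith) _
  have hcont : ∀ p q : ℝ, 0 < p → ContinuousOn (fun x : ℝ => x ^ c) (Icc p q) := by
    intro p q hp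
    apply ContinuousOn.mono (s := {x : ℝ | x ≠ 0})
    · exact fun x hx => (Real.continuousAt_rpow_const x c (Or.inl hx)).continuousWithinAt
    · intro x hx; exact ne_of_gt (lt_of_lt_of_le hp hx.1)
  have hξbound : ∀ ξ : ℝ, 0 < ξ → ξ ≤ M → ξ ^ (c-1) ≤ M ^ (c-1) := fun ξ h1 h2 =>
    Real.rpow_le_rpow h1.le h2 (by linarith)
  rcases lt_trichotomy R 1 with hlt | heq | hgt
  · obtain ⟨ξ, hξ, hslope⟩ := exists_hasDerivAt_eq_slope (fun x : ℝ => x ^ c)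
      (fun x => c * x ^ (c-1)) hlt (hcont R 1 hR)
      (fun x hx => by
        have hx0 : x ≠ 0 := ne_of_gt (lt_trans hR hx.1)
        simpa [mul_comm] using (Real.hasDerivAt_rpow_const (x := x) (p := c) (Or.inl hx0)))
    have hξpos : 0 < ξ := lt_trans hR hξ.1
    have hξM : ξ ≤ M := le_trans hξ.2.le (by linarith)
    have h1 : (1:ℝ) ^ c = 1 := Real.one_rpow c
    rw [h1] at hslope
    have hRc : R ^ c - 1 = -(c * ξ ^ (c-1) * (1 - R)) := by
      have hne : (1:ℝ) - R ≠ 0 := by linarith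
      field_simp at hslope ⊢
      nlinarith [hslope]
    rw [hRc, abs_neg]
    have hnn : 0 ≤ c * ξ ^ (c-1) * (1 - R) := by
      have := Real.rpow_nonneg hξpos.le (c-1)
      have h1R : (0:ℝ) ≤ 1 - R := by linarith
      positivity
    rw [abs_of_nonneg hnn, abs_of_nonpos (by linarith : R - 1 ≤ 0)]
    have hmul := mul_le_mul_of_nonneg_right
      (mul_le_mul_of_nonneg_left (hξbound ξ hξpos hξM) (by linarith : (0:ℝ) ≤ c))
      (by linarith : (0:ℝ) ≤ 1 - R)
    nlinarith [hmul]
  · simp [heq]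
  · obtain ⟨ξ, hξ, hslope⟩ := exists_hasDerivAt_eq_slope (fun x : ℝ => x ^ c)
      (fun x => c * x ^ (c-1)) hgt (hcont 1 R one_pos)
      (fun x hx => by
        have hx0 : x ≠ 0 := ne_of_gt (lt_trans one_pos hx.1)
        simpa [mul_comm] using (Real.hasDerivAt_rpow_const (x := x) (p := c) (Or.inl hx0)))
    have hξpos : 0 < ξ := lt_trans one_pos hξ.1
    have hξM : ξ ≤ M := le_trans hξ.2.le hRM
    have h1 : (1:ℝ) ^ c = 1 := Real.one_rpow c
    rw [h1] at hslope
    have hRc : R ^ c - 1 = c * ξ ^ (c-1) * (R - 1) := by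
      have hne : R - 1 ≠ 0 := by linarith
      field_simp at hslope ⊢
      nlinarith [hslope]
    rw [hRc]
    have hnn : 0 ≤ c * ξ ^ (c-1) * (R - 1) := by
      have := Real.rpow_nonneg hξpos.le (c-1)
      have h1R : (0:ℝ) ≤ R - 1 := by linarith
      positivity
    rw [abs_of_nonneg hnn, abs_of_nonneg (by linarith : (0:ℝ) ≤ R - 1)]
    have hmul := mul_le_mul_of_nonneg_right
      (mul_le_mul_of_nonneg_left (hξbound ξ hξpos hξM) (by linarith : (0:ℝ) ≤ c))
      (by linarith : (0:ℝ) ≤ R - 1)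
    nlinarith [hmul]


lemma abs_young (K c x y z : ℝ) (hK : 0 ≤ K) (hc : 0 ≤ c) (h : |x| ≤ c * |y|) :
    |K * x * z| ≤ K * c * ((y^2 + z^2)/2) := by
  have h1 : |K * x * z| = K * (|x| * |z|) := by
    rw [abs_mul, abs_mul, abs_of_nonneg hK, mul_assoc]
  rw [h1]
  have h2 : |x| * |z| ≤ (c * |y|) * |z| := mul_le_mul_of_nonneg_right h (abs_nonneg z)
  have h3 : |y| * |z| ≤ (y^2 + z^2)/2 := by
    nlinarith [sq_nonneg (|y| - |z|), sq_abs y, sq_abs z]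
  have h4 : (c * |y|) * |z| ≤ c * ((y^2 + z^2)/2) := by
    rw [mul_assoc]
    exact mul_le_mul_of_nonneg_left h3 hc
  calc K * (|x| * |z|) ≤ K * ((c * |y|) * |z|) := mul_le_mul_of_nonneg_left h2 hK
    _ ≤ K * (c * ((y^2 + z^2)/2)) := mul_le_mul_of_nonneg_left h4 hK
    _ = K * c * ((y^2 + z^2)/2) := by ring


lemma T5aux (c ηbar N R s U V : ℝ) (hc : 0 < c) (hR : 0 < R) (hRb : R ≤ ηbar)
    (hs : s^2 ≤ N^2) :
    -(c*R*s*U*V) ≤ (1/4)*R*V^2 + c^2*N^2*ηbar*U^2 := by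
  have h1 : 0 ≤ R * (c*s*U + V/2)^2 := mul_nonneg hR.le (sq_nonneg _)
  have h2 : R*(c^2*(s^2*U^2)) ≤ ηbar*(c^2*(s^2*U^2)) :=
    mul_le_mul_of_nonneg_right hRb (by positivity)
  have h3 : ηbar*(c^2*(s^2*U^2)) ≤ ηbar*(c^2*(N^2*U^2)) := by
    apply mul_le_mul_of_nonneg_left _ (by linarith)
    exact mul_le_mul_of_nonneg_left
      (mul_le_mul_of_nonneg_right hs (sq_nonneg U)) (sq_nonneg c)
  nlinarith [h1, h2, h3]

lemma T6aux (c ηbar N R s U U' : ℝ) (hc : 0 < c) (hR : 0 < R) (hRb : R ≤ ηbar)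
    (hs : s^2 ≤ N^2) :
    -(c*R*s*U^2*U') ≤ (1/2)*ηbar*(U^2*U'^2) + (c^2*N^2/2)*ηbar*U^2 := by
  have key : -(c*s*U') ≤ (1/2)*U'^2 + (c^2*N^2)/2 := by
    nlinarith [sq_nonneg (c*s + U'), mul_le_mul_of_nonneg_left hs (sq_nonneg c)]
  have hRU2 : 0 ≤ R*U^2 := mul_nonneg hR.le (sq_nonneg U)
  have h7 := mul_le_mul_of_nonneg_left key hRU2
  have h8 : R*U^2*((1/2)*U'^2 + (c^2*N^2)/2) ≤ ηbar*U^2*((1/2)*U'^2 + (c^2*N^2)/2) := by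
    apply mul_le_mul_of_nonneg_right _ (by positivity)
    exact mul_le_mul_of_nonneg_right hRb (sq_nonneg U)
  nlinarith [h7, h8]

set_option maxHeartbeats 1000000 in
lemma Pbound (a γ ν ηbar N R q Q U U' V : ℝ)
    (ha : 0 < a) (hγ : 1 ≤ γ) (hν : 0 < ν) (hηbar : 0 < ηbar) (hN : 1 ≤ N)
    (hR : 0 < R) (hRb : R ≤ ηbar)
    (hq1 : |q - 1| ≤ 2*γ*N*|R - 1|) (hq2 : |Q - 1| ≤ 2*γ*N*|R - 1|)
    (hq4 : q ≤ N) (hq5 : |q - 1| ≤ N) (hq0 : 0 < q) :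
    -(R*U*U'*V) - (a^2*(2*γ-1)/(2*ν))*(Q-1)*U' + a*γ*q*U'^2 - a*(q-1)*U'^2
      - (a/ν)*R*(q-1)*U*V - (a/ν)*R*(q-1)*U^2*U' + (a^2/(2*ν))*(q-1)^2*U'
    ≤ (1/2)*R*V^2 + (3/2)*ηbar*(U^2*U'^2)
      + (2*a*γ*N + a^2*γ^2*N/ν + a^2*γ*N^2/(2*ν))*U'^2
      + (a^2*γ^2*N/ν + a^2*γ*N^2/(2*ν))*(R-1)^2
      + ((3/2)*(a^2*N^2/ν^2)*ηbar)*U^2 := by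
  have hNpos : (0:ℝ) < N := by linarith
  have habsRU' : |R - 1| * |U'|  ≤ ((R-1)^2 + U'^2)/2 := by
    nlinarith [sq_nonneg (|R - 1| -  |U'| ), sq_abs (R-1), sq_abs U']
  -- T1
  have hT1 : -(R*U*U'*V) ≤ (1/4)*R*V^2 + ηbar*(U^2*U'^2) := by
    nlinarith [mul_nonneg hR.le (sq_nonneg (U*U' + V/2)),
      mul_le_mul_of_nonneg_right hRb (sq_nonneg (U*U'))]
  -- T2
  have hT2 : -((a^2*(2*γ-1)/(2*ν))*(Q-1)*U') ≤ (a^2*γ^2*N/ν)*((R-1)^2 + U'^2) := by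
    have h2γ : (0:ℝ) ≤ 2*γ-1 := by linarith
    have hK : 0 ≤ a^2*(2*γ-1)/(2*ν) := by positivity
    have hya := abs_young (a^2*(2*γ-1)/(2*ν)) (2*γ*N) (Q-1) (R-1) U' hK (by positivity) hq2
    have hcoef : (a^2*(2*γ-1)/(2*ν)) * (2*γ*N) ≤ 2*(a^2*γ^2*N/ν) := by
      rw [show (a^2*(2*γ-1)/(2*ν)) * (2*γ*N) = (a^2*((2*γ-1)*γ*N))/ν by field_simp,
        show 2*(a^2*γ^2*N/ν) = (a^2*(2*γ^2*N))/ν by ring,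
        div_le_div_iff₀ hν hν]
      have hfact : a^2*((2*γ-1)*γ*N) ≤ a^2*(2*γ^2*N) := by
        nlinarith [mul_nonneg (mul_nonneg (sq_nonneg a) hNpos.le) (by linarith : (0:ℝ) ≤ γ)]
      exact mul_le_mul_of_nonneg_right hfact hν.le
    have hnn2 : (0:ℝ) ≤ ((R-1)^2 + U'^2)/2 := by positivity
    have hneg := neg_le_abs ((a^2*(2*γ-1)/(2*ν))*(Q-1)*U')
    have hstep := mul_le_mul_of_nonneg_right hcoef hnn2
    have hr2 : 2*(a^2*γ^2*N/ν)*(((R-1)^2 + U'^2)/2) = (a^2*γ^2*N/ν)*((R-1)^2 + U'^2) := by ring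
    linarith [hya, hneg, hstep]
  -- T3+T4
  have hT34 : a*γ*q*U'^2 - a*(q-1)*U'^2 ≤ 2*a*γ*N*U'^2 := by
    have h1 : a*γ*q ≤ a*γ*N := mul_le_mul_of_nonneg_left hq4 (by positivity)
    have h2 : -(q-1) ≤ N := by have := (abs_le.mp hq5).1; linarith
    have h3 : a*γ*q*U'^2 ≤ a*γ*N*U'^2 := mul_le_mul_of_nonneg_right h1 (sq_nonneg U')
    have h4 : a*(-(q-1)) ≤ a*N := mul_le_mul_of_nonneg_left h2 ha.le
    have h5 : (a*(-(q-1)))*U'^2 ≤ (a*N)*U'^2 := mul_le_mul_of_nonneg_right h4 (sq_nonneg U')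
    have h0 : a*N ≤ a*γ*N := by
      have hh := mul_le_mul_of_nonneg_left hγ (mul_nonneg ha.le (by linarith : (0:ℝ) ≤ N))
      nlinarith [hh]
    have h6 : (a*N)*U'^2 ≤ (a*γ*N)*U'^2 := mul_le_mul_of_nonneg_right h0 (sq_nonneg U')
    linarith [h3, h5, h6]
  -- T5
  have hq6 : (q-1)^2 ≤ N^2 := by nlinarith [abs_le.mp hq5, sq_abs (q-1)]
  have hT5 : -((a/ν)*R*(q-1)*U*V) ≤ (1/4)*R*V^2 + (a^2*N^2/ν^2)*ηbar*U^2 := by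
    have h5 := T5aux (a/ν) ηbar N R (q-1) U V (by positivity) hR hRb hq6
    rw [div_pow] at h5
    exact le_trans (le_of_eq (by ring)) (h5.trans (le_of_eq (by ring)))
  -- T6
  have hT6 : -((a/ν)*R*(q-1)*U^2*U') ≤ (1/2)*ηbar*(U^2*U'^2) + (a^2*N^2/(2*ν^2))*ηbar*U^2 := by
    have h6' := T6aux (a/ν) ηbar N R (q-1) U U' (by positivity) hR hRb hq6
    rw [div_pow] at h6'
    exact le_trans (le_of_eq (by ring)) (h6'.trans (le_of_eq (by ring)))
  -- T7
  have hT7 : (a^2/(2*ν))*(q-1)^2*U' ≤ (a^2*γ*N^2/(2*ν))*((R-1)^2 + U'^2) := by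
    have hK : (0:ℝ) ≤ a^2/(2*ν) := by positivity
    have habs2 : |(q-1)^2| ≤ (2*γ*N^2) * |R - 1| := by
      rw [abs_of_nonneg (sq_nonneg _)]
      have e1 : (q-1)^2 = |q - 1| * |q - 1| := by rw [← abs_mul, abs_of_nonneg (mul_self_nonneg (q-1)), sq]
      rw [e1]
      calc |q - 1| * |q - 1| ≤ N * (2*γ*N*|R - 1|) :=
            mul_le_mul hq5 hq1 (abs_nonneg _) (by linarith : (0:ℝ) ≤ N)
        _ = (2*γ*N^2) * |R - 1| := by ring
    have hya := abs_young (a^2/(2*ν)) (2*γ*N^2) ((q-1)^2) (R-1) U' hK (by positivity) habs2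
    have hself := le_abs_self ((a^2/(2*ν))*(q-1)^2*U')
    have hr2 : (a^2/(2*ν))*(2*γ*N^2)*(((R-1)^2 + U'^2)/2) = (a^2*γ*N^2/(2*ν))*((R-1)^2 + U'^2) := by
      ring
    linarith [hya, hself]
  have hfin := add_le_add (add_le_add (add_le_add (add_le_add (add_le_add hT1 hT2) hT34) hT5) hT6) hT7
  exact le_trans (le_of_eq (by ring)) (hfin.trans (le_of_eq (by ring)))

noncomputable def Ncst (γ ηbar : ℝ) : ℝ := (max 1 ηbar) ^ (2*γ)
noncomputable def Cbc (a γ ν ηbar : ℝ) : ℝ :=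
  2*a*γ*(Ncst γ ηbar) + a^2*γ^2*(Ncst γ ηbar)/ν + a^2*γ*(Ncst γ ηbar)^2/(2*ν)
noncomputable def C2c (a γ ν ηbar : ℝ) : ℝ :=
  a^2*γ^2*(Ncst γ ηbar)/ν + a^2*γ*(Ncst γ ηbar)^2/(2*ν)
noncomputable def Cuc (a γ ν ηbar : ℝ) : ℝ := (3/2)*(a^2*(Ncst γ ηbar)^2/ν^2)*ηbar
noncomputable def B1c (a γ ν ηbar : ℝ) : ℝ := Cbc a γ ν ηbar + 4*Cuc a γ ν ηbar + 1
noncomputable def B2c (a γ ν ηbar : ℝ) : ℝ := C2c a γ ν ηbar + 1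

lemma Ncst_one_le (γ ηbar : ℝ) (hγ : 1 ≤ γ) : 1 ≤ Ncst γ ηbar :=
  Real.one_le_rpow (le_max_left 1 ηbar) (by linarith)

lemma B1c_pos (a γ ν ηbar : ℝ) (ha : 0 < a) (hγ : 1 ≤ γ) (hν : 0 < ν) (hηbar : 0 < ηbar) :
    0 < B1c a γ ν ηbar := by
  have hN := Ncst_one_le γ ηbar hγ
  have hγ0 : (0:ℝ) < γ := by linarith
  have hN0 : (0:ℝ) < Ncst γ ηbar := by linarith
  unfold B1c Cbc Cuc
  positivity

lemma B2c_pos (a γ ν ηbar : ℝ) (ha : 0 < a) (hγ : 1 ≤ γ) (hν : 0 < ν) (hηbar : 0 < ηbar) :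
    0 < B2c a γ ν ηbar := by
  have hN := Ncst_one_le γ ηbar hγ
  have hγ0 : (0:ℝ) < γ := by linarith
  have hN0 : (0:ℝ) < Ncst γ ηbar := by linarith
  unfold B2c C2c
  positivity

lemma qfacts (γ ηbar R : ℝ) (hγ : 1 ≤ γ) (hηbar : 0 < ηbar) (hR : 0 < R) (hRb : R ≤ ηbar) :
    |R^γ - 1| ≤ 2*γ*(Ncst γ ηbar)*|R - 1| ∧ |R^(2*γ) - 1| ≤ 2*γ*(Ncst γ ηbar)*|R - 1| ∧
      R^γ ≤ Ncst γ ηbar ∧ |R^γ - 1| ≤ Ncst γ ηbar ∧ 0 < R^γ := by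
  set M := max 1 ηbar with hMdef
  set N := Ncst γ ηbar with hNdef
  have hM : (1:ℝ) ≤ M := le_max_left 1 ηbar
  have hRM : R ≤ M := le_trans hRb (le_max_right 1 ηbar)
  have hN1 : (1:ℝ) ≤ N := Ncst_one_le γ ηbar hγ
  have hMN : ∀ c : ℝ, c ≤ 2*γ → M ^ c ≤ N := fun c hc =>
    Real.rpow_le_rpow_of_exponent_le hM hc
  have habs : (0:ℝ) ≤ |R - 1| := abs_nonneg _
  have g1 : |R^γ - 1| ≤ 2*γ*N*|R - 1| := by
    have h := rpow_sub_one_abs_le γ M R hγ hM hR hRM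
    have h2 : γ * M^(γ-1) ≤ 2*γ*N := by
      have := hMN (γ-1) (by linarith)
      nlinarith [Real.rpow_nonneg (by linarith : (0:ℝ) ≤ M) (γ-1)]
    calc |R^γ - 1| ≤ γ * M^(γ-1) * |R - 1| := h
      _ ≤ 2*γ*N*|R - 1| := mul_le_mul_of_nonneg_right h2 habs
  have g2 : |R^(2*γ) - 1| ≤ 2*γ*N*|R - 1| := by
    have h := rpow_sub_one_abs_le (2*γ) M R (by linarith) hM hR hRM
    have h2 : (2*γ) * M^(2*γ-1) ≤ 2*γ*N := by
      have := hMN (2*γ-1) (by linarith)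
      nlinarith [Real.rpow_nonneg (by linarith : (0:ℝ) ≤ M) (2*γ-1)]
    calc |R^(2*γ) - 1| ≤ (2*γ) * M^(2*γ-1) * |R - 1| := h
      _ ≤ 2*γ*N*|R - 1| := mul_le_mul_of_nonneg_right h2 habs
  have g3 : R^γ ≤ N := by
    calc R^γ ≤ M^γ := Real.rpow_le_rpow hR.le hRM (by linarith)
      _ ≤ N := hMN γ (by linarith)
  have g5 : 0 < R^γ := Real.rpow_pos_of_pos hR γ
  exact ⟨g1, g2, g3, abs_le.mpr ⟨by linarith, by linarith⟩, g5⟩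

lemma periodic_deriv' (f : ℝ → ℝ) (hf : Differentiable ℝ f) (hp : ∀ x, f (x+1) = f x)
    (x : ℝ) : deriv f (x+1) = deriv f x := by
  have h1 : HasDerivAt (fun y => f (y+1)) (deriv f (x+1)) x := by
    have hc := HasDerivAt.comp x (hf (x+1)).hasDerivAt ((hasDerivAt_id x).add_const 1)
    simpa [Function.comp_def] using hc
  have h2 : (fun y => f (y+1)) = f := funext hp
  rw [h2] at h1
  exact (h1.unique (hf x).hasDerivAt)
set_option maxHeartbeats 2000000 in
lemma sliceIneq (a γ ν ηbar : ℝ) (ha : 0 < a) (hγ : 1 ≤ γ) (hν : 0 < ν) (hηbar : 0 < ηbar)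
    (u r ud rd : ℝ → ℝ)
    (hu : ContDiff ℝ (⊤ : ℕ∞) u) (hr : ContDiff ℝ (⊤ : ℕ∞) r)
    (hudC : ContDiff ℝ (⊤ : ℕ∞) ud) (hrdC : ContDiff ℝ (⊤ : ℕ∞) rd)
    (hup : ∀ x, u (x+1) = u x) (hrp : ∀ x, r (x+1) = r x) (hudp : ∀ x, ud (x+1) = ud x)
    (hrpos : ∀ x, 0 < r x) (hrle : ∀ x, r x ≤ ηbar)
    (hmass : ∀ x, rd x + deriv (fun y => r y * u y) x = 0)
    (hmom : ∀ x, r x * (ud x + u x * deriv u x) - ν * deriv (deriv u) x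
      + deriv (fun y => a * r y ^ γ) x = 0)
    (hzero : (∫ x in (0:ℝ)..1, r x * u x) = 0) :
    (∫ x in (0:ℝ)..1, (ν * deriv u x * deriv ud x
        + (a^2*γ/ν) * (((r x)^(2*γ-1) - 1) * rd x)
        - a*γ*((r x)^(γ-1)) * rd x * deriv u x
        - a*((r x)^γ - 1) * deriv ud x))
      + (1/2) * (∫ x in (0:ℝ)..1, r x * (ud x)^2)
    ≤ 5*ηbar*(∫ x in (0:ℝ)..1, (u x)^2*(deriv u x)^2)
      + (B1c a γ ν ηbar)*(∫ x in (0:ℝ)..1, (deriv u x)^2)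
      + (B2c a γ ν ηbar)*(∫ x in (0:ℝ)..1, (r x - 1)^2) := by
  have huTop := hu
  -- downgrade smoothness from ω to ∞
  replace hu : ContDiff ℝ ((⊤:ℕ∞) : WithTop ℕ∞) u := hu.of_le (by simp)
  replace hr : ContDiff ℝ ((⊤:ℕ∞) : WithTop ℕ∞) r := hr.of_le (by simp)
  replace hudC : ContDiff ℝ ((⊤:ℕ∞) : WithTop ℕ∞) ud := hudC.of_le (by simp)
  replace hrdC : ContDiff ℝ ((⊤:ℕ∞) : WithTop ℕ∞) rd := hrdC.of_le (by simp)
  -- basic differentiability / continuity facts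
  have hu' : ContDiff ℝ ((⊤:ℕ∞) : WithTop ℕ∞) (deriv u) := (contDiff_infty_iff_deriv.mp hu).2
  have hu'' : ContDiff ℝ ((⊤:ℕ∞) : WithTop ℕ∞) (deriv (deriv u)) := (contDiff_infty_iff_deriv.mp hu').2
  have hud' : ContDiff ℝ ((⊤:ℕ∞) : WithTop ℕ∞) (deriv ud) := (contDiff_infty_iff_deriv.mp hudC).2
  have hr' : ContDiff ℝ ((⊤:ℕ∞) : WithTop ℕ∞) (deriv r) := (contDiff_infty_iff_deriv.mp hr).2
  have hdu : ∀ x, HasDerivAt u (deriv u x) x := fun x => (hu.differentiable (by simp) x).hasDerivAt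
  have hdu2 : ∀ x, HasDerivAt (deriv u) (deriv (deriv u) x) x := fun x =>
    (hu'.differentiable (by simp) x).hasDerivAt
  have hdr : ∀ x, HasDerivAt r (deriv r x) x := fun x => (hr.differentiable (by simp) x).hasDerivAt
  have hdud : ∀ x, HasDerivAt ud (deriv ud x) x := fun x =>
    (hudC.differentiable (by simp) x).hasDerivAt
  have crp : ∀ c : ℝ, Continuous fun x => (r x) ^ c := by
    intro c
    rw [continuous_iff_continuousAt]
    intro x
    exact (hr.continuous.continuousAt).rpow_const (Or.inl (hrpos x).ne')
  -- rpow derivatives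
  have hdq : ∀ x, HasDerivAt (fun y => (r y)^γ) (deriv r x * γ * (r x)^(γ-1)) x := fun x =>
    (hdr x).rpow_const (Or.inl (hrpos x).ne')
  have hdq2 : ∀ x, HasDerivAt (fun y => (r y)^(2*γ))
      (deriv r x * (2*γ) * (r x)^(2*γ-1)) x := fun x =>
    (hdr x).rpow_const (Or.inl (hrpos x).ne')
  have hdq21 : ∀ x, HasDerivAt (fun y => (r y)^(2*γ-1))
      (deriv r x * (2*γ-1) * (r x)^(2*γ-1-1)) x := fun x =>
    (hdr x).rpow_const (Or.inl (hrpos x).ne')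
  -- the flux function Φ and its derivative ΦD
  set Φ : ℝ → ℝ := fun y => (ν * deriv u y - a * (r y)^γ + a) * ud y
      - (a^2*γ/ν) * (((r y)^(2*γ-1) - 1) * (r y * u y))
      + (a^2*(2*γ-1)/(2*ν)) * (((r y)^(2*γ) - 1) * u y)
      + a * (((r y)^γ - 1) * (u y * deriv u y))
      - (a^2/(2*ν)) * (((r y)^γ - 1)^2 * u y) with hΦdef
  set ΦD : ℝ → ℝ := fun x =>
      ((ν * deriv (deriv u) x - a * (deriv r x * γ * (r x)^(γ-1))) * ud x
        + (ν * deriv u x - a * (r x)^γ + a) * deriv ud x)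
      - (a^2*γ/ν) * ((deriv r x * (2*γ-1) * (r x)^(2*γ-1-1)) * (r x * u x)
        + ((r x)^(2*γ-1) - 1) * (deriv r x * u x + r x * deriv u x))
      + (a^2*(2*γ-1)/(2*ν)) * ((deriv r x * (2*γ) * (r x)^(2*γ-1)) * u x
        + ((r x)^(2*γ) - 1) * deriv u x)
      + a * ((deriv r x * γ * (r x)^(γ-1)) * (u x * deriv u x)
        + ((r x)^γ - 1) * (deriv u x * deriv u x + u x * deriv (deriv u) x))
      - (a^2/(2*ν)) * ((2 * ((r x)^γ - 1) * (deriv r x * γ * (r x)^(γ-1))) * u x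
        + ((r x)^γ - 1)^2 * deriv u x) with hΦDdef
  have hΦD : ∀ x, HasDerivAt Φ (ΦD x) x := by
    intro x
    have h1 : HasDerivAt (fun y => (ν * deriv u y - a * (r y)^γ + a) * ud y)
        ((ν * deriv (deriv u) x - a * (deriv r x * γ * (r x)^(γ-1))) * ud x
          + (ν * deriv u x - a * (r x)^γ + a) * deriv ud x) x :=
      ((((hdu2 x).const_mul ν).sub ((hdq x).const_mul a)).add_const a).mul (hdud x)
    have h2 : HasDerivAt (fun y => ((r y)^(2*γ-1) - 1) * (r y * u y))
        ((deriv r x * (2*γ-1) * (r x)^(2*γ-1-1)) * (r x * u x)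
          + ((r x)^(2*γ-1) - 1) * (deriv r x * u x + r x * deriv u x)) x :=
      ((hdq21 x).sub_const 1).mul ((hdr x).mul (hdu x))
    have h3 : HasDerivAt (fun y => ((r y)^(2*γ) - 1) * u y)
        ((deriv r x * (2*γ) * (r x)^(2*γ-1)) * u x + ((r x)^(2*γ) - 1) * deriv u x) x :=
      ((hdq2 x).sub_const 1).mul (hdu x)
    have h4 : HasDerivAt (fun y => ((r y)^γ - 1) * (u y * deriv u y))
        ((deriv r x * γ * (r x)^(γ-1)) * (u x * deriv u x)
          + ((r x)^γ - 1) * (deriv u x * deriv u x + u x * deriv (deriv u) x)) x :=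
      ((hdq x).sub_const 1).mul ((hdu x).mul (hdu2 x))
    have h5' : HasDerivAt (fun y => ((r y)^γ - 1)^2)
        ((2:ℕ) * ((r x)^γ - 1)^(2-1) * (deriv r x * γ * (r x)^(γ-1))) x :=
      ((hdq x).sub_const 1).pow 2
    have h5 : HasDerivAt (fun y => ((r y)^γ - 1)^2 * u y)
        (((2:ℕ) * ((r x)^γ - 1)^(2-1) * (deriv r x * γ * (r x)^(γ-1))) * u x
          + ((r x)^γ - 1)^2 * deriv u x) x := h5'.mul (hdu x)
    have hAll := (((h1.sub (h2.const_mul (a^2*γ/ν))).add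
      (h3.const_mul (a^2*(2*γ-1)/(2*ν)))).add (h4.const_mul a)).sub
      (h5.const_mul (a^2/(2*ν)))
    rw [hΦDdef]
    refine hAll.congr_deriv ?_
    push_cast
    ring

  -- periodicity of Φ
  have hdup : ∀ x, deriv u (x+1) = deriv u x :=
    periodic_deriv' u (hu.differentiable (by simp)) hup
  have eu : u 1 = u 0 := by simpa using hup 0
  have er : r 1 = r 0 := by simpa using hrp 0
  have eud : ud 1 = ud 0 := by simpa using hudp 0
  have edu : deriv u 1 = deriv u 0 := by simpa using hdup 0
  have hΦper : Φ 1 = Φ 0 := by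
    rw [hΦdef]
    simp only [eu, er, eud, edu]
  -- continuity facts
  have hcu : Continuous u := hu.continuous
  have hcr : Continuous r := hr.continuous
  have hcud : Continuous ud := hudC.continuous
  have hcrd : Continuous rd := hrdC.continuous
  have hcu' : Continuous (deriv u) := hu'.continuous
  have hcu'' : Continuous (deriv (deriv u)) := hu''.continuous
  have hcud' : Continuous (deriv ud) := hud'.continuous
  have hcr' : Continuous (deriv r) := hr'.continuous
  have hcE : Continuous fun x => (r x)^(γ-1) := crp (γ-1)
  have hcq : Continuous fun x => (r x)^γ := crp γ
  have hcq21 : Continuous fun x => (r x)^(2*γ-1) := crp (2*γ-1)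
  have hcq22 : Continuous fun x => (r x)^(2*γ-1-1) := crp (2*γ-1-1)
  have hcq2 : Continuous fun x => (r x)^(2*γ) := crp (2*γ)
  have hΦDc : Continuous ΦD := by
    rw [hΦDdef]
    fun_prop
  -- the integrand and the pointwise terms
  set Gt : ℝ → ℝ := fun x => ν * deriv u x * deriv ud x
      + (a^2*γ/ν) * (((r x)^(2*γ-1) - 1) * rd x)
      - a*γ*((r x)^(γ-1)) * rd x * deriv u x
      - a*((r x)^γ - 1) * deriv ud x with hGtdef
  set P : ℝ → ℝ := fun x =>
      -(r x*u x*deriv u x*ud x) - (a^2*(2*γ-1)/(2*ν))*((r x)^(2*γ)-1)*deriv u x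
      + a*γ*(r x)^γ*(deriv u x)^2 - a*((r x)^γ-1)*(deriv u x)^2
      - (a/ν)*r x*((r x)^γ-1)*u x*ud x - (a/ν)*r x*((r x)^γ-1)*(u x)^2*deriv u x
      + (a^2/(2*ν))*((r x)^γ-1)^2*deriv u x with hPdef
  have hGtc : Continuous Gt := by rw [hGtdef]; fun_prop
  have hPc : Continuous P := by rw [hPdef]; fun_prop
  have hrud2c : Continuous fun x => r x * (ud x)^2 := by fun_prop
  -- pointwise key identity
  have hkey : ∀ x, Gt x = P x - r x * (ud x)^2 + ΦD x := by
    intro x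
    have hR := hrpos x
    have e3 : (r x)^γ = (r x)^(γ-1) * r x := by
      have h := Real.rpow_add hR (γ-1) 1
      rw [show γ - 1 + 1 = γ by ring, Real.rpow_one] at h
      exact h
    have e1 : (r x)^(2*γ-1) = (r x)^(γ-1) * ((r x)^(γ-1) * r x) := by
      have h := Real.rpow_add hR (γ-1) γ
      rw [show γ - 1 + γ = 2*γ-1 by ring, e3] at h
      exact h
    have e2 : (r x)^(2*γ) = ((r x)^(γ-1) * r x) * ((r x)^(γ-1) * r x) := by
      have h := Real.rpow_add hR γ γ
      rw [show γ + γ = 2*γ by ring, e3] at h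
      exact h
    have e4 : (r x)^(2*γ-1-1) = (r x)^(γ-1) * (r x)^(γ-1) := by
      have h := Real.rpow_add hR (γ-1) (γ-1)
      rw [show γ - 1 + (γ-1) = 2*γ-1-1 by ring] at h
      exact h
    have hmass' : rd x = -(deriv r x * u x + r x * deriv u x) := by
      have h := hmass x
      have hd : deriv (fun y => r y * u y) x = deriv r x * u x + r x * deriv u x :=
        ((hdr x).mul (hdu x)).deriv
      rw [hd] at h
      linarith
    have hmom' : deriv (deriv u) x
        = (r x * (ud x + u x * deriv u x) + a * (deriv r x * γ * (r x)^(γ-1))) / ν := by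
      have h := hmom x
      have hda : deriv (fun y => a * r y ^ γ) x = a * (deriv r x * γ * (r x)^(γ-1)) :=
        (HasDerivAt.const_mul a (hdq x)).deriv
      rw [hda] at h
      field_simp
      linarith
    rw [hGtdef, hPdef, hΦDdef]
    simp only
    rw [hmass', hmom', e1, e2, e4, e3]
    field_simp
    ring
  -- integrability
  have hGti : IntervalIntegrable Gt volume 0 1 := hGtc.intervalIntegrable 0 1
  have hPi : IntervalIntegrable P volume 0 1 := hPc.intervalIntegrable 0 1
  have hrud2i : IntervalIntegrable (fun x => r x * (ud x)^2) volume 0 1 :=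
    hrud2c.intervalIntegrable 0 1
  have hΦDi : IntervalIntegrable ΦD volume 0 1 := hΦDc.intervalIntegrable 0 1
  -- ∫ ΦD = 0
  have hD0 : (∫ x in (0:ℝ)..1, ΦD x) = 0 := by
    rw [intervalIntegral.integral_eq_sub_of_hasDerivAt (fun x _ => hΦD x) hΦDi, hΦper, sub_self]
  -- split
  have hsplit : (∫ x in (0:ℝ)..1, Gt x)
      = (∫ x in (0:ℝ)..1, P x) - (∫ x in (0:ℝ)..1, r x * (ud x)^2)
        + (∫ x in (0:ℝ)..1, ΦD x) := by
    rw [← intervalIntegral.integral_sub hPi hrud2i,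
      ← intervalIntegral.integral_add (hPi.sub hrud2i) hΦDi]
    apply intervalIntegral.integral_congr
    intro x _
    exact hkey x
  -- bound P pointwise
  set N := Ncst γ ηbar with hNdef
  set Bnd : ℝ → ℝ := fun x => (1/2)*(r x * (ud x)^2)
      + ((3/2)*ηbar)*((u x)^2*(deriv u x)^2)
      + (Cbc a γ ν ηbar)*((deriv u x)^2)
      + (C2c a γ ν ηbar)*((r x - 1)^2)
      + (Cuc a γ ν ηbar)*((u x)^2) with hBnddef
  have hBndc : Continuous Bnd := by rw [hBnddef]; fun_prop
  have hBndi : IntervalIntegrable Bnd volume 0 1 := hBndc.intervalIntegrable 0 1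
  have hPB : ∀ x ∈ Icc (0:ℝ) 1, P x ≤ Bnd x := by
    intro x _
    obtain ⟨g1, g2, g3, g4, g5⟩ := qfacts γ ηbar (r x) hγ hηbar (hrpos x) (hrle x)
    have hpb := Pbound a γ ν ηbar N (r x) ((r x)^γ) ((r x)^(2*γ)) (u x) (deriv u x) (ud x)
      ha hγ hν hηbar (Ncst_one_le γ ηbar hγ) (hrpos x) (hrle x) g1 g2 g3 g4 g5
    rw [hPdef, hBnddef]
    simp only [Cbc, C2c, Cuc, hNdef]
    refine le_trans (le_of_eq (by ring)) (hpb.trans (le_of_eq ?_))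
    simp only [hNdef]
    ring
  have hmono : (∫ x in (0:ℝ)..1, P x) ≤ ∫ x in (0:ℝ)..1, Bnd x :=
    intervalIntegral.integral_mono_on zero_le_one hPi hBndi hPB
  -- split the bound integral
  have hc1 : Continuous fun x => (1/2)*(r x * (ud x)^2) := by fun_prop
  have hc2 : Continuous fun x => ((3/2)*ηbar)*((u x)^2*(deriv u x)^2) := by fun_prop
  have hc3 : Continuous fun x => (Cbc a γ ν ηbar)*((deriv u x)^2) := by fun_prop
  have hc4 : Continuous fun x => (C2c a γ ν ηbar)*((r x - 1)^2) := by fun_prop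
  have hc5 : Continuous fun x => (Cuc a γ ν ηbar)*((u x)^2) := by fun_prop
  have hBsplit : (∫ x in (0:ℝ)..1, Bnd x)
      = (1/2)*(∫ x in (0:ℝ)..1, r x * (ud x)^2)
        + ((3/2)*ηbar)*(∫ x in (0:ℝ)..1, (u x)^2*(deriv u x)^2)
        + (Cbc a γ ν ηbar)*(∫ x in (0:ℝ)..1, (deriv u x)^2)
        + (C2c a γ ν ηbar)*(∫ x in (0:ℝ)..1, (r x - 1)^2)
        + (Cuc a γ ν ηbar)*(∫ x in (0:ℝ)..1, (u x)^2) := by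
    rw [hBnddef]
    rw [intervalIntegral.integral_add (((((hc1.intervalIntegrable 0 1).add
        (hc2.intervalIntegrable 0 1)).add (hc3.intervalIntegrable 0 1)).add
        (hc4.intervalIntegrable 0 1))) (hc5.intervalIntegrable 0 1),
      intervalIntegral.integral_add ((((hc1.intervalIntegrable 0 1).add
        (hc2.intervalIntegrable 0 1)).add (hc3.intervalIntegrable 0 1)))
        (hc4.intervalIntegrable 0 1),
      intervalIntegral.integral_add (((hc1.intervalIntegrable 0 1).add
        (hc2.intervalIntegrable 0 1))) (hc3.intervalIntegrable 0 1),
      intervalIntegral.integral_add (hc1.intervalIntegrable 0 1) (hc2.intervalIntegrable 0 1),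
      intervalIntegral.integral_const_mul, intervalIntegral.integral_const_mul,
      intervalIntegral.integral_const_mul, intervalIntegral.integral_const_mul,
      intervalIntegral.integral_const_mul]
  -- Poincaré
  have hpoin : (∫ x in (0:ℝ)..1, (u x)^2) ≤ 4 * ∫ x in (0:ℝ)..1, (deriv u x)^2 :=
    poincare_s9 u r huTop hcr hrpos hzero
  -- nonnegativity
  have hI2nn : 0 ≤ ∫ x in (0:ℝ)..1, (u x)^2*(deriv u x)^2 :=
    intervalIntegral.integral_nonneg zero_le_one (fun x _ => by positivity)
  have hI3nn : 0 ≤ ∫ x in (0:ℝ)..1, (deriv u x)^2 :=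
    intervalIntegral.integral_nonneg zero_le_one (fun x _ => sq_nonneg _)
  have hI4nn : 0 ≤ ∫ x in (0:ℝ)..1, (r x - 1)^2 :=
    intervalIntegral.integral_nonneg zero_le_one (fun x _ => sq_nonneg _)
  have hCunn : 0 ≤ Cuc a γ ν ηbar := by
    simp only [Cuc]
    positivity
  have hcu5 : (Cuc a γ ν ηbar) * (∫ x in (0:ℝ)..1, (u x)^2)
      ≤ (Cuc a γ ν ηbar) * (4 * ∫ x in (0:ℝ)..1, (deriv u x)^2) :=
    mul_le_mul_of_nonneg_left hpoin hCunn
  have hmul2 : 0 ≤ ηbar * ∫ x in (0:ℝ)..1, (u x)^2*(deriv u x)^2 :=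
    mul_nonneg hηbar.le hI2nn
  simp only [B1c, B2c]
  linarith [hsplit, hD0, hmono, hBsplit, hcu5, hmul2, hI3nn, hI4nn]


noncomputable def d1 (f : ℝ × ℝ → ℝ) (p : ℝ × ℝ) : ℝ := fderiv ℝ f p (1, 0)
noncomputable def d2 (f : ℝ × ℝ → ℝ) (p : ℝ × ℝ) : ℝ := fderiv ℝ f p (0, 1)

variable {f : ℝ × ℝ → ℝ}

lemma contDiff_d1 (hf : ContDiff ℝ (⊤ : ℕ∞) f) : ContDiff ℝ (⊤ : ℕ∞) (d1 f) :=
  (hf.fderiv_right (le_refl _)).clm_apply contDiff_const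

lemma contDiff_d2 (hf : ContDiff ℝ (⊤ : ℕ∞) f) : ContDiff ℝ (⊤ : ℕ∞) (d2 f) :=
  (hf.fderiv_right (le_refl _)).clm_apply contDiff_const

lemma hasDerivAt_d1 (hf : ContDiff ℝ (⊤ : ℕ∞) f) (s x : ℝ) :
    HasDerivAt (fun s' => f (s', x)) (d1 f (s, x)) s := by
  have h1 : HasFDerivAt f (fderiv ℝ f (s, x)) (s, x) :=
    (hf.differentiable (by simp) (s, x)).hasFDerivAt
  have h2 : HasDerivAt (fun s' : ℝ => (s', x)) ((1 : ℝ), (0 : ℝ)) s := by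
    simpa using (HasDerivAt.prodMk (hasDerivAt_id s) (hasDerivAt_const s x))
  exact h1.comp_hasDerivAt s h2

lemma hasDerivAt_d2 (hf : ContDiff ℝ (⊤ : ℕ∞) f) (s x : ℝ) :
    HasDerivAt (fun y => f (s, y)) (d2 f (s, x)) x := by
  have h1 : HasFDerivAt f (fderiv ℝ f (s, x)) (s, x) :=
    (hf.differentiable (by simp) (s, x)).hasFDerivAt
  have h2 : HasDerivAt (fun y : ℝ => (s, y)) ((0 : ℝ), (1 : ℝ)) x := by
    simpa using (HasDerivAt.prodMk (hasDerivAt_const x s) (hasDerivAt_id x))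
  exact h1.comp_hasDerivAt x h2

lemma d1_d2_comm (hf : ContDiff ℝ (⊤ : ℕ∞) f) (p : ℝ × ℝ) : d1 (d2 f) p = d2 (d1 f) p := by
  have hdf : ContDiff ℝ (⊤ : ℕ∞) (fderiv ℝ f) := hf.fderiv_right (le_refl _)
  have hfd : ∀ y, HasFDerivAt f (fderiv ℝ f y) y := fun y =>
    (hf.differentiable (by simp) y).hasFDerivAt
  have hx : HasFDerivAt (fderiv ℝ f) (fderiv ℝ (fderiv ℝ f) p) p :=
    (hdf.differentiable (by simp) p).hasFDerivAt
  have hsymm := second_derivative_symmetric hfd hx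
  have e1 : ∀ v w : ℝ × ℝ,
      fderiv ℝ (fun q => fderiv ℝ f q v) p w = fderiv ℝ (fderiv ℝ f) p w v := by
    intro v w
    have hc : HasFDerivAt (fun q => fderiv ℝ f q v)
        ((fderiv ℝ (fderiv ℝ f) p).flip v) p := hx.clm_apply (hasFDerivAt_const v p) |>.congr_fderiv (by
          rw [ContinuousLinearMap.comp_zero, zero_add])
    rw [hc.fderiv]; rfl
  unfold d1 d2
  rw [e1, e1, hsymm]


lemma param_hasDerivAt (G G' : ℝ → ℝ → ℝ) (t ε : ℝ) (hε : 0 < ε)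
    (hGc : ∀ s ∈ Metric.ball t ε, ContinuousOn (G s) (uIcc (0:ℝ) 1))
    (hG'c : ContinuousOn (uncurry G') (Metric.closedBall t (ε/2) ×ˢ uIcc (0:ℝ) 1))
    (hd : ∀ x ∈ uIcc (0:ℝ) 1, ∀ s ∈ Metric.ball t (ε/2),
      HasDerivAt (fun s' => G s' x) (G' s x) s) :
    HasDerivAt (fun s => ∫ x in (0:ℝ)..1, G s x) (∫ x in (0:ℝ)..1, G' t x) t := by
  have hK : IsCompact (Metric.closedBall t (ε/2) ×ˢ uIcc (0:ℝ) 1) :=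
    (isCompact_closedBall t (ε/2)).prod isCompact_uIcc
  obtain ⟨C, hC⟩ := hK.exists_bound_of_continuousOn hG'c
  have hball : ∀ s ∈ Metric.ball t (ε/2), ∀ x ∈ Set.uIoc (0:ℝ) 1,
      (s, x) ∈ Metric.closedBall t (ε/2) ×ˢ uIcc (0:ℝ) 1 := by
    intro s hs x hx
    exact ⟨Metric.ball_subset_closedBall hs, Set.uIoc_subset_uIcc hx⟩
  have := intervalIntegral.hasDerivAt_integral_of_dominated_loc_of_deriv_le
    (F := G) (F' := G') (x₀ := t) (a := (0:ℝ)) (b := 1) (μ := volume)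
    (bound := fun _ => C) (Metric.ball_mem_nhds t (half_pos hε))
    (by
      filter_upwards [Metric.ball_mem_nhds t hε] with s hs
      exact ((hGc s hs).mono Set.uIoc_subset_uIcc).aestronglyMeasurable measurableSet_uIoc)
    ((hGc t (Metric.mem_ball_self hε)).intervalIntegrable)
    (by
      have hco : ContinuousOn (G' t) (uIcc (0:ℝ) 1) := by
        have : ContinuousOn (fun x => uncurry G' (t, x)) (uIcc (0:ℝ) 1) := by
          apply hG'c.comp (Continuous.continuousOn (by fun_prop))
          intro x hx
          exact ⟨Metric.mem_closedBall_self (by positivity), hx⟩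
        exact this
      exact (hco.mono Set.uIoc_subset_uIcc).aestronglyMeasurable measurableSet_uIoc)
    (by
      refine Filter.Eventually.of_forall (fun x hx s hs => ?_)
      exact hC _ (hball s hs x hx))
    (intervalIntegrable_const)
    (by
      refine Filter.Eventually.of_forall (fun x hx s hs => ?_)
      exact hd x (Set.uIoc_subset_uIcc hx) s hs)
  exact this.2

end NSaux

open MeasureTheory Set Function in

/-- **Differential inequality for the `H¹`-type functional** (Lemma
`prop-est-vx`): there are `B₁, B₂ > 0`, depending only on `(a, γ, ν, η̄)`, such
that for every global smooth solution of the 1D isentropic compressible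
Navier–Stokes system on `[0,∞) × 𝕋` with `0 < η ≤ η̄`, `∫_𝕋 η₀ = 1` and
`∫_𝕋 η₀ w₀ = 0`, one has for all `t ≥ 0`
`(d/dt) ∫_𝕋 ((ν/2)(∂ₓ w)² + (a²/2ν)(η^{2γ} - 1 - 2γ(η-1)) - (p(η)-p(1)) ∂ₓ w)
 + (1/2) ∫_𝕋 η (∂ₜ w)² ≤ 5 η̄ ∫_𝕋 w² (∂ₓ w)² + B₁ ∫_𝕋 (∂ₓ w)² + B₂ ∫_𝕋 (η-1)²`,
where `p(s) = a s^γ`.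
Functions on `𝕋 = ℝ/ℤ` are modelled as `1`-periodic functions of `x`. -/
theorem velocity_gradient_inequality (a γ ν ηbar : ℝ)
    (ha : 0 < a) (hγ : 1 ≤ γ) (hν : 0 < ν) (hηbar : 0 < ηbar) :
    ∃ B₁ B₂ : ℝ, 0 < B₁ ∧ 0 < B₂ ∧
      ∀ η w : ℝ → ℝ → ℝ,
        ContDiff ℝ (⊤ : ℕ∞) (Function.uncurry η) →
        ContDiff ℝ (⊤ : ℕ∞) (Function.uncurry w) →
        (∀ t x : ℝ, η t (x + 1) = η t x) →
        (∀ t x : ℝ, w t (x + 1) = w t x) →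
        (∀ t x : ℝ, 0 ≤ t → 0 < η t x) →
        (∀ t x : ℝ, 0 ≤ t → η t x ≤ ηbar) →
        (∀ t x : ℝ, 0 ≤ t →
          deriv (fun s => η s x) t + deriv (fun y => η t y * w t y) x = 0) →
        (∀ t x : ℝ, 0 ≤ t →
          η t x * (deriv (fun s => w s x) t + w t x * deriv (w t) x)
            - ν * deriv (deriv (w t)) x + deriv (fun y => a * η t y ^ γ) x = 0) →
        (∫ x in (0:ℝ)..1, η 0 x) = 1 →
        (∫ x in (0:ℝ)..1, η 0 x * w 0 x) = 0 →
        ∀ t : ℝ, 0 ≤ t →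
          ∃ D : ℝ,
            HasDerivWithinAt
              (fun s => ∫ x in (0:ℝ)..1,
                ((ν / 2) * (deriv (w s) x) ^ 2
                  + a ^ 2 / (2 * ν) * ((η s x) ^ (2 * γ) - 1 - 2 * γ * (η s x - 1))
                  - (a * η s x ^ γ - a * (1:ℝ) ^ γ) * deriv (w s) x))
              D (Set.Ici (0:ℝ)) t ∧
            D + (1 / 2) * (∫ x in (0:ℝ)..1, η t x * (deriv (fun s => w s x) t) ^ 2)
              ≤ 5 * ηbar * (∫ x in (0:ℝ)..1, (w t x) ^ 2 * (deriv (w t) x) ^ 2)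
                + B₁ * (∫ x in (0:ℝ)..1, (deriv (w t) x) ^ 2)
                + B₂ * ∫ x in (0:ℝ)..1, (η t x - 1) ^ 2 := by
  refine ⟨B1c a γ ν ηbar, B2c a γ ν ηbar, B1c_pos a γ ν ηbar ha hγ hν hηbar,
    B2c_pos a γ ν ηbar ha hγ hν hηbar, ?_⟩
  intro η w hη hw hηper hwper hηpos hηle hmassH hmomH hint0 hmom0 t ht
  have hγ0 : (0:ℝ) < γ := by linarith
  set W : ℝ × ℝ → ℝ := Function.uncurry w with hWdef
  set R : ℝ × ℝ → ℝ := Function.uncurry η with hRdef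
  have hd2W : ∀ s x : ℝ, HasDerivAt (w s) (d2 W (s,x)) x := fun s x => hasDerivAt_d2 hw s x
  have hd1W : ∀ s x : ℝ, HasDerivAt (fun s' => w s' x) (d1 W (s,x)) s := fun s x =>
    hasDerivAt_d1 hw s x
  have hd1R : ∀ s x : ℝ, HasDerivAt (fun s' => η s' x) (d1 R (s,x)) s := fun s x =>
    hasDerivAt_d1 hη s x
  have hd2W_eq : ∀ s x : ℝ, deriv (w s) x = d2 W (s,x) := fun s x => (hd2W s x).deriv
  have hd1W_eq : ∀ s x : ℝ, deriv (fun s' => w s' x) s = d1 W (s,x) := fun s x =>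
    (hd1W s x).deriv
  have hd1R_eq : ∀ s x : ℝ, deriv (fun s' => η s' x) s = d1 R (s,x) := fun s x =>
    (hd1R s x).deriv
  have hCd1W : ContDiff ℝ (⊤ : ℕ∞) (d1 W) := contDiff_d1 hw
  have hCd2W : ContDiff ℝ (⊤ : ℕ∞) (d2 W) := contDiff_d2 hw
  have hCd1R : ContDiff ℝ (⊤ : ℕ∞) (d1 R) := contDiff_d1 hη
  have hCd12W : ContDiff ℝ (⊤ : ℕ∞) (d1 (d2 W)) := contDiff_d1 hCd2W
  have hS : ∀ s x : ℝ, HasDerivAt (fun s' => deriv (w s') x) (d1 (d2 W) (s,x)) s := by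
    intro s x
    have hfe : (fun s' => deriv (w s') x) = fun s' => d2 W (s',x) :=
      funext fun s' => hd2W_eq s' x
    rw [hfe]
    exact hasDerivAt_d1 hCd2W s x
  have hslicew : ∀ σ : ℝ, ContDiff ℝ (⊤ : ℕ∞) (w σ) := fun σ =>
    hw.comp (contDiff_const.prodMk contDiff_id)
  have hsliceη : ∀ σ : ℝ, ContDiff ℝ (⊤ : ℕ∞) (η σ) := fun σ =>
    hη.comp (contDiff_const.prodMk contDiff_id)
  -- conservation of momentum : ∫ η t w t = 0
  set m : ℝ → ℝ := fun s => ∫ x in (0:ℝ)..1, η s x * w s x with hmdef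
  have hmC : ∀ s : ℝ, HasDerivAt m
      (∫ x in (0:ℝ)..1, (d1 R (s,x) * w s x + η s x * d1 W (s,x))) s := by
    intro s
    apply param_hasDerivAt (fun s x => η s x * w s x)
      (fun s x => d1 R (s,x) * w s x + η s x * d1 W (s,x)) s 1 one_pos
    · intro σ _
      exact ((hsliceη σ).continuous.mul (hslicew σ).continuous).continuousOn
    · apply Continuous.continuousOn
      exact (hCd1R.continuous.mul hw.continuous).add (hη.continuous.mul hCd1W.continuous)
    · intro x _ σ _
      exact (hd1R σ x).mul (hd1W σ x)
  have hmzero : ∀ s : ℝ, 0 ≤ s →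
      (∫ x in (0:ℝ)..1, (d1 R (s,x) * w s x + η s x * d1 W (s,x))) = 0 := by
    intro s hs
    have hus : ContDiff ℝ ((⊤:ℕ∞) : WithTop ℕ∞) (w s) := (hslicew s).of_le (by simp)
    have hrs : ContDiff ℝ ((⊤:ℕ∞) : WithTop ℕ∞) (η s) := (hsliceη s).of_le (by simp)
    have hus' : ContDiff ℝ ((⊤:ℕ∞) : WithTop ℕ∞) (deriv (w s)) :=
      (contDiff_infty_iff_deriv.mp hus).2
    have hu2 : ∀ x, HasDerivAt (w s) (deriv (w s) x) x := fun x =>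
      (hus.differentiable (by simp) x).hasDerivAt
    have hdu2 : ∀ x, HasDerivAt (deriv (w s)) (deriv (deriv (w s)) x) x := fun x =>
      (hus'.differentiable (by simp) x).hasDerivAt
    have hdr : ∀ x, HasDerivAt (η s) (deriv (η s) x) x := fun x =>
      (hrs.differentiable (by simp) x).hasDerivAt
    have hdq : ∀ x, HasDerivAt (fun y => (η s y)^γ)
        (deriv (η s) x * γ * (η s x)^(γ-1)) x := fun x =>
      (hdr x).rpow_const (Or.inl (hηpos s x hs).ne')
    set Ψ : ℝ → ℝ := fun x => ν * deriv (w s) x - η s x * (w s x)^2 - (a * (η s x)^γ - a)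
      with hΨdef
    set ΨD : ℝ → ℝ := fun x => ν * deriv (deriv (w s)) x
      - (deriv (η s) x * (w s x)^2 + η s x * (2 * w s x * deriv (w s) x))
      - a * (deriv (η s) x * γ * (η s x)^(γ-1)) with hΨDdef
    have hΨD : ∀ x, HasDerivAt Ψ (ΨD x) x := by
      intro x
      have h1 := (hdu2 x).const_mul ν
      have h2 := (hdr x).mul ((hu2 x).pow 2)
      have h3 := ((hdq x).const_mul a).sub_const a
      have hAll := (h1.sub h2).sub h3
      rw [hΨDdef]
      refine hAll.congr_deriv ?_
      push_cast [Pi.pow_apply]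
      ring
    have hint_eq : ∀ x, d1 R (s,x) * w s x + η s x * d1 W (s,x) = ΨD x := by
      intro x
      have hmass' : d1 R (s,x) = -(deriv (η s) x * w s x + η s x * deriv (w s) x) := by
        have h := hmassH s x hs
        rw [hd1R_eq s x] at h
        have hd : deriv (fun y => η s y * w s y) x
            = deriv (η s) x * w s x + η s x * deriv (w s) x := ((hdr x).mul (hu2 x)).deriv
        rw [hd] at h
        linarith
      have hmom' : η s x * d1 W (s,x) = ν * deriv (deriv (w s)) x
          - η s x * (w s x * deriv (w s) x)
          - a * (deriv (η s) x * γ * (η s x)^(γ-1)) := by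
        have h := hmomH s x hs
        rw [hd1W_eq s x] at h
        have hda : deriv (fun y => a * η s y ^ γ) x
            = a * (deriv (η s) x * γ * (η s x)^(γ-1)) :=
          (HasDerivAt.const_mul a (hdq x)).deriv
        rw [hda] at h
        linarith
      rw [hΨDdef]
      simp only
      rw [hmass']
      nlinarith [hmom']
    have hcE : Continuous fun x => (η s x)^(γ-1) :=
      (hsliceη s).continuous.rpow_const (fun x => Or.inr (by linarith))
    have hcq : Continuous fun x => (η s x)^γ :=
      (hsliceη s).continuous.rpow_const (fun x => Or.inr (by linarith))
    have hcu : Continuous (w s) := hus.continuous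
    have hcr : Continuous (η s) := hrs.continuous
    have hcu' : Continuous (deriv (w s)) := hus'.continuous
    have hcu'' : Continuous (deriv (deriv (w s))) :=
      ((contDiff_infty_iff_deriv.mp hus').2).continuous
    have hcr' : Continuous (deriv (η s)) :=
      ((contDiff_infty_iff_deriv.mp hrs).2).continuous
    have hΨDc : Continuous ΨD := by rw [hΨDdef]; fun_prop
    have hdup : ∀ x, deriv (w s) (x+1) = deriv (w s) x :=
      periodic_deriv' (w s) (hus.differentiable (by simp))
        (fun x => hwper s x)
    have hΨper : Ψ 1 = Ψ 0 := by
      have eu : w s 1 = w s 0 := by simpa using hwper s 0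
      have er : η s 1 = η s 0 := by simpa using hηper s 0
      have edu : deriv (w s) 1 = deriv (w s) 0 := by simpa using hdup 0
      rw [hΨdef]
      simp only [eu, er, edu]
    rw [intervalIntegral.integral_congr (g := ΨD) (fun x _ => hint_eq x),
      intervalIntegral.integral_eq_sub_of_hasDerivAt (fun x _ => hΨD x)
        (hΨDc.intervalIntegrable 0 1), hΨper, sub_self]
  have hconsv : (∫ x in (0:ℝ)..1, η t x * w t x) = 0 := by
    rcases eq_or_lt_of_le ht with h0 | h0
    · rw [← h0]
      exact hmom0
    · have hconst := constant_of_has_deriv_right_zero (f := m) (a := 0) (b := t)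
        (fun s _ => ((hmC s).continuousAt).continuousWithinAt)
        (fun s hs => by
          have h := hmC s
          rw [hmzero s hs.1] at h
          exact h.hasDerivWithinAt)
      have hmt : m t = m 0 := hconst t ⟨le_of_lt h0, le_refl t⟩
      exact hmt.trans hmom0
  -- the functional and its derivative
  set G : ℝ → ℝ → ℝ := fun s x => ((ν / 2) * (deriv (w s) x) ^ 2
      + a ^ 2 / (2 * ν) * ((η s x) ^ (2 * γ) - 1 - 2 * γ * (η s x - 1))
      - (a * η s x ^ γ - a * (1:ℝ) ^ γ) * deriv (w s) x) with hGdef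
  set G' : ℝ → ℝ → ℝ := fun s x => ν * d2 W (s,x) * d1 (d2 W) (s,x)
      + (a^2*γ/ν) * (((η s x)^(2*γ-1) - 1) * d1 R (s,x))
      - a*γ*((η s x)^(γ-1)) * d1 R (s,x) * d2 W (s,x)
      - a*((η s x)^γ - 1) * d1 (d2 W) (s,x) with hG'def
  have hDer : HasDerivAt (fun s => ∫ x in (0:ℝ)..1, G s x) (∫ x in (0:ℝ)..1, G' t x) t := by
    apply param_hasDerivAt G G' t 1 one_pos
    · intro σ _
      apply Continuous.continuousOn
      have hcds : Continuous (deriv (w σ)) := by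
        have hfe : deriv (w σ) = fun x => d2 W (σ,x) := funext fun x => hd2W_eq σ x
        rw [hfe]
        exact hCd2W.continuous.comp (continuous_const.prodMk continuous_id)
      have hc2γ : Continuous fun x => (η σ x)^(2*γ) :=
        (hsliceη σ).continuous.rpow_const (fun x => Or.inr (by linarith))
      have hcγ : Continuous fun x => (η σ x)^γ :=
        (hsliceη σ).continuous.rpow_const (fun x => Or.inr (by linarith))
      have hcr : Continuous (η σ) := (hsliceη σ).continuous
      rw [hGdef]
      fun_prop
    · apply Continuous.continuousOn
      have e1 : Continuous fun p : ℝ × ℝ => (R p)^(2*γ-1) :=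
        hη.continuous.rpow_const (fun p => Or.inr (by linarith))
      have e2 : Continuous fun p : ℝ × ℝ => (R p)^(γ-1) :=
        hη.continuous.rpow_const (fun p => Or.inr (by linarith))
      have e3 : Continuous fun p : ℝ × ℝ => (R p)^γ :=
        hη.continuous.rpow_const (fun p => Or.inr (by linarith))
      have e4 : Continuous (d2 W) := hCd2W.continuous
      have e5 : Continuous (d1 (d2 W)) := hCd12W.continuous
      have e6 : Continuous (d1 R) := hCd1R.continuous
      show Continuous fun p : ℝ × ℝ => ν * d2 W p * d1 (d2 W) p
        + (a^2*γ/ν) * (((R p)^(2*γ-1) - 1) * d1 R p)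
        - a*γ*((R p)^(γ-1)) * d1 R p * d2 W p
        - a*((R p)^γ - 1) * d1 (d2 W) p
      fun_prop
    · intro x _ σ _
      have h1 : HasDerivAt (fun s' => deriv (w s') x) (d1 (d2 W) (σ,x)) σ := hS σ x
      have hη' := hd1R σ x
      have hq2γ : HasDerivAt (fun s' => (η s' x)^(2*γ))
          (d1 R (σ,x) * (2*γ) * (η σ x)^(2*γ-1)) σ :=
        hη'.rpow_const (Or.inr (by linarith))
      have hqγ : HasDerivAt (fun s' => (η s' x)^γ)
          (d1 R (σ,x) * γ * (η σ x)^(γ-1)) σ :=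
        hη'.rpow_const (Or.inr hγ)
      have hf1 := (h1.pow 2).const_mul (ν/2)
      have hf2 := ((hq2γ.sub_const 1).sub ((hη'.sub_const 1).const_mul (2*γ))).const_mul
        (a^2/(2*ν))
      have hf3 := ((hqγ.const_mul a).sub_const (a*(1:ℝ)^γ)).mul h1
      have hAll := (hf1.add hf2).sub hf3
      rw [hG'def]
      refine hAll.congr_deriv ?_
      rw [Real.one_rpow, hd2W_eq σ x]
      push_cast
      ring
  refine ⟨∫ x in (0:ℝ)..1, G' t x, hDer.hasDerivWithinAt, ?_⟩
  -- apply the slice inequality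
  have hud' : ∀ x : ℝ, deriv (fun x' => d1 W (t,x')) x = d1 (d2 W) (t,x) := by
    intro x
    have h := (hasDerivAt_d2 hCd1W t x).deriv
    rw [h, ← d1_d2_comm hw (t,x)]
  have hslice := sliceIneq a γ ν ηbar ha hγ hν hηbar (w t) (η t)
    (fun x => d1 W (t,x)) (fun x => d1 R (t,x))
    (hslicew t) (hsliceη t)
    (hCd1W.comp (contDiff_const.prodMk contDiff_id))
    (hCd1R.comp (contDiff_const.prodMk contDiff_id))
    (fun x => hwper t x) (fun x => hηper t x)
    (by
      intro x
      show d1 W (t, x+1) = d1 W (t, x)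
      have h1 : (fun s => w s (x+1)) = (fun s => w s x) := funext fun s => hwper s x
      have e1 : d1 W (t, x+1) = deriv (fun s => w s (x+1)) t := (hd1W_eq t (x+1)).symm
      rw [e1, h1, hd1W_eq t x])
    (fun x => hηpos t x ht) (fun x => hηle t x ht)
    (by
      intro x
      have h := hmassH t x ht
      rwa [hd1R_eq t x] at h)
    (by
      intro x
      have h := hmomH t x ht
      rwa [hd1W_eq t x] at h)
    hconsv
  -- convert integrals
  have hEq1 : (∫ x in (0:ℝ)..1, G' t x)
      = ∫ x in (0:ℝ)..1, (ν * deriv (w t) x * deriv (fun x' => d1 W (t,x')) x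
        + (a^2*γ/ν) * (((η t x)^(2*γ-1) - 1) * d1 R (t,x))
        - a*γ*((η t x)^(γ-1)) * d1 R (t,x) * deriv (w t) x
        - a*((η t x)^γ - 1) * deriv (fun x' => d1 W (t,x')) x) := by
    apply intervalIntegral.integral_congr
    intro x _
    rw [hG'def]
    simp only
    rw [hd2W_eq t x, hud' x]
  have hEq2 : (∫ x in (0:ℝ)..1, η t x * (deriv (fun s => w s x) t)^2)
      = ∫ x in (0:ℝ)..1, η t x * (d1 W (t,x))^2 := by
    apply intervalIntegral.integral_congr
    intro x _
    show η t x * (deriv (fun s => w s x) t)^2 = η t x * (d1 W (t,x))^2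
    rw [hd1W_eq t x]
  rw [hEq1, hEq2]
  exact hslice
end

section
/- Let T = ℝ/ℤ, let μ > 0 and 0 < η̲ ≤ η̄. Let η, w, 𝔴 : [0,∞) × T → ℝ be smooth functions with η̲ ≤ η(t,x) ≤ η̄ for all (t,x), satisfying the continuity equation ∂_t η + ∂_x(η w) = 0 and the transport–diffusion equation η(∂_t 𝔴 + w ∂_x 𝔴) − μ ∂_x² 𝔴 = 0 on [0,∞) × T. Assume ∫_T η₀ dx = 1 and ∫_T η₀ 𝔴₀ dx = 0, where η₀ = η(0,·), 𝔴₀ = 𝔴(0,·). Then for all t ≥ 0: ∫_T |𝔴(t,x)|² dx ≤ η̲^{−1} e^{−μ η̄^{−2} t} ∫_T η₀ |𝔴₀|² dx. -/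
open MeasureTheory Set intervalIntegral

namespace TWL2

/-- partial derivative in the first (time) variable -/
noncomputable def pt (f : ℝ → ℝ → ℝ) (t x : ℝ) : ℝ :=
  fderiv ℝ (Function.uncurry f) (t, x) (1, 0)

/-- partial derivative in the second (space) variable -/
noncomputable def px (f : ℝ → ℝ → ℝ) (t x : ℝ) : ℝ :=
  fderiv ℝ (Function.uncurry f) (t, x) (0, 1)

variable {f : ℝ → ℝ → ℝ}

lemma hasDerivAt_t (hf : ContDiff ℝ (⊤ : ℕ∞) (Function.uncurry f)) (t x : ℝ) :
    HasDerivAt (fun s => f s x) (pt f t x) t := by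
  have h := (hf.differentiable (by simp) (t, x)).hasFDerivAt
  have h2 : HasDerivAt (fun s : ℝ => (s, x)) ((1:ℝ), (0:ℝ)) t :=
    (hasDerivAt_id t).prodMk (hasDerivAt_const t x)
  exact h.comp_hasDerivAt t h2

lemma hasDerivAt_x (hf : ContDiff ℝ (⊤ : ℕ∞) (Function.uncurry f)) (t x : ℝ) :
    HasDerivAt (f t) (px f t x) x := by
  have h := (hf.differentiable (by simp) (t, x)).hasFDerivAt
  have h2 : HasDerivAt (fun s : ℝ => (t, s)) ((0:ℝ), (1:ℝ)) x :=
    (hasDerivAt_const x t).prodMk (hasDerivAt_id x)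
  exact h.comp_hasDerivAt x h2

lemma contDiff_pt (hf : ContDiff ℝ (⊤ : ℕ∞) (Function.uncurry f)) :
    ContDiff ℝ (⊤ : ℕ∞) (Function.uncurry (pt f)) := by
  have h : ContDiff ℝ (⊤ : ℕ∞) (fun p : ℝ × ℝ => fderiv ℝ (Function.uncurry f) p) :=
    hf.fderiv_right (by simp)
  exact h.clm_apply contDiff_const

lemma contDiff_px (hf : ContDiff ℝ (⊤ : ℕ∞) (Function.uncurry f)) :
    ContDiff ℝ (⊤ : ℕ∞) (Function.uncurry (px f)) := by
  have h : ContDiff ℝ (⊤ : ℕ∞) (fun p : ℝ × ℝ => fderiv ℝ (Function.uncurry f) p) :=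
    hf.fderiv_right (by simp)
  exact h.clm_apply contDiff_const

lemma contDiff_slice (hf : ContDiff ℝ (⊤ : ℕ∞) (Function.uncurry f)) (t : ℝ) :
    ContDiff ℝ (⊤ : ℕ∞) (f t) :=
  hf.comp (contDiff_const.prodMk contDiff_id)

lemma px_eq_deriv (hf : ContDiff ℝ (⊤ : ℕ∞) (Function.uncurry f)) (t : ℝ) :
    deriv (f t) = px f t :=
  funext fun x => (hasDerivAt_x hf t x).deriv

/-- periodic functions have periodic derivatives -/
lemma deriv_periodic (g : ℝ → ℝ) (hper : ∀ x, g (x + 1) = g x) (x : ℝ) :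
    deriv g (x + 1) = deriv g x := by
  have : deriv (fun y => g (y + 1)) x = deriv g (x + 1) := deriv_comp_add_const g 1 x
  rw [← this]
  congr 1
  ext y
  exact hper y

/-- differentiation under the interval integral for a smooth integrand -/
lemma hasDerivAt_integral (hf : ContDiff ℝ (⊤ : ℕ∞) (Function.uncurry f)) (t₀ : ℝ) :
    HasDerivAt (fun t => ∫ x in (0:ℝ)..1, f t x) (∫ x in (0:ℝ)..1, pt f t₀ x) t₀ := by
  have hcont : Continuous (Function.uncurry (pt f)) := (contDiff_pt hf).continuous
  obtain ⟨C, hC⟩ : ∃ C, ∀ p ∈ (Icc (t₀ - 1) (t₀ + 1) ×ˢ Icc (0:ℝ) 1),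
      ‖Function.uncurry (pt f) p‖ ≤ C :=
    (isCompact_Icc.prod isCompact_Icc).exists_bound_of_continuousOn hcont.continuousOn
  have key := intervalIntegral.hasDerivAt_integral_of_dominated_loc_of_deriv_le
    (F := fun t x => f t x) (F' := fun t x => pt f t x) (x₀ := t₀)
    (a := (0:ℝ)) (b := 1) (μ := volume) (bound := fun _ => C) (s := Metric.ball t₀ 1) (Metric.ball_mem_nhds t₀ one_pos)
    ?_ ?_ ?_ ?_ ?_ ?_
  · exact key.2
  · exact Filter.Eventually.of_forall fun t =>
      ((contDiff_slice hf t).continuous.aestronglyMeasurable).restrict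
  · exact ((contDiff_slice hf t₀).continuous).intervalIntegrable 0 1
  · exact (Continuous.aestronglyMeasurable (by
      have : Continuous fun x => pt f t₀ x := hcont.comp (Continuous.prodMk_right t₀)
      exact this)).restrict
  · refine Filter.Eventually.of_forall fun x hx t ht => ?_
    apply hC (t, x)
    constructor
    · have := Metric.mem_ball.mp ht
      rw [Real.dist_eq] at this
      constructor <;> [linarith [abs_le.mp this.le |>.1]; linarith [abs_le.mp this.le |>.2]]
    · exact Ioc_subset_Icc_self (by simpa [Set.uIoc_of_le (by norm_num : (0:ℝ) ≤ 1)] using hx)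
  · exact intervalIntegrable_const
  · exact Filter.Eventually.of_forall fun x _ t _ => hasDerivAt_t hf t x

/-- integral of the derivative of a smooth 1-periodic function vanishes -/
lemma integral_deriv_periodic (g : ℝ → ℝ) (hg : ContDiff ℝ (⊤ : ℕ∞) g)
    (hper : ∀ x, g (x + 1) = g x) :
    (∫ x in (0:ℝ)..1, deriv g x) = 0 := by
  rw [intervalIntegral.integral_deriv_eq_sub (fun x _ => hg.differentiable (by simp) x)
      (((contDiff_infty_iff_deriv.mp (hg.of_le (by simp))).2.continuous).intervalIntegrable 0 1)]
  have := hper 0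
  simp at this
  rw [this]; ring

/-- baby Cauchy–Schwarz on `[0,1]` -/
lemma sq_integral_le (g : ℝ → ℝ) (hg : Continuous g) :
    (∫ x in (0:ℝ)..1, g x) ^ 2 ≤ ∫ x in (0:ℝ)..1, (g x) ^ 2 := by
  set c := ∫ x in (0:ℝ)..1, g x with hc
  have h0 : 0 ≤ ∫ x in (0:ℝ)..1, (g x - c) ^ 2 :=
    intervalIntegral.integral_nonneg (by norm_num) fun x _ => sq_nonneg _
  have hexp : (∫ x in (0:ℝ)..1, (g x - c) ^ 2)
      = (∫ x in (0:ℝ)..1, (g x) ^ 2) - 2 * c * c + c ^ 2 := by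
    have h1 : ∀ x : ℝ, (g x - c) ^ 2 = (g x) ^ 2 - 2 * c * g x + c ^ 2 := by intro x; ring
    simp_rw [h1]
    rw [intervalIntegral.integral_add (f := fun x => (g x) ^ 2 - 2 * c * g x) (g := fun _ => c ^ 2) (((hg.pow 2).sub ((continuous_const.mul hg))).intervalIntegrable 0 1)
        (intervalIntegrable_const),
      intervalIntegral.integral_sub (f := fun x => (g x) ^ 2) (g := fun x => 2 * c * g x) ((hg.pow 2).intervalIntegrable 0 1)
        ((continuous_const.mul hg).intervalIntegrable 0 1),
      intervalIntegral.integral_const_mul]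
    simp [← hc]
  nlinarith [h0, hexp]

end TWL2

open TWL2

/-- **`L²` decay for the passively transported velocity component `𝔴`**
(estimate `tw-L2` of Proposition `prop-tw-L2`): if `η̲ ≤ η ≤ η̄`, the pair
`(η, w)` satisfies the continuity equation `∂ₜ η + ∂ₓ(η w) = 0`, `𝔴` solves
the transport–diffusion equation `η(∂ₜ 𝔴 + w ∂ₓ 𝔴) - μ ∂ₓ² 𝔴 = 0` on
`[0,∞) × 𝕋`, and `∫_𝕋 η₀ = 1`, `∫_𝕋 η₀ 𝔴₀ = 0`, then for all `t ≥ 0`: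
`∫_𝕋 𝔴(t)² ≤ η̲⁻¹ e^{-μ η̄⁻² t} ∫_𝕋 η₀ 𝔴₀²`.
Functions on `𝕋 = ℝ/ℤ` are modelled as `1`-periodic functions of `x`. -/
theorem transported_component_L2_decay (μ ηlow ηbar : ℝ)
    (hμ : 0 < μ) (hηlow : 0 < ηlow) (hord : ηlow ≤ ηbar)
    (η w v : ℝ → ℝ → ℝ)
    (hη_smooth : ContDiff ℝ (⊤ : ℕ∞) (Function.uncurry η))
    (hw_smooth : ContDiff ℝ (⊤ : ℕ∞) (Function.uncurry w))
    (hv_smooth : ContDiff ℝ (⊤ : ℕ∞) (Function.uncurry v))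
    (hη_per : ∀ t x : ℝ, η t (x + 1) = η t x)
    (hw_per : ∀ t x : ℝ, w t (x + 1) = w t x)
    (hv_per : ∀ t x : ℝ, v t (x + 1) = v t x)
    (hη_bd : ∀ t x : ℝ, 0 ≤ t → ηlow ≤ η t x ∧ η t x ≤ ηbar)
    (hmass : ∀ t x : ℝ, 0 ≤ t →
      deriv (fun s => η s x) t + deriv (fun y => η t y * w t y) x = 0)
    (htrans : ∀ t x : ℝ, 0 ≤ t →
      η t x * (deriv (fun s => v s x) t + w t x * deriv (v t) x)
        - μ * deriv (deriv (v t)) x = 0)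
    (hm1 : (∫ x in (0:ℝ)..1, η 0 x) = 1)
    (hm2 : (∫ x in (0:ℝ)..1, η 0 x * v 0 x) = 0) :
    ∀ t : ℝ, 0 ≤ t →
      (∫ x in (0:ℝ)..1, (v t x) ^ 2)
        ≤ ηlow⁻¹ * Real.exp (-(μ / ηbar ^ 2) * t)
            * ∫ x in (0:ℝ)..1, η 0 x * (v 0 x) ^ 2 := by
  intro t ht
  -- notation
  have hvx_smooth : ContDiff ℝ (⊤ : ℕ∞) (Function.uncurry (px v)) := contDiff_px hv_smooth
  have hvx_eq : ∀ s, deriv (v s) = px v s := fun s => px_eq_deriv hv_smooth s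
  -- basic positivity facts
  have hηbar0 : 0 < ηbar := lt_of_lt_of_le hηlow hord
  have hηbar1 : (1:ℝ) ≤ ηbar := by
    have h1 : (∫ x in (0:ℝ)..1, η 0 x) ≤ ∫ x in (0:ℝ)..1, ηbar := by
      apply intervalIntegral.integral_mono_on (by norm_num)
        (((contDiff_slice hη_smooth 0).continuous).intervalIntegrable 0 1)
        intervalIntegrable_const
      exact fun x _ => (hη_bd 0 x le_rfl).2
    rw [hm1] at h1
    simpa using h1
  set c : ℝ := μ / ηbar ^ 2 with hc
  have hc0 : 0 ≤ c := le_of_lt (div_pos hμ (by positivity))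
  -- the three fundamental quantities
  set F : ℝ → ℝ := fun s => ∫ x in (0:ℝ)..1, η s x * (v s x) ^ 2 with hFdef
  set N : ℝ → ℝ := fun s => ∫ x in (0:ℝ)..1, η s x * v s x with hNdef
  set G : ℝ → ℝ := fun s => ∫ x in (0:ℝ)..1, (px v s x) ^ 2 with hGdef
  have hP_smooth : ContDiff ℝ (⊤ : ℕ∞) (Function.uncurry (fun s x => η s x * (v s x) ^ 2)) :=
    hη_smooth.mul (hv_smooth.pow 2)
  have hQ_smooth : ContDiff ℝ (⊤ : ℕ∞) (Function.uncurry (fun s x => η s x * v s x)) :=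
    hη_smooth.mul hv_smooth
  -- differentiability of F and N
  have hFd : ∀ s : ℝ, HasDerivAt F (∫ x in (0:ℝ)..1, pt (fun s x => η s x * (v s x) ^ 2) s x) s :=
    fun s => hasDerivAt_integral hP_smooth s
  have hNd : ∀ s : ℝ, HasDerivAt N (∫ x in (0:ℝ)..1, pt (fun s x => η s x * v s x) s x) s :=
    fun s => hasDerivAt_integral hQ_smooth s
  -- rewritten PDEs
  have hm' : ∀ s x : ℝ, 0 ≤ s →
      pt η s x + (px η s x * w s x + η s x * px w s x) = 0 := by
    intro s x hs
    have h := hmass s x hs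
    rw [(hasDerivAt_t hη_smooth s x).deriv,
      (HasDerivAt.deriv (f := fun y => η s y * w s y)
        ((hasDerivAt_x hη_smooth s x).mul (hasDerivAt_x hw_smooth s x)))] at h
    linarith
  have ht' : ∀ s x : ℝ, 0 ≤ s →
      η s x * (pt v s x + w s x * px v s x) - μ * px (px v) s x = 0 := by
    intro s x hs
    have h := htrans s x hs
    rw [(hasDerivAt_t hv_smooth s x).deriv, hvx_eq s,
      (hasDerivAt_x hvx_smooth s x).deriv] at h
    exact h
  -- N is conserved
  have hN' : ∀ s : ℝ, 0 ≤ s → HasDerivAt N 0 s := by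
    intro s hs
    have hC_smooth2 : ContDiff ℝ (⊤ : ℕ∞)
        (Function.uncurry (fun r y => -(η r y * w r y * v r y) + μ * px v r y)) :=
      (((hη_smooth.mul hw_smooth).mul hv_smooth).neg).add (contDiff_const.mul hvx_smooth)
    have hC_per : ∀ y : ℝ, -(η s (y + 1) * w s (y + 1) * v s (y + 1)) + μ * px v s (y + 1)
        = -(η s y * w s y * v s y) + μ * px v s y := by
      intro y
      have hpx : px v s (y + 1) = px v s y := by
        rw [← hvx_eq s]; exact deriv_periodic (v s) (hv_per s) y
      rw [hη_per, hw_per, hv_per, hpx]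
    have hid : ∀ x : ℝ, pt (fun r x => η r x * v r x) s x
        = deriv (fun y => -(η s y * w s y * v s y) + μ * px v s y) x := by
      intro x
      have hL : pt (fun r x => η r x * v r x) s x
          = pt η s x * v s x + η s x * pt v s x :=
        (hasDerivAt_t hQ_smooth s x).unique
          ((hasDerivAt_t hη_smooth s x).mul (hasDerivAt_t hv_smooth s x))
      have hR : HasDerivAt (fun y => -(η s y * w s y * v s y) + μ * px v s y)
          (-((px η s x * w s x + η s x * px w s x) * v s x + η s x * w s x * px v s x)
            + μ * px (px v) s x) x :=
        ((((hasDerivAt_x hη_smooth s x).mul (hasDerivAt_x hw_smooth s x)).mul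
            (hasDerivAt_x hv_smooth s x)).neg).add
          ((hasDerivAt_x hvx_smooth s x).const_mul μ)
      rw [hL, hR.deriv]
      linear_combination (v s x) * hm' s x hs + ht' s x hs
    have key : (∫ x in (0:ℝ)..1, pt (fun r x => η r x * v r x) s x) = 0 := by
      rw [intervalIntegral.integral_congr (fun x _ => hid x)]
      exact integral_deriv_periodic _ (contDiff_slice hC_smooth2 s) hC_per
    exact key ▸ hNd s
  have hNt : ∀ s : ℝ, 0 ≤ s → N s = 0 := by
    intro s hs
    rcases eq_or_lt_of_le hs with h | h
    · rw [← h]; exact hm2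
    have hcont : ContinuousOn N (Icc 0 s) :=
      (fun r _ => ((hNd r).differentiableAt.continuousAt.continuousWithinAt))
    have := constant_of_has_deriv_right_zero hcont
      (fun r hr => (hN' r hr.1).hasDerivWithinAt) s (right_mem_Icc.mpr hs)
    rw [this]; exact hm2
  -- energy dissipation
  have hF' : ∀ s : ℝ, 0 ≤ s → HasDerivAt F (-(2 * μ) * G s) s := by
    intro s hs
    have hB_smooth : ContDiff ℝ (⊤ : ℕ∞)
        (Function.uncurry (fun r y => -(η r y * w r y * (v r y) ^ 2)
          + 2 * μ * (v r y * px v r y))) :=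
      (((hη_smooth.mul hw_smooth).mul (hv_smooth.pow 2)).neg).add
        (contDiff_const.mul (hv_smooth.mul hvx_smooth))
    have hB_per : ∀ y : ℝ, -(η s (y + 1) * w s (y + 1) * (v s (y + 1)) ^ 2)
          + 2 * μ * (v s (y + 1) * px v s (y + 1))
        = -(η s y * w s y * (v s y) ^ 2) + 2 * μ * (v s y * px v s y) := by
      intro y
      have hpx : px v s (y + 1) = px v s y := by
        rw [← hvx_eq s]; exact deriv_periodic (v s) (hv_per s) y
      rw [hη_per, hw_per, hv_per, hpx]
    have hid : ∀ x : ℝ, pt (fun r x => η r x * (v r x) ^ 2) s x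
        = deriv (fun y => -(η s y * w s y * (v s y) ^ 2) + 2 * μ * (v s y * px v s y)) x
          - 2 * μ * (px v s x) ^ 2 := by
      intro x
      have hL : pt (fun r x => η r x * (v r x) ^ 2) s x
          = pt η s x * (v s x) ^ 2 + η s x * (2 * v s x ^ (2 - 1) * pt v s x) :=
        (hasDerivAt_t hP_smooth s x).unique
          ((hasDerivAt_t hη_smooth s x).mul ((hasDerivAt_t hv_smooth s x).pow 2))
      have hR : HasDerivAt
          (fun y => -(η s y * w s y * (v s y) ^ 2) + 2 * μ * (v s y * px v s y))
          (-((px η s x * w s x + η s x * px w s x) * (v s x) ^ 2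
              + η s x * w s x * (2 * v s x ^ (2 - 1) * px v s x))
            + 2 * μ * (px v s x * px v s x + v s x * px (px v) s x)) x :=
        ((((hasDerivAt_x hη_smooth s x).mul (hasDerivAt_x hw_smooth s x)).mul
            ((hasDerivAt_x hv_smooth s x).pow 2)).neg).add
          (((hasDerivAt_x hv_smooth s x).mul (hasDerivAt_x hvx_smooth s x)).const_mul (2 * μ))
      rw [hL, hR.deriv]
      norm_num
      linear_combination (v s x) ^ 2 * hm' s x hs + 2 * (v s x) * ht' s x hs
    have key : (∫ x in (0:ℝ)..1, pt (fun r x => η r x * (v r x) ^ 2) s x)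
        = -(2 * μ) * G s := by
      rw [intervalIntegral.integral_congr (fun x _ => hid x)]
      have hderiv_cont : Continuous (deriv (fun y => -(η s y * w s y * (v s y) ^ 2)
          + 2 * μ * (v s y * px v s y))) :=
        ((contDiff_infty_iff_deriv.mp ((contDiff_slice hB_smooth s).of_le (by simp))).2).continuous
      have hpx_cont : Continuous fun x => 2 * μ * (px v s x) ^ 2 :=
        continuous_const.mul (((contDiff_slice hvx_smooth s).continuous).pow 2)
      rw [intervalIntegral.integral_sub (hderiv_cont.intervalIntegrable 0 1)
          (hpx_cont.intervalIntegrable 0 1),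
        integral_deriv_periodic _ (contDiff_slice hB_smooth s) hB_per,
        intervalIntegral.integral_const_mul]
      show (0:ℝ) - 2 * μ * G s = -(2 * μ) * G s
      ring
    exact key ▸ hFd s
  -- nonnegativity
  have hG0 : ∀ s : ℝ, 0 ≤ G s := fun s =>
    intervalIntegral.integral_nonneg (by norm_num) fun x _ => sq_nonneg _
  have hF0 : ∀ s : ℝ, 0 ≤ s → 0 ≤ F s := fun s hs =>
    intervalIntegral.integral_nonneg (by norm_num) fun x _ =>
      mul_nonneg (le_trans hηlow.le (hη_bd s x hs).1) (sq_nonneg _)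
  -- Poincaré inequality
  have hpoin : ∀ s : ℝ, 0 ≤ s → F s ≤ ηbar * G s := by
    intro s hs
    have hvcont : Continuous (v s) := (contDiff_slice hv_smooth s).continuous
    have hvxcont : Continuous (px v s) := (contDiff_slice hvx_smooth s).continuous
    -- v s has a zero in [0,1]
    obtain ⟨x₀, hx₀, hvx₀⟩ : ∃ x₀ ∈ Icc (0:ℝ) 1, v s x₀ = 0 := by
      by_contra hcon
      push_neg at hcon
      have hsame : ∀ x ∈ Icc (0:ℝ) 1, 0 < v s 0 * v s x := by
        intro x hx
        rcases lt_trichotomy (v s 0 * v s x) 0 with hlt | heq | hgt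
        · exfalso
          have h0 : (0:ℝ) ∈ uIcc (v s 0) (v s x) := by
            rcases mul_neg_iff.mp hlt with ⟨h1, h2⟩ | ⟨h1, h2⟩
            · exact mem_uIcc.mpr (Or.inr ⟨h2.le, h1.le⟩)
            · exact mem_uIcc.mpr (Or.inl ⟨h1.le, h2.le⟩)
          obtain ⟨x₂, hx₂, hx₂0⟩ := intermediate_value_uIcc (hvcont.continuousOn) h0
          have hx₂' : x₂ ∈ Icc (0:ℝ) 1 := by
            have hsub : uIcc (0:ℝ) x ⊆ Icc 0 1 := by
              rw [uIcc_of_le hx.1]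
              exact Icc_subset_Icc le_rfl hx.2
            exact hsub hx₂
          exact hcon x₂ hx₂' hx₂0
        · exfalso
          rcases mul_eq_zero.mp heq with h1 | h1
          · exact hcon 0 ⟨le_rfl, by norm_num⟩ h1
          · exact hcon x hx h1
        · exact hgt
      have hpos : 0 < ∫ x in (0:ℝ)..1, η s x * (v s 0 * v s x) := by
        apply intervalIntegral.intervalIntegral_pos_of_pos_on
        · exact (((contDiff_slice hη_smooth s).continuous).mul
            (continuous_const.mul hvcont)).intervalIntegrable 0 1
        · intro x hx
          exact mul_pos (lt_of_lt_of_le hηlow (hη_bd s x hs).1)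
            (hsame x ⟨hx.1.le, hx.2.le⟩)
        · norm_num
      have heqN : (∫ x in (0:ℝ)..1, η s x * (v s 0 * v s x)) = v s 0 * N s := by
        show (∫ x in (0:ℝ)..1, η s x * (v s 0 * v s x))
          = v s 0 * ∫ x in (0:ℝ)..1, η s x * v s x
        rw [← intervalIntegral.integral_const_mul]
        apply intervalIntegral.integral_congr
        intro x _
        ring
      rw [heqN, hNt s hs, mul_zero] at hpos
      exact lt_irrefl 0 hpos
    -- sup bound via FTC and Cauchy-Schwarz
    have hsup : ∀ x ∈ Icc (0:ℝ) 1, (v s x) ^ 2 ≤ G s := by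
      intro x hx
      have hftc : (∫ y in x₀..x, deriv (v s) y) = v s x - v s x₀ :=
        intervalIntegral.integral_deriv_eq_sub
          (fun y _ => (contDiff_slice hv_smooth s).differentiable (by simp) y)
          (by rw [hvx_eq s]; exact hvxcont.intervalIntegrable _ _)
      rw [hvx_eq s] at hftc
      have hvx0 : v s x = ∫ y in x₀..x, px v s y := by
        rw [hftc, hvx₀, sub_zero]
      have hint : IntervalIntegrable (fun y => |px v s y|) volume 0 1 :=
        (hvxcont.abs).intervalIntegrable 0 1
      have habs : |v s x| ≤ ∫ y in (0:ℝ)..1, |px v s y| := by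
        rcases le_total x₀ x with hle | hle
        · rw [hvx0]
          calc |∫ y in x₀..x, px v s y| ≤ ∫ y in x₀..x, |px v s y| :=
                intervalIntegral.abs_integral_le_integral_abs hle
            _ ≤ ∫ y in (0:ℝ)..1, |px v s y| :=
                intervalIntegral.integral_mono_interval hx₀.1 hle hx.2
                  (Filter.Eventually.of_forall fun y => abs_nonneg _) hint
        · rw [hvx0, intervalIntegral.integral_symm, abs_neg]
          calc |∫ y in x..x₀, px v s y| ≤ ∫ y in x..x₀, |px v s y| :=
                intervalIntegral.abs_integral_le_integral_abs hle
            _ ≤ ∫ y in (0:ℝ)..1, |px v s y| :=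
                intervalIntegral.integral_mono_interval hx.1 hle hx₀.2
                  (Filter.Eventually.of_forall fun y => abs_nonneg _) hint
      calc (v s x) ^ 2 = |v s x| ^ 2 := (sq_abs _).symm
        _ ≤ (∫ y in (0:ℝ)..1, |px v s y|) ^ 2 :=
            pow_le_pow_left₀ (abs_nonneg _) habs 2
        _ ≤ ∫ y in (0:ℝ)..1, |px v s y| ^ 2 := sq_integral_le _ hvxcont.abs
        _ = G s := by
            apply intervalIntegral.integral_congr
            intro y _
            exact sq_abs _
    -- conclude
    have hmono : (∫ x in (0:ℝ)..1, η s x * (v s x) ^ 2)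
        ≤ ∫ x in (0:ℝ)..1, ηbar * G s := by
      apply intervalIntegral.integral_mono_on (by norm_num)
        ((((contDiff_slice hη_smooth s).continuous).mul (hvcont.pow 2)).intervalIntegrable 0 1)
        intervalIntegrable_const
      intro x hx
      calc η s x * (v s x) ^ 2 ≤ ηbar * (v s x) ^ 2 :=
            mul_le_mul_of_nonneg_right (hη_bd s x hs).2 (sq_nonneg _)
        _ ≤ ηbar * G s := mul_le_mul_of_nonneg_left (hsup x hx) hηbar0.le
    simpa using hmono
  -- Grönwall
  have hFt : F t ≤ Real.exp (-(c * t)) * F 0 := by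
    have hHd : ∀ s : ℝ, 0 ≤ s →
        HasDerivAt (fun r => Real.exp (c * r) * F r)
          (Real.exp (c * s) * (c * 1) * F s + Real.exp (c * s) * (-(2 * μ) * G s)) s := by
      intro s hs
      exact (((hasDerivAt_id s).const_mul c).exp).mul (hF' s hs)
    have hFcont : Continuous F :=
      continuous_iff_continuousAt.mpr fun s => (hFd s).differentiableAt.continuousAt
    have hanti : AntitoneOn (fun r => Real.exp (c * r) * F r) (Ici (0:ℝ)) := by
      apply antitoneOn_of_deriv_nonpos (convex_Ici 0)
      · exact ((Real.continuous_exp.comp (continuous_const.mul continuous_id)).mul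
          hFcont).continuousOn
      · intro s hs
        rw [interior_Ici] at hs
        exact (hHd s (le_of_lt hs)).differentiableAt.differentiableWithinAt
      · intro s hs
        rw [interior_Ici] at hs
        rw [(hHd s hs.le).deriv]
        have h1 : c * F s ≤ 2 * μ * G s := by
          have h2 : c * F s ≤ c * (ηbar * G s) :=
            mul_le_mul_of_nonneg_left (hpoin s hs.le) hc0
          have h3 : c * ηbar ≤ 2 * μ := by
            rw [hc, div_mul_eq_mul_div, div_le_iff₀ (by positivity)]
            nlinarith [mul_nonneg (mul_nonneg hμ.le hηbar0.le) (sub_nonneg.mpr hηbar1), mul_nonneg hμ.le hηbar0.le]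
          nlinarith [hG0 s]
        have hexp : 0 < Real.exp (c * s) := Real.exp_pos _
        nlinarith [hexp]
    have hle : Real.exp (c * t) * F t ≤ Real.exp (c * 0) * F 0 :=
      hanti (self_mem_Ici) ht ht
    rw [mul_zero, Real.exp_zero, one_mul] at hle
    rw [Real.exp_neg]
    exact (le_inv_mul_iff₀ (Real.exp_pos _)).mpr hle
  -- conclusion
  have hlow : ηlow * (∫ x in (0:ℝ)..1, (v t x) ^ 2) ≤ F t := by
    rw [← intervalIntegral.integral_const_mul]
    apply intervalIntegral.integral_mono_on (by norm_num)
      ((continuous_const.mul (((contDiff_slice hv_smooth t).continuous).pow 2)).intervalIntegrable 0 1)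
      ((((contDiff_slice hη_smooth t).continuous).mul
        (((contDiff_slice hv_smooth t).continuous).pow 2)).intervalIntegrable 0 1)
    intro x _
    exact mul_le_mul_of_nonneg_right (hη_bd t x ht).1 (sq_nonneg _)
  have hFin : (∫ x in (0:ℝ)..1, (v t x) ^ 2) ≤ ηlow⁻¹ * F t :=
    (le_inv_mul_iff₀ hηlow).mpr hlow
  calc (∫ x in (0:ℝ)..1, (v t x) ^ 2) ≤ ηlow⁻¹ * F t := hFin
    _ ≤ ηlow⁻¹ * (Real.exp (-(c * t)) * F 0) := by
        apply mul_le_mul_of_nonneg_left hFt (by positivity)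
    _ = ηlow⁻¹ * Real.exp (-(μ / ηbar ^ 2) * t) * F 0 := by rw [hc, neg_mul]; ring
end

section
/- Let T = ℝ/ℤ, let μ > 0, 0 < η̲ ≤ η̄ and K ≥ 0. Let η, w, 𝔴 : [0,∞) × T → ℝ be smooth functions with η̲ ≤ η(t,x) ≤ η̄ and |∂_x w(t,x)| ≤ K for all (t,x), satisfying the continuity equation ∂_t η + ∂_x(η w) = 0 and the transport–diffusion equation η(∂_t 𝔴 + w ∂_x 𝔴) − μ ∂_x² 𝔴 = 0 on [0,∞) × T. Assume ∫_T η₀ dx = 1 and ∫_T η₀ 𝔴₀ dx = 0, where η₀ = η(0,·), 𝔴₀ = 𝔴(0,·). Then there exist positive constants C and α, depending only on (μ, η̲, η̄, K), such that for all t ≥ 0: ∫_T ( |𝔴|² + |∂_x 𝔴|² )(t,x) dx ≤ C e^{−α t} ∫_T ( |𝔴₀|² + |∂_x 𝔴₀|² ) dx. -/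
open Function MeasureTheory intervalIntegral
namespace H1D

variable {f : ℝ → ℝ → ℝ}
lemma slice_x (hf : ContDiff ℝ (⊤ : ℕ∞) (uncurry f)) (t : ℝ) : ContDiff ℝ (⊤ : ℕ∞) (f t) :=
  hf.comp (contDiff_const.prodMk contDiff_id)

lemma slice_t (hf : ContDiff ℝ (⊤ : ℕ∞) (uncurry f)) (x : ℝ) : ContDiff ℝ (⊤ : ℕ∞) (fun s => f s x) :=
  hf.comp (contDiff_id.prodMk contDiff_const)



lemma hasDerivAt_x (hf : ContDiff ℝ (⊤ : ℕ∞) (uncurry f)) (t x : ℝ) :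
    HasDerivAt (f t) (fderiv ℝ (uncurry f) (t, x) (0, 1)) x := by
  have h1 : HasFDerivAt (uncurry f) (fderiv ℝ (uncurry f) (t, x)) (t, x) :=
    (hf.differentiable (by simp) (t, x)).hasFDerivAt
  exact h1.comp_hasDerivAt x ((hasDerivAt_const x t).prodMk (hasDerivAt_id x))

lemma hasDerivAt_t (hf : ContDiff ℝ (⊤ : ℕ∞) (uncurry f)) (t x : ℝ) :
    HasDerivAt (fun s => f s x) (fderiv ℝ (uncurry f) (t, x) (1, 0)) t := by
  have h1 : HasFDerivAt (uncurry f) (fderiv ℝ (uncurry f) (t, x)) (t, x) :=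
    (hf.differentiable (by simp) (t, x)).hasFDerivAt
  exact h1.comp_hasDerivAt t ((hasDerivAt_id t).prodMk (hasDerivAt_const t x))

lemma deriv_x_eq (hf : ContDiff ℝ (⊤ : ℕ∞) (uncurry f)) (t x : ℝ) :
    deriv (f t) x = fderiv ℝ (uncurry f) (t, x) (0, 1) := (hasDerivAt_x hf t x).deriv

lemma deriv_t_eq (hf : ContDiff ℝ (⊤ : ℕ∞) (uncurry f)) (t x : ℝ) :
    deriv (fun s => f s x) t = fderiv ℝ (uncurry f) (t, x) (1, 0) := (hasDerivAt_t hf t x).deriv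

lemma hasDerivAt_fderiv_line (hf : ContDiff ℝ (⊤ : ℕ∞) (uncurry f))
    (c : ℝ → ℝ × ℝ) (c' : ℝ × ℝ) (s₀ : ℝ) (hc : HasDerivAt c c' s₀) (v : ℝ × ℝ) :
    HasDerivAt (fun s => fderiv ℝ (uncurry f) (c s) v)
      (fderiv ℝ (fun p => fderiv ℝ (uncurry f) p) (c s₀) c' v) s₀ := by
  have hdf : ContDiff ℝ (⊤ : ℕ∞) (fun p => fderiv ℝ (uncurry f) p) := hf.fderiv_right (by simp)
  have h1 : HasFDerivAt (fun p => fderiv ℝ (uncurry f) p)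
      (fderiv ℝ (fun p => fderiv ℝ (uncurry f) p) (c s₀)) (c s₀) :=
    (hdf.differentiable (by simp) (c s₀)).hasFDerivAt
  have h2 := h1.comp_hasDerivAt s₀ hc
  simpa using h2.clm_apply (hasDerivAt_const s₀ v)

/-- Schwarz / Clairaut for curried smooth functions. -/
lemma deriv_swap (hf : ContDiff ℝ (⊤ : ℕ∞) (uncurry f)) (t x : ℝ) :
    deriv (fun s => deriv (f s) x) t = deriv (fun y => deriv (fun s => f s y) t) x := by
  have hA : ∀ u v : ℝ × ℝ,
      fderiv ℝ (fun p => fderiv ℝ (uncurry f) p) (t, x) u v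
        = fderiv ℝ (fun p => fderiv ℝ (uncurry f) p) (t, x) v u := by
    intro u v
    refine second_derivative_symmetric (x := (t, x)) (f := uncurry f)
      (f' := fun p => fderiv ℝ (uncurry f) p) ?_ ?_ u v
    · intro p; exact (hf.differentiable (by simp) p).hasFDerivAt
    · exact ((hf.fderiv_right (m := (⊤ : ℕ∞)) (by simp)).differentiable (by simp) (t, x)).hasFDerivAt
  have h1 : HasDerivAt (fun s => deriv (f s) x)
      (fderiv ℝ (fun p => fderiv ℝ (uncurry f) p) (t, x) (1, 0) (0, 1)) t := by
    have := hasDerivAt_fderiv_line hf (fun s => (s, x)) (1, 0) t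
      ((hasDerivAt_id t).prodMk (hasDerivAt_const t x)) (0, 1)
    refine this.congr_of_eventuallyEq ?_
    filter_upwards with s
    exact deriv_x_eq hf s x
  have h2 : HasDerivAt (fun y => deriv (fun s => f s y) t)
      (fderiv ℝ (fun p => fderiv ℝ (uncurry f) p) (t, x) (0, 1) (1, 0)) x := by
    have := hasDerivAt_fderiv_line hf (fun y => (t, y)) (0, 1) x
      ((hasDerivAt_const x t).prodMk (hasDerivAt_id x)) (1, 0)
    refine this.congr_of_eventuallyEq ?_
    filter_upwards with y
    exact deriv_t_eq hf t y
  rw [h1.deriv, h2.deriv, hA]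

lemma contDiff_pderiv_x (hf : ContDiff ℝ (⊤ : ℕ∞) (uncurry f)) :
    ContDiff ℝ (⊤ : ℕ∞) (uncurry fun t x => deriv (f t) x) := by
  have : (uncurry fun t x => deriv (f t) x)
      = fun p : ℝ × ℝ => fderiv ℝ (uncurry f) p (0, 1) := by
    funext p
    exact deriv_x_eq hf p.1 p.2
  rw [this]
  exact (hf.fderiv_right (by simp)).clm_apply contDiff_const

lemma contDiff_pderiv_t (hf : ContDiff ℝ (⊤ : ℕ∞) (uncurry f)) :
    ContDiff ℝ (⊤ : ℕ∞) (uncurry fun t x => deriv (fun s => f s x) t) := by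
  have : (uncurry fun t x => deriv (fun s => f s x) t)
      = fun p : ℝ × ℝ => fderiv ℝ (uncurry f) p (1, 0) := by
    funext p
    exact deriv_t_eq hf p.1 p.2
  rw [this]
  exact (hf.fderiv_right (by simp)).clm_apply contDiff_const


lemma hasDerivAt_int (hf : ContDiff ℝ (⊤ : ℕ∞) (uncurry f)) (t : ℝ) :
    HasDerivAt (fun s => ∫ x in (0:ℝ)..1, f s x)
      (∫ x in (0:ℝ)..1, deriv (fun s => f s x) t) t := by
  set F' : ℝ → ℝ → ℝ := fun s x => deriv (fun u => f u x) s with hF'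
  have hF'c : Continuous (uncurry F') := by
    have : ContDiff ℝ (⊤ : ℕ∞) (uncurry F') := by
      simpa [F'] using contDiff_pderiv_t (f := f) hf
    exact this.continuous
  -- bound on compact set
  obtain ⟨M, hM⟩ : ∃ M : ℝ, ∀ s ∈ Set.Icc (t-1) (t+1), ∀ x ∈ Set.Icc (0:ℝ) 1,
      |F' s x| ≤ M := by
    have hK : IsCompact (Set.Icc (t-1) (t+1) ×ˢ Set.Icc (0:ℝ) 1) :=
      isCompact_Icc.prod isCompact_Icc
    obtain ⟨M, hM⟩ := hK.exists_bound_of_continuousOn hF'c.continuousOn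
    exact ⟨M, fun s hs x hx => by simpa [Real.norm_eq_abs] using hM (s, x) ⟨hs, hx⟩⟩
  have key := intervalIntegral.hasDerivAt_integral_of_dominated_loc_of_deriv_le
    (F := fun s x => f s x) (F' := F') (x₀ := t) (a := (0:ℝ)) (b := 1)
    (μ := volume) (bound := fun _ => M) (s := Metric.ball t 1) (Metric.ball_mem_nhds t one_pos)
    ?_ ?_ ?_ ?_ ?_ ?_
  · exact key.2
  · filter_upwards with s
    exact ((slice_x hf s).continuous).aestronglyMeasurable
  · exact ((slice_x hf t).continuous).intervalIntegrable 0 1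
  · exact (hF'c.comp (continuous_const.prodMk continuous_id)).aestronglyMeasurable
  · filter_upwards with x hx s hs
    have hx' : x ∈ Set.Icc (0:ℝ) 1 := by
      have : x ∈ Set.Ioc (0:ℝ) 1 := by
        simpa [Set.uIoc_of_le (by norm_num : (0:ℝ) ≤ 1)] using hx
      exact ⟨this.1.le, this.2⟩
    have hs' : s ∈ Set.Icc (t-1) (t+1) := by
      rw [Real.ball_eq_Ioo] at hs
      exact ⟨hs.1.le, hs.2.le⟩
    simpa [Real.norm_eq_abs] using hM s hs' x hx'
  · exact intervalIntegrable_const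
  · filter_upwards with x _ s _
    exact ((slice_t hf x).differentiable (by simp) s).hasDerivAt




/-- Integral over a period of the derivative of a periodic `C¹` function vanishes. -/
lemma integral_deriv_periodic (g : ℝ → ℝ) (hg : ContDiff ℝ (⊤ : ℕ∞) g) (hp : ∀ x, g (x + 1) = g x) :
    (∫ x in (0:ℝ)..1, deriv g x) = 0 := by
  rw [intervalIntegral.integral_deriv_eq_sub
      (fun x _ => hg.differentiable (by simp) x)
      ((hg.continuous_deriv (by simp)).intervalIntegrable 0 1)]
  have := hp 0
  simp only [zero_add] at this
  rw [this, sub_self]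

/-- Integration by parts on the torus. -/
lemma integral_parts (u g : ℝ → ℝ) (hu : ContDiff ℝ (⊤ : ℕ∞) u) (hgc : ContDiff ℝ (⊤ : ℕ∞) g)
    (hup : ∀ x, u (x + 1) = u x) (hgp : ∀ x, g (x + 1) = g x) :
    (∫ x in (0:ℝ)..1, deriv u x * g x) = -∫ x in (0:ℝ)..1, u x * deriv g x := by
  have h0 : (∫ x in (0:ℝ)..1, deriv (fun y => u y * g y) x) = 0 :=
    integral_deriv_periodic _ (hu.mul hgc) (fun x => by rw [hup, hgp])
  have h1 : ∀ x : ℝ, deriv (fun y => u y * g y) x = deriv u x * g x + u x * deriv g x := by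
    intro x
    exact (((hu.differentiable (by simp) x).hasDerivAt).mul
      ((hgc.differentiable (by simp) x).hasDerivAt)).deriv
  rw [intervalIntegral.integral_congr (g := fun x => deriv u x * g x + u x * deriv g x)
      (fun x _ => h1 x)] at h0
  rw [intervalIntegral.integral_add (f := fun x => deriv u x * g x) (g := fun x => u x * deriv g x)
      (((hu.continuous_deriv (by simp)).mul hgc.continuous).intervalIntegrable 0 1)
      ((hu.continuous.mul (hgc.continuous_deriv (by simp))).intervalIntegrable 0 1)] at h0
  linarith

/-- A continuous function with weighted mean zero (positive weight) has a zero in `[0,1]`. -/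
lemma exists_zero (g ρ : ℝ → ℝ) (hg : Continuous g) (hρ : Continuous ρ)
    (hρpos : ∀ x, 0 < ρ x) (hint : (∫ x in (0:ℝ)..1, ρ x * g x) = 0) :
    ∃ x₀ ∈ Set.Icc (0:ℝ) 1, g x₀ = 0 := by
  by_contra hcon
  push_neg at hcon
  have hsign : (∀ x ∈ Set.Icc (0:ℝ) 1, 0 < g x) ∨ (∀ x ∈ Set.Icc (0:ℝ) 1, g x < 0) := by
    rcases lt_or_gt_of_ne (hcon 0 (by norm_num)) with h0 | h0
    · right
      intro x hx
      by_contra hgx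
      push_neg at hgx
      have hgx' : 0 < g x := lt_of_le_of_ne hgx (Ne.symm (hcon x hx))
      obtain ⟨z, hz, hgz⟩ := intermediate_value_uIcc (a := 0) (b := x)
        (hg.continuousOn) (show (0:ℝ) ∈ Set.uIcc (g 0) (g x) from
          Set.mem_uIcc.2 (Or.inl ⟨h0.le, hgx'.le⟩))
      have hzI : z ∈ Set.Icc (0:ℝ) 1 := by
        have : Set.uIcc (0:ℝ) x ⊆ Set.Icc 0 1 := Set.uIcc_subset_Icc (by norm_num) hx
        exact this hz
      exact hcon z hzI hgz
    · left
      intro x hx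
      by_contra hgx
      push_neg at hgx
      have hgx' : g x < 0 := lt_of_le_of_ne hgx (hcon x hx)
      obtain ⟨z, hz, hgz⟩ := intermediate_value_uIcc (a := 0) (b := x)
        (hg.continuousOn) (show (0:ℝ) ∈ Set.uIcc (g 0) (g x) from
          Set.mem_uIcc.2 (Or.inr ⟨hgx'.le, h0.le⟩))
      have hzI : z ∈ Set.Icc (0:ℝ) 1 := by
        have : Set.uIcc (0:ℝ) x ⊆ Set.Icc 0 1 := Set.uIcc_subset_Icc (by norm_num) hx
        exact this hz
      exact hcon z hzI hgz
  rcases hsign with hpos | hneg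
  · have : 0 < ∫ x in (0:ℝ)..1, ρ x * g x := by
      apply intervalIntegral.integral_pos (by norm_num)
        ((hρ.mul hg).continuousOn)
      · intro x hx
        exact (mul_pos (hρpos x) (hpos x ⟨hx.1.le, hx.2⟩)).le
      · exact ⟨0, by norm_num, mul_pos (hρpos 0) (hpos 0 (by norm_num))⟩
    linarith [hint ▸ this]
  · have : 0 < ∫ x in (0:ℝ)..1, ρ x * (-g x) := by
      apply intervalIntegral.integral_pos (by norm_num)
        ((hρ.mul hg.neg).continuousOn)
      · intro x hx
        exact (mul_pos (hρpos x) (show 0 < -g x by linarith [hneg x ⟨hx.1.le, hx.2⟩])).le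
      · exact ⟨0, by norm_num, mul_pos (hρpos 0) (show 0 < -g 0 by linarith [hneg 0 (by norm_num : (0:ℝ) ∈ Set.Icc (0:ℝ) 1)])⟩
    have heq : (∫ x in (0:ℝ)..1, ρ x * (-g x)) = -∫ x in (0:ℝ)..1, ρ x * g x := by
      rw [← intervalIntegral.integral_neg]
      congr 1; funext x; ring
    rw [heq, hint] at this
    norm_num at this



/-- Poincaré: if a `C^∞` function vanishes somewhere in `[0,1]`,
then `∫ g² ≤ ∫ g'²` on `[0,1]`. -/
lemma poincare (g : ℝ → ℝ) (hg : ContDiff ℝ (⊤ : ℕ∞) g) (x₀ : ℝ)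
    (hx₀ : x₀ ∈ Set.Icc (0:ℝ) 1) (hz : g x₀ = 0) :
    (∫ x in (0:ℝ)..1, (g x) ^ 2) ≤ ∫ x in (0:ℝ)..1, (deriv g x) ^ 2 := by
  have hg' : Continuous (deriv g) := hg.continuous_deriv (by simp)
  set M : ℝ := ∫ x in (0:ℝ)..1, |deriv g x| with hM
  have habs : IntervalIntegrable (fun x => |deriv g x|) volume 0 1 :=
    (hg'.abs).intervalIntegrable 0 1
  -- pointwise bound |g x| ≤ M on [0,1]
  have hbd : ∀ x ∈ Set.Icc (0:ℝ) 1, |g x| ≤ M := by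
    intro x hx
    have hftc : g x - g x₀ = ∫ y in x₀..x, deriv g y := by
      rw [intervalIntegral.integral_deriv_eq_sub
        (fun y _ => hg.differentiable (by simp) y)
        ((hg').intervalIntegrable x₀ x)]
    have h1 : |g x| = |∫ y in x₀..x, deriv g y| := by
      rw [← hftc, hz, sub_zero]
    rw [h1]
    calc |∫ y in x₀..x, deriv g y| ≤ |(∫ y in x₀..x, |deriv g y|)| := by
          simpa [Real.norm_eq_abs] using
            intervalIntegral.norm_integral_le_abs_integral_norm
              (f := deriv g) (a := x₀) (b := x) (μ := volume)
      _ ≤ M := by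
          rcases le_total x₀ x with hle | hle
          · rw [abs_of_nonneg (intervalIntegral.integral_nonneg hle (fun y _ => abs_nonneg _))]
            exact intervalIntegral.integral_mono_interval hx₀.1 hle hx.2
              (Filter.Eventually.of_forall fun y => abs_nonneg _) habs
          · rw [intervalIntegral.integral_symm, abs_neg,
              abs_of_nonneg (intervalIntegral.integral_nonneg hle (fun y _ => abs_nonneg _))]
            exact intervalIntegral.integral_mono_interval hx.1 hle hx₀.2
              (Filter.Eventually.of_forall fun y => abs_nonneg _) habs
  -- ∫ g² ≤ M²
  have h2 : (∫ x in (0:ℝ)..1, (g x) ^ 2) ≤ M ^ 2 := by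
    have : (∫ x in (0:ℝ)..1, (g x) ^ 2) ≤ ∫ _x in (0:ℝ)..1, M ^ 2 := by
      apply intervalIntegral.integral_mono_on (by norm_num)
        ((hg.continuous.pow 2).intervalIntegrable 0 1) intervalIntegrable_const
      intro x hx
      calc (g x) ^ 2 = |g x| ^ 2 := (sq_abs _).symm
        _ ≤ M ^ 2 := by
            have := hbd x hx
            have h0 : (0:ℝ) ≤ |g x| := abs_nonneg _
            nlinarith
    simpa using this
  -- M² ≤ ∫ g'²  (Cauchy–Schwarz via ∫(|g'| - M)² ≥ 0 on a length-1 interval)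
  have h3 : M ^ 2 ≤ ∫ x in (0:ℝ)..1, (deriv g x) ^ 2 := by
    have hnn : (0:ℝ) ≤ ∫ x in (0:ℝ)..1, (|deriv g x| - M) ^ 2 :=
      intervalIntegral.integral_nonneg (by norm_num) (fun x _ => sq_nonneg _)
    have hexp : (∫ x in (0:ℝ)..1, (|deriv g x| - M) ^ 2)
        = (∫ x in (0:ℝ)..1, (deriv g x) ^ 2) - 2 * M * M + M ^ 2 * 1 := by
      have e1 : ∀ x : ℝ, (|deriv g x| - M) ^ 2
          = (deriv g x) ^ 2 - (2 * M) * |deriv g x| + M ^ 2 := by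
        intro x
        have : |deriv g x| ^ 2 = (deriv g x) ^ 2 := sq_abs _
        nlinarith [this]
      rw [intervalIntegral.integral_congr (g := fun x =>
          (deriv g x) ^ 2 - (2 * M) * |deriv g x| + M ^ 2) (fun x _ => e1 x)]
      rw [intervalIntegral.integral_add (f := fun x => deriv g x ^ 2 - 2 * M * |deriv g x|) (g := fun _ => M ^ 2) (((hg'.pow 2).intervalIntegrable 0 1).sub
            (habs.const_mul (2 * M))) intervalIntegrable_const,
          intervalIntegral.integral_sub (f := fun x => deriv g x ^ 2) (g := fun x => 2 * M * |deriv g x|) ((hg'.pow 2).intervalIntegrable 0 1)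
            (habs.const_mul (2 * M)),
          intervalIntegral.integral_const_mul]
      simp [← hM]
    nlinarith [hnn, hexp]
  linarith



lemma const_of_deriv_zero (I : ℝ → ℝ) (hI : ∀ t : ℝ, 0 ≤ t → HasDerivAt I 0 t)
    (hc : Continuous I) : ∀ t : ℝ, 0 ≤ t → I t = I 0 := by
  intro t ht
  rcases eq_or_lt_of_le ht with h | _
  · rw [← h]
  · exact constant_of_has_deriv_right_zero (hc.continuousOn)
      (fun y hy => (hI y hy.1).hasDerivWithinAt) t ⟨ht, le_refl t⟩

lemma gronwall_exp (G G' : ℝ → ℝ) (α : ℝ) (hα : 0 < α)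
    (hd : ∀ t : ℝ, HasDerivAt G (G' t) t) (hb : ∀ t : ℝ, 0 ≤ t → G' t ≤ -α * G t) :
    ∀ t : ℝ, 0 ≤ t → G t ≤ G 0 * Real.exp (-α * t) := by
  have hGc : Continuous G := by
    have : Differentiable ℝ G := fun t => (hd t).differentiableAt
    exact this.continuous
  set H : ℝ → ℝ := fun t => G t * Real.exp (α * t) with hH
  have hdH : ∀ t : ℝ, HasDerivAt H (G' t * Real.exp (α * t) + G t * (α * Real.exp (α * t))) t := by
    intro t
    have he : HasDerivAt (fun t : ℝ => Real.exp (α * t)) (α * Real.exp (α * t)) t := by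
      have := (Real.hasDerivAt_exp (α * t)).comp t ((hasDerivAt_id t).const_mul α)
      exact this.congr_deriv (by simp [mul_comm])
    exact (hd t).mul he
  have hanti : AntitoneOn H (Set.Ici 0) := by
    apply antitoneOn_of_deriv_nonpos (convex_Ici 0)
      (Continuous.continuousOn (by fun_prop))
    · intro x _
      exact ((hdH x).differentiableAt).differentiableWithinAt
    · intro x hx
      rw [interior_Ici] at hx
      rw [(hdH x).deriv]
      have hb' := hb x (le_of_lt hx)
      have hep : (0:ℝ) < Real.exp (α * x) := Real.exp_pos _
      nlinarith
  intro t ht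
  have hle := hanti (Set.self_mem_Ici) ht ht
  have hH0 : H 0 = G 0 := by simp [hH]
  rw [hH0] at hle
  have hep : 0 < Real.exp (α * t) := Real.exp_pos _
  have h2 : G t ≤ G 0 / Real.exp (α * t) := by
    rw [le_div_iff₀ hep]; exact hle
  calc G t ≤ G 0 / Real.exp (α * t) := h2
    _ = G 0 * Real.exp (-α * t) := by
        rw [neg_mul, Real.exp_neg, div_eq_mul_inv]



lemma deriv_periodic (g : ℝ → ℝ) (hp : ∀ x, g (x + 1) = g x) (x : ℝ) :
    deriv g (x + 1) = deriv g x := by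
  have h : (fun y => g (y + 1)) = g := funext hp
  rw [← deriv_comp_add_const g 1 x, h]


end H1D

open H1D

set_option maxHeartbeats 1000000 in
/-- **`H¹` exponential decay for the passively transported velocity component**
(estimate `tw-H1` of Proposition `prop-tw-L2`): there are `C, α > 0`, depending
only on `(μ, η̲, η̄, K)`, such that whenever `η̲ ≤ η ≤ η̄`, `|∂ₓ w| ≤ K`, the
pair `(η, w)` satisfies the continuity equation `∂ₜ η + ∂ₓ(η w) = 0`, `𝔴`
solves `η(∂ₜ 𝔴 + w ∂ₓ 𝔴) - μ ∂ₓ² 𝔴 = 0` on `[0,∞) × 𝕋`, and `∫_𝕋 η₀ = 1`,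
`∫_𝕋 η₀ 𝔴₀ = 0`, one has for all `t ≥ 0`:
`∫_𝕋 (𝔴² + (∂ₓ 𝔴)²)(t) ≤ C e^{-α t} ∫_𝕋 (𝔴₀² + (∂ₓ 𝔴₀)²)`.
Functions on `𝕋 = ℝ/ℤ` are modelled as `1`-periodic functions of `x`. -/
theorem transported_component_H1_decay (μ ηlow ηbar K : ℝ)
    (hμ : 0 < μ) (hηlow : 0 < ηlow) (hord : ηlow ≤ ηbar) (hK : 0 ≤ K) :
    ∃ C α : ℝ, 0 < C ∧ 0 < α ∧
      ∀ η w v : ℝ → ℝ → ℝ,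
        ContDiff ℝ (⊤ : ℕ∞) (Function.uncurry η) →
        ContDiff ℝ (⊤ : ℕ∞) (Function.uncurry w) →
        ContDiff ℝ (⊤ : ℕ∞) (Function.uncurry v) →
        (∀ t x : ℝ, η t (x + 1) = η t x) →
        (∀ t x : ℝ, w t (x + 1) = w t x) →
        (∀ t x : ℝ, v t (x + 1) = v t x) →
        (∀ t x : ℝ, 0 ≤ t → ηlow ≤ η t x ∧ η t x ≤ ηbar) →
        (∀ t x : ℝ, 0 ≤ t → |deriv (w t) x| ≤ K) →
        (∀ t x : ℝ, 0 ≤ t →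
          deriv (fun s => η s x) t + deriv (fun y => η t y * w t y) x = 0) →
        (∀ t x : ℝ, 0 ≤ t →
          η t x * (deriv (fun s => v s x) t + w t x * deriv (v t) x)
            - μ * deriv (deriv (v t)) x = 0) →
        (∫ x in (0:ℝ)..1, η 0 x) = 1 →
        (∫ x in (0:ℝ)..1, η 0 x * v 0 x) = 0 →
        ∀ t : ℝ, 0 ≤ t →
          (∫ x in (0:ℝ)..1, ((v t x) ^ 2 + (deriv (v t) x) ^ 2))
            ≤ C * Real.exp (-α * t)
                * ∫ x in (0:ℝ)..1, ((v 0 x) ^ 2 + (deriv (v 0) x) ^ 2) := by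
  have hK1 : (0:ℝ) < K + 1 := by linarith
  have hηbar : 0 < ηbar := lt_of_lt_of_le hηlow hord
  set ε : ℝ := μ / (K + 1) with hεdef
  have hε : 0 < ε := div_pos hμ hK1
  have hεK : ε * K ≤ μ := by
    rw [hεdef, div_mul_eq_mul_div, div_le_iff₀ hK1]
    nlinarith
  set α : ℝ := μ / (ηbar + ε) with hαdef
  have hα : 0 < α := div_pos hμ (by linarith)
  set Cm : ℝ := max (1/ηlow) (1/ε) with hCmdef
  set Cx : ℝ := max ηbar ε with hCxdef
  have hCm : 0 < Cm := lt_of_lt_of_le (by positivity) (le_max_left _ _)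
  have hCx : 0 < Cx := lt_of_lt_of_le hηbar (le_max_left _ _)
  refine ⟨Cm * Cx, α, by positivity, hα, ?_⟩
  intro η w v hηs hws hvs hηper hwper hvper hbd hwK hce hpde hm0 hmv0
  -- derived smoothness
  have hvx : ContDiff ℝ (⊤ : ℕ∞) (Function.uncurry fun t x => deriv (v t) x) := contDiff_pderiv_x hvs
  have hvt : ContDiff ℝ (⊤ : ℕ∞) (Function.uncurry fun t x => deriv (fun s => v s x) t) :=
    contDiff_pderiv_t hvs
  have hvxper : ∀ t x : ℝ, deriv (v t) (x + 1) = deriv (v t) x :=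
    fun t x => deriv_periodic (v t) (hvper t) x
  have hvtper : ∀ t x : ℝ, deriv (fun s => v s (x + 1)) t = deriv (fun s => v s x) t := by
    intro t x
    have : (fun s => v s (x + 1)) = fun s => v s x := funext fun s => hvper s x
    rw [this]
  -- energies
  set E0 : ℝ → ℝ := fun t => ∫ x in (0:ℝ)..1, η t x * (v t x) ^ 2 with hE0def
  set E1 : ℝ → ℝ := fun t => ∫ x in (0:ℝ)..1, (deriv (v t) x) ^ 2 with hE1def
  set G : ℝ → ℝ := fun t => E0 t + ε * E1 t with hGdef
  have hE1nn : ∀ t : ℝ, 0 ≤ E1 t := by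
    intro t
    exact intervalIntegral.integral_nonneg (by norm_num) (fun x _ => sq_nonneg _)
  have hE0nn : ∀ t : ℝ, 0 ≤ t → 0 ≤ E0 t := by
    intro t ht
    exact intervalIntegral.integral_nonneg (by norm_num)
      (fun x _ => mul_nonneg (by linarith [(hbd t x ht).1]) (sq_nonneg _))
  -- derivative of E0
  have hd0 : ∀ t : ℝ, HasDerivAt E0
      (∫ x in (0:ℝ)..1, deriv (fun s => η s x * (v s x) ^ 2) t) t := by
    intro t
    exact hasDerivAt_int (f := fun t x => η t x * (v t x) ^ 2) (hηs.mul (hvs.pow 2)) t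
  have hD0 : ∀ t : ℝ, 0 ≤ t →
      (∫ x in (0:ℝ)..1, deriv (fun s => η s x * (v s x) ^ 2) t) = -(2 * μ) * E1 t := by
    intro t ht
    have hptw : ∀ x : ℝ, deriv (fun s => η s x * (v s x) ^ 2) t
        = -(deriv (fun y => η t y * w t y * (v t y) ^ 2) x)
          + 2 * μ * (v t x * deriv (deriv (v t)) x) := by
      intro x
      have hη_t : HasDerivAt (fun s => η s x) (deriv (fun s => η s x) t) t :=
        ((slice_t hηs x).differentiable (by simp) t).hasDerivAt
      have hv_t : HasDerivAt (fun s => v s x) (deriv (fun s => v s x) t) t :=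
        ((slice_t hvs x).differentiable (by simp) t).hasDerivAt
      have h1 : deriv (fun s => η s x * (v s x) ^ 2) t
          = deriv (fun s => η s x) t * (v t x) ^ 2
            + η t x * (2 * v t x * deriv (fun s => v s x) t) := by
        have h := (hη_t.mul (hv_t.pow 2)).deriv
        exact h.trans (by simp only [Pi.pow_apply]; push_cast; ring)
      have hP : HasDerivAt (fun y => η t y * w t y) (deriv (fun y => η t y * w t y) x) x :=
        (((slice_x hηs t).mul (slice_x hws t)).differentiable (by simp) x).hasDerivAt
      have hv_x : HasDerivAt (v t) (deriv (v t) x) x :=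
        ((slice_x hvs t).differentiable (by simp) x).hasDerivAt
      have h2 : deriv (fun y => η t y * w t y * (v t y) ^ 2) x
          = deriv (fun y => η t y * w t y) x * (v t x) ^ 2
            + η t x * w t x * (2 * v t x * deriv (v t) x) := by
        have h := (hP.mul (hv_x.pow 2)).deriv
        exact h.trans (by simp only [Pi.pow_apply]; push_cast; ring)
      rw [h1, h2]
      linear_combination ((v t x) ^ 2) * (hce t x ht) + (2 * v t x) * (hpde t x ht)
    have hg : ContDiff ℝ (⊤ : ℕ∞) (fun y => η t y * w t y * (v t y) ^ 2) :=
      ((slice_x hηs t).mul (slice_x hws t)).mul ((slice_x hvs t).pow 2)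
    have hgper : ∀ x : ℝ, η t (x+1) * w t (x+1) * (v t (x+1)) ^ 2 = η t x * w t x * (v t x) ^ 2 := by
      intro x; rw [hηper t x, hwper t x, hvper t x]
    have hvxxc : Continuous (deriv (deriv (v t))) := (slice_x hvx t).continuous_deriv (by simp)
    rw [intervalIntegral.integral_congr (g := fun x =>
        -(deriv (fun y => η t y * w t y * (v t y) ^ 2) x)
          + 2 * μ * (v t x * deriv (deriv (v t)) x)) (fun x _ => hptw x)]
    rw [intervalIntegral.integral_add (f := fun x => -(deriv (fun y => η t y * w t y * (v t y) ^ 2) x))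
        (g := fun x => 2 * μ * (v t x * deriv (deriv (v t)) x))
        (((hg.continuous_deriv (by simp)).neg).intervalIntegrable 0 1)
        ((continuous_const.mul ((slice_x hvs t).continuous.mul hvxxc)).intervalIntegrable 0 1)]
    rw [intervalIntegral.integral_neg, integral_deriv_periodic _ hg hgper, neg_zero, zero_add]
    have hparts := integral_parts (v t) (deriv (v t)) (slice_x hvs t) (slice_x hvx t)
      (hvper t) (hvxper t)
    have hsq : (∫ x in (0:ℝ)..1, deriv (v t) x * deriv (v t) x) = E1 t := by
      rw [hE1def]
      exact intervalIntegral.integral_congr (fun x _ => by ring)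
    have hvxx_int : (∫ x in (0:ℝ)..1, v t x * deriv (deriv (v t)) x) = -(E1 t) := by
      rw [← hsq]; linarith [hparts]
    rw [intervalIntegral.integral_const_mul, hvxx_int]
    ring
  -- derivative of E1
  have hd1 : ∀ t : ℝ, HasDerivAt E1
      (∫ x in (0:ℝ)..1, deriv (fun s => (deriv (v s) x) ^ 2) t) t := by
    intro t
    exact hasDerivAt_int (f := fun t x => (deriv (v t) x) ^ 2) (hvx.pow 2) t
  have hD1 : ∀ t : ℝ, 0 ≤ t →
      (∫ x in (0:ℝ)..1, deriv (fun s => (deriv (v s) x) ^ 2) t) ≤ K * E1 t := by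
    intro t ht
    have hptw : ∀ x : ℝ, deriv (fun s => (deriv (v s) x) ^ 2) t
        = 2 * (deriv (fun y => deriv (fun s => v s y) t) x * deriv (v t) x) := by
      intro x
      have hdv : HasDerivAt (fun s => deriv (v s) x) (deriv (fun s => deriv (v s) x) t) t :=
        ((slice_t hvx x).differentiable (by simp) t).hasDerivAt
      have h := (hdv.pow 2).deriv
      rw [show (fun s => deriv (v s) x ^ 2) = (fun s => deriv (v s) x) ^ 2 from rfl, h, deriv_swap hvs t x]; push_cast; ring
    have hparts := integral_parts (fun y => deriv (fun s => v s y) t) (deriv (v t))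
      (slice_x hvt t) (slice_x hvx t) (hvtper t) (hvxper t)
    have hstep : (∫ x in (0:ℝ)..1, deriv (fun s => (deriv (v s) x) ^ 2) t)
        = (-2) * ∫ x in (0:ℝ)..1, deriv (fun s => v s x) t * deriv (deriv (v t)) x := by
      rw [intervalIntegral.integral_congr (g := fun x =>
          2 * (deriv (fun y => deriv (fun s => v s y) t) x * deriv (v t) x))
          (fun x _ => hptw x)]
      rw [intervalIntegral.integral_const_mul, hparts]
      ring
    have hvxxc : Continuous (deriv (deriv (v t))) := (slice_x hvx t).continuous_deriv (by simp)
    have hvxc : Continuous (deriv (v t)) := (slice_x hvx t).continuous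
    have hηpos : ∀ x : ℝ, 0 < η t x := fun x => lt_of_lt_of_le hηlow (hbd t x ht).1
    have hsub : ∀ x : ℝ, (-2) * (deriv (fun s => v s x) t * deriv (deriv (v t)) x)
        = deriv (fun y => (deriv (v t) y) ^ 2) x * w t x
          - 2 * μ * ((deriv (deriv (v t)) x) ^ 2 / η t x) := by
      intro x
      have hη0 : η t x ≠ 0 := ne_of_gt (hηpos x)
      have hvt_eq : deriv (fun s => v s x) t
          = μ * deriv (deriv (v t)) x / η t x - w t x * deriv (v t) x := by
        have h := hpde t x ht
        field_simp
        nlinarith [h]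
      have hder2 : deriv (fun y => (deriv (v t) y) ^ 2) x
          = 2 * deriv (v t) x * deriv (deriv (v t)) x := by
        have hx : HasDerivAt (deriv (v t)) (deriv (deriv (v t)) x) x :=
          ((slice_x hvx t).differentiable (by simp) x).hasDerivAt
        have h := (hx.pow 2).deriv
        rw [show (fun y => deriv (v t) y ^ 2) = deriv (v t) ^ 2 from rfl, h]; push_cast; ring
      rw [hvt_eq, hder2]
      field_simp
      ring
    have hsqs : ContDiff ℝ (⊤ : ℕ∞) (fun y => (deriv (v t) y) ^ 2) := (slice_x hvx t).pow 2
    have hsqper : ∀ x : ℝ, (deriv (v t) (x+1)) ^ 2 = (deriv (v t) x) ^ 2 := by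
      intro x; rw [hvxper t x]
    have hstep2 : ((-2 : ℝ)) * (∫ x in (0:ℝ)..1, deriv (fun s => v s x) t * deriv (deriv (v t)) x)
        = (∫ x in (0:ℝ)..1, deriv (fun y => (deriv (v t) y) ^ 2) x * w t x)
          - ∫ x in (0:ℝ)..1, 2 * μ * ((deriv (deriv (v t)) x) ^ 2 / η t x) := by
      rw [← intervalIntegral.integral_const_mul]
      rw [intervalIntegral.integral_congr (g := fun x =>
          deriv (fun y => (deriv (v t) y) ^ 2) x * w t x
            - 2 * μ * ((deriv (deriv (v t)) x) ^ 2 / η t x)) (fun x _ => hsub x)]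
      exact intervalIntegral.integral_sub
        (((hsqs.continuous_deriv (by simp)).mul (slice_x hws t).continuous).intervalIntegrable 0 1)
        ((continuous_const.mul ((hvxxc.pow 2).div (slice_x hηs t).continuous
          (fun x => ne_of_gt (hηpos x)))).intervalIntegrable 0 1)
    have hparts2 := integral_parts (fun y => (deriv (v t) y) ^ 2) (w t)
      hsqs (slice_x hws t) hsqper (hwper t)
    have hbound1 : (∫ x in (0:ℝ)..1, deriv (fun y => (deriv (v t) y) ^ 2) x * w t x)
        ≤ K * E1 t := by
      rw [hparts2, ← intervalIntegral.integral_neg]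
      have : (∫ x in (0:ℝ)..1, -((deriv (v t) x) ^ 2 * deriv (w t) x))
          ≤ ∫ x in (0:ℝ)..1, K * (deriv (v t) x) ^ 2 := by
        apply intervalIntegral.integral_mono_on (by norm_num)
          (((hvxc.pow 2).mul ((slice_x hws t).continuous_deriv (by simp))).neg.intervalIntegrable 0 1)
          ((continuous_const.mul (hvxc.pow 2)).intervalIntegrable 0 1)
        intro x _
        have h1 : |deriv (w t) x| ≤ K := hwK t x ht
        have h2 : (0:ℝ) ≤ (deriv (v t) x) ^ 2 := sq_nonneg _
        simp only [Pi.mul_apply, Pi.neg_apply, Pi.pow_apply]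
        nlinarith [neg_abs_le (deriv (w t) x)]
      calc (∫ x in (0:ℝ)..1, -((deriv (v t) x) ^ 2 * deriv (w t) x))
          ≤ ∫ x in (0:ℝ)..1, K * (deriv (v t) x) ^ 2 := this
        _ = K * E1 t := by rw [hE1def, intervalIntegral.integral_const_mul]
    have hbound2 : (0:ℝ) ≤ ∫ x in (0:ℝ)..1, 2 * μ * ((deriv (deriv (v t)) x) ^ 2 / η t x) := by
      apply intervalIntegral.integral_nonneg (by norm_num)
      intro x _
      have := hηpos x
      positivity
    rw [hstep, hstep2]
    linarith
  -- conservation of momentum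
  have hmom : ∀ t : ℝ, 0 ≤ t → (∫ x in (0:ℝ)..1, η t x * v t x) = 0 := by
    have hdJ : ∀ t : ℝ, HasDerivAt (fun s => ∫ x in (0:ℝ)..1, η s x * v s x)
        (∫ x in (0:ℝ)..1, deriv (fun s => η s x * v s x) t) t :=
      fun t => hasDerivAt_int (f := fun t x => η t x * v t x) (hηs.mul hvs) t
    have hJ0 : ∀ t : ℝ, 0 ≤ t → (∫ x in (0:ℝ)..1, deriv (fun s => η s x * v s x) t) = 0 := by
      intro t ht
      have hptw : ∀ x : ℝ, deriv (fun s => η s x * v s x) t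
          = -(deriv (fun y => η t y * w t y * v t y) x) + μ * deriv (deriv (v t)) x := by
        intro x
        have hη_t : HasDerivAt (fun s => η s x) (deriv (fun s => η s x) t) t :=
          ((slice_t hηs x).differentiable (by simp) t).hasDerivAt
        have hv_t : HasDerivAt (fun s => v s x) (deriv (fun s => v s x) t) t :=
          ((slice_t hvs x).differentiable (by simp) t).hasDerivAt
        have h1 : deriv (fun s => η s x * v s x) t
            = deriv (fun s => η s x) t * v t x + η t x * deriv (fun s => v s x) t :=
          (hη_t.mul hv_t).deriv
        have hP : HasDerivAt (fun y => η t y * w t y) (deriv (fun y => η t y * w t y) x) x :=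
          (((slice_x hηs t).mul (slice_x hws t)).differentiable (by simp) x).hasDerivAt
        have hv_x : HasDerivAt (v t) (deriv (v t) x) x :=
          ((slice_x hvs t).differentiable (by simp) x).hasDerivAt
        have h2 : deriv (fun y => η t y * w t y * v t y) x
            = deriv (fun y => η t y * w t y) x * v t x + η t x * w t x * deriv (v t) x :=
          (hP.mul hv_x).deriv
        rw [h1, h2]
        linear_combination (v t x) * (hce t x ht) + (hpde t x ht)
      have hg : ContDiff ℝ (⊤ : ℕ∞) (fun y => η t y * w t y * v t y) :=
        ((slice_x hηs t).mul (slice_x hws t)).mul (slice_x hvs t)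
      have hgper : ∀ x : ℝ, η t (x+1) * w t (x+1) * v t (x+1) = η t x * w t x * v t x := by
        intro x; rw [hηper t x, hwper t x, hvper t x]
      have hvxxc : Continuous (deriv (deriv (v t))) := (slice_x hvx t).continuous_deriv (by simp)
      rw [intervalIntegral.integral_congr (g := fun x =>
          -(deriv (fun y => η t y * w t y * v t y) x) + μ * deriv (deriv (v t)) x)
          (fun x _ => hptw x)]
      rw [intervalIntegral.integral_add (f := fun x => -(deriv (fun y => η t y * w t y * v t y) x))
          (g := fun x => μ * deriv (deriv (v t)) x)
          (((hg.continuous_deriv (by simp)).neg).intervalIntegrable 0 1)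
          ((continuous_const.mul hvxxc).intervalIntegrable 0 1)]
      rw [intervalIntegral.integral_neg, integral_deriv_periodic _ hg hgper,
        intervalIntegral.integral_const_mul,
        integral_deriv_periodic (deriv (v t)) (slice_x hvx t) (hvxper t)]
      ring
    intro t ht
    have hJd0 : ∀ s : ℝ, 0 ≤ s → HasDerivAt (fun s => ∫ x in (0:ℝ)..1, η s x * v s x) 0 s := by
      intro s hs
      have h := hdJ s
      rw [hJ0 s hs] at h
      exact h
    have hJdiff : Differentiable ℝ (fun s => ∫ x in (0:ℝ)..1, η s x * v s x) :=
      fun s => (hdJ s).differentiableAt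
    have hJc : Continuous (fun s => ∫ x in (0:ℝ)..1, η s x * v s x) := hJdiff.continuous
    have := const_of_deriv_zero _ hJd0 hJc t ht
    rw [this]
    exact hmv0
  -- Poincaré at each time
  have hpoin : ∀ t : ℝ, 0 ≤ t → (∫ x in (0:ℝ)..1, (v t x) ^ 2) ≤ E1 t := by
    intro t ht
    obtain ⟨x₀, hx₀, hz⟩ := exists_zero (v t) (η t) (slice_x hvs t).continuous
      (slice_x hηs t).continuous (fun x => lt_of_lt_of_le hηlow (hbd t x ht).1) (hmom t ht)
    exact poincare (v t) (slice_x hvs t) x₀ hx₀ hz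
  have hE0le : ∀ t : ℝ, 0 ≤ t → E0 t ≤ ηbar * E1 t := by
    intro t ht
    have h1 : E0 t ≤ ∫ x in (0:ℝ)..1, ηbar * (v t x) ^ 2 := by
      apply intervalIntegral.integral_mono_on (by norm_num)
        (((slice_x hηs t).continuous.mul ((slice_x hvs t).continuous.pow 2)).intervalIntegrable 0 1)
        ((continuous_const.mul ((slice_x hvs t).continuous.pow 2)).intervalIntegrable 0 1)
      intro x _
      exact mul_le_mul_of_nonneg_right (hbd t x ht).2 (sq_nonneg _)
    have h2 : (∫ x in (0:ℝ)..1, ηbar * (v t x) ^ 2) = ηbar * ∫ x in (0:ℝ)..1, (v t x) ^ 2 :=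
      intervalIntegral.integral_const_mul _ _
    have h3 := hpoin t ht
    calc E0 t ≤ ηbar * ∫ x in (0:ℝ)..1, (v t x) ^ 2 := by rw [← h2]; exact h1
      _ ≤ ηbar * E1 t := by nlinarith
  -- Gronwall setup
  have hGd : ∀ t : ℝ, HasDerivAt G
      ((∫ x in (0:ℝ)..1, deriv (fun s => η s x * (v s x) ^ 2) t)
        + ε * ∫ x in (0:ℝ)..1, deriv (fun s => (deriv (v s) x) ^ 2) t) t := by
    intro t
    exact (hd0 t).add ((hd1 t).const_mul ε)
  have hGb : ∀ t : ℝ, 0 ≤ t →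
      ((∫ x in (0:ℝ)..1, deriv (fun s => η s x * (v s x) ^ 2) t)
        + ε * ∫ x in (0:ℝ)..1, deriv (fun s => (deriv (v s) x) ^ 2) t) ≤ -α * G t := by
    intro t ht
    have h1 := hD0 t ht
    have h2 := hD1 t ht
    have h3 := hE0le t ht
    have h4 := hE1nn t
    have hGle : G t ≤ (ηbar + ε) * E1 t := by
      rw [hGdef]; dsimp only; nlinarith
    have h5 : (∫ x in (0:ℝ)..1, deriv (fun s => η s x * (v s x) ^ 2) t)
        + ε * ∫ x in (0:ℝ)..1, deriv (fun s => (deriv (v s) x) ^ 2) t ≤ -μ * E1 t := by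
      rw [h1]
      nlinarith [mul_le_mul_of_nonneg_left h2 hε.le, mul_le_mul_of_nonneg_right hεK h4]
    have h6 : -μ * E1 t ≤ -α * G t := by
      rw [hαdef]
      rw [neg_mul, neg_mul, neg_le_neg_iff]
      rw [div_mul_eq_mul_div, div_le_iff₀ (by linarith : (0:ℝ) < ηbar + ε)]
      nlinarith [mul_le_mul_of_nonneg_left hGle hμ.le]
    linarith
  have hGron := gronwall_exp G _ α hα hGd hGb
  -- final assembly
  intro t ht
  have hsplit : ∀ s : ℝ, (∫ x in (0:ℝ)..1, ((v s x) ^ 2 + (deriv (v s) x) ^ 2))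
      = (∫ x in (0:ℝ)..1, (v s x) ^ 2) + E1 s := by
    intro s
    rw [hE1def]
    exact intervalIntegral.integral_add
      (((slice_x hvs s).continuous.pow 2).intervalIntegrable 0 1)
      ((((slice_x hvx s).continuous).pow 2).intervalIntegrable 0 1)
  have hv2nn : ∀ s : ℝ, 0 ≤ ∫ x in (0:ℝ)..1, (v s x) ^ 2 :=
    fun s => intervalIntegral.integral_nonneg (by norm_num) (fun x _ => sq_nonneg _)
  have hv2le : (∫ x in (0:ℝ)..1, (v t x) ^ 2) ≤ (1/ηlow) * E0 t := by
    have h1 : ηlow * (∫ x in (0:ℝ)..1, (v t x) ^ 2) ≤ E0 t := by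
      rw [hE0def, ← intervalIntegral.integral_const_mul]
      apply intervalIntegral.integral_mono_on (by norm_num)
        ((continuous_const.mul ((slice_x hvs t).continuous.pow 2)).intervalIntegrable 0 1)
        (((slice_x hηs t).continuous.mul ((slice_x hvs t).continuous.pow 2)).intervalIntegrable 0 1)
      intro x _
      exact mul_le_mul_of_nonneg_right (hbd t x ht).1 (sq_nonneg _)
    calc (∫ x in (0:ℝ)..1, (v t x) ^ 2) ≤ E0 t / ηlow := by
          rw [le_div_iff₀ hηlow]; nlinarith
      _ = (1/ηlow) * E0 t := by ring
  have hE0le0 : E0 0 ≤ ηbar * ∫ x in (0:ℝ)..1, (v 0 x) ^ 2 := by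
    rw [hE0def, ← intervalIntegral.integral_const_mul]
    apply intervalIntegral.integral_mono_on (by norm_num)
      (((slice_x hηs 0).continuous.mul ((slice_x hvs 0).continuous.pow 2)).intervalIntegrable 0 1)
      ((continuous_const.mul ((slice_x hvs 0).continuous.pow 2)).intervalIntegrable 0 1)
    intro x _
    exact mul_le_mul_of_nonneg_right (hbd 0 x le_rfl).2 (sq_nonneg _)
  have hG0le : G 0 ≤ Cx * ((∫ x in (0:ℝ)..1, (v 0 x) ^ 2) + E1 0) := by
    have hb1 : ηbar ≤ Cx := le_max_left _ _
    have hb2 : ε ≤ Cx := le_max_right _ _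
    have h1 := hE1nn 0
    have h2 := hv2nn 0
    rw [hGdef]
    dsimp only
    nlinarith
  have hLHS : (∫ x in (0:ℝ)..1, (v t x) ^ 2) + E1 t ≤ Cm * G t := by
    have hm1 : 1/ηlow ≤ Cm := le_max_left _ _
    have hm2 : 1/ε ≤ Cm := le_max_right _ _
    have hεinv : (1/ε) * ε = 1 := by field_simp
    have h1 := hE0nn t ht
    have h2 := hE1nn t
    have h3 : E1 t ≤ Cm * (ε * E1 t) := by
      have h4 := mul_le_mul_of_nonneg_right hm2 (mul_nonneg hε.le h2)
      calc E1 t = (1/ε) * (ε * E1 t) := by field_simp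
        _ ≤ Cm * (ε * E1 t) := h4
    rw [hGdef]
    dsimp only
    nlinarith [hv2le, mul_le_mul_of_nonneg_right hm1 h1, h3]
  have hmain := hGron t ht
  have hexp : (0:ℝ) < Real.exp (-α * t) := Real.exp_pos _
  rw [hsplit t, hsplit 0]
  have hR : 0 ≤ (∫ x in (0:ℝ)..1, (v 0 x) ^ 2) + E1 0 := by
    have := hv2nn 0; have := hE1nn 0; linarith
  calc (∫ x in (0:ℝ)..1, (v t x) ^ 2) + E1 t
      ≤ Cm * G t := hLHS
    _ ≤ Cm * (G 0 * Real.exp (-α * t)) := mul_le_mul_of_nonneg_left hmain hCm.le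
    _ ≤ Cm * (Cx * ((∫ x in (0:ℝ)..1, (v 0 x) ^ 2) + E1 0) * Real.exp (-α * t)) :=
        mul_le_mul_of_nonneg_left (mul_le_mul_of_nonneg_right hG0le hexp.le) hCm.le
    _ = Cm * Cx * Real.exp (-α * t) * ((∫ x in (0:ℝ)..1, (v 0 x) ^ 2) + E1 0) := by ring
end
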